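/- arXiv:1412.4698 — 9 statements merged into one kernel-verified Lean document; each statement's English description precedes it below -/
import Mathlib

section
/- Assume the Agent's recursion H_T = Θ(P_{0:T}), H_t = esssup_{A ∈ L^0(ℱ_t)^N} { U^a_t(H_{t+1} + β_t A·ΔP̃_{t+1}) − c_t(A) } and the Principal's recursion h_T = 0, h_t = esssup over triples (β,A,Γ) with (A,Γ) ∈ C_t(β) of { U^a_t(Γ) − c_t(A) + U^p_t(h_{t+1} + A·ΔP̃_{t+1} − Γ) } admit solutions with all essential suprema attained at every t ∈ {0,…,T−1}. Then the Principal's optimal time-0 utility over incentive-compatible and individually rational contracts equals W_0 − R + h_0. Moreover, denoting by (β_t, A_t, Γ_{t+1})_{t<T} maximizers attaining h in the Principal's recursion and setting Θ := Σ_{t<T} [ Γ_{t+1} − U^a_t(Γ_{t+1}) + c_t(A_t) ], the contract S(Ā) = R + Θ + Σ_{t<T} β_t ( ΔW^Ā_{t+1} − A_t·ΔP̃_{t+1} ) is optimal for the Principal among incentive-compatible and individually rational contracts, the Agent's optimal effort under this contract is A = (A_t), and his optimal time-0 utility equals R. -/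
open MeasureTheory Filter
open scoped ENNReal

variable {Ω : Type*}

section Defs
variable {m0 : MeasurableSpace Ω} {N : ℕ}

/-- The conditional expectation `E[|X| | F] ∈ [0,∞]`, via monotone truncation. -/
noncomputable def condExpAbs (μ : Measure Ω) (F : MeasurableSpace Ω) (X : Ω → ℝ) :
    Ω → ℝ≥0∞ :=
  fun ω => ⨆ n : ℕ, ENNReal.ofReal ((μ[fun ω' => min |X ω'| (n : ℝ) | F]) ω)

/-- `X ∈ L^1_F`: the conditional expectation `E[|X| | F]` is a.s. finite. -/
def MemCondL1 (μ : Measure Ω) (F : MeasurableSpace Ω) (X : Ω → ℝ) : Prop :=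
  ∀ᵐ ω ∂μ, condExpAbs μ F X ω < ⊤

end Defs

/-- The relative price increment `ΔP̃_{t+1} = diag(P_t)⁻¹(P_{t+1} − P_t)`. -/
noncomputable def relIncr {N : ℕ} (P : ℕ → Ω → Fin N → ℝ) (t : ℕ) (i : Fin N) (ω : Ω) : ℝ :=
  (P (t + 1) ω i - P t ω i) / P t ω i

/-- The wealth `W^A_t = W₀ + Σ_{s<t} A_s·ΔP̃_{s+1}` generated by the effort process `A`. -/
noncomputable def wealth {N : ℕ} (P : ℕ → Ω → Fin N → ℝ) (W0 : ℝ)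
    (A : ℕ → Ω → Fin N → ℝ) (t : ℕ) (ω : Ω) : ℝ :=
  W0 + ∑ s ∈ Finset.range t, ∑ i, A s ω i * relIncr P s i ω

/-- The payment of the contract `S(Ā) = R + Θ + Σ_{t<T} β_t (ΔW^Ā_{t+1} − A_t·ΔP̃_{t+1})`
to the Agent for the effort process `Ā`. -/
noncomputable def contractPay {N : ℕ} (P : ℕ → Ω → Fin N → ℝ) (T : ℕ) (R : ℝ)
    (Θ : Ω → ℝ) (β : ℕ → Ω → ℝ) (A : ℕ → Ω → Fin N → ℝ)
    (Abar : ℕ → Ω → Fin N → ℝ) (ω : Ω) : ℝ :=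
  R + Θ ω + ∑ t ∈ Finset.range T, β t ω * ∑ i, (Abar t ω i - A t ω i) * relIncr P t i ω

/-- The usual conditions on a family of utility functionals
`U_t : L⁰(ℱ_T) → L⁰(ℱ_t) ∪ {−∞}`: normalized, proper, monotone, `ℱ_t`-conditionally
concave, `ℱ_t`-translation invariant, and time consistent. -/
structure UsualFamily {m0 : MeasurableSpace Ω} (μ : Measure Ω)
    (ℱ : ℕ → MeasurableSpace Ω) (T : ℕ) (U : ℕ → (Ω → ℝ) → Ω → EReal) : Prop where
  meas : ∀ t ≤ T, ∀ X : Ω → ℝ, Measurable[ℱ T] X → Measurable[ℱ t] (U t X)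
  normalized : ∀ t ≤ T, ∀ᵐ ω ∂μ, U t (fun _ => 0) ω = 0
  properTop : ∀ t ≤ T, ∀ X : Ω → ℝ, Measurable[ℱ T] X → ∀ᵐ ω ∂μ, U t X ω ≠ ⊤
  properBot : ∀ t ≤ T, ∃ X' : Ω → ℝ, Measurable[ℱ T] X' ∧ ∀ᵐ ω ∂μ, U t X' ω ≠ ⊥
  mono : ∀ t ≤ T, ∀ X Y : Ω → ℝ, Measurable[ℱ T] X → Measurable[ℱ T] Y →
    (∀ᵐ ω ∂μ, Y ω ≤ X ω) → ∀ᵐ ω ∂μ, U t Y ω ≤ U t X ω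
  concave : ∀ t ≤ T, ∀ X Y : Ω → ℝ, Measurable[ℱ T] X → Measurable[ℱ T] Y →
    ∀ lam : Ω → ℝ, Measurable[ℱ t] lam → (∀ᵐ ω ∂μ, lam ω ∈ Set.Icc (0 : ℝ) 1) →
    ∀ᵐ ω ∂μ, ((lam ω : ℝ) : EReal) * U t X ω + (((1 - lam ω) : ℝ) : EReal) * U t Y ω ≤
      U t (fun ω' => lam ω' * X ω' + (1 - lam ω') * Y ω') ω
  transInv : ∀ t ≤ T, ∀ X Y : Ω → ℝ, Measurable[ℱ T] X → Measurable[ℱ t] Y →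
    ∀ᵐ ω ∂μ, U t (fun ω' => X ω' + Y ω') ω = U t X ω + ((Y ω : ℝ) : EReal)
  timeConsistent : ∀ t, t + 1 ≤ T → ∀ X Y : Ω → ℝ,
    Measurable[ℱ T] X → Measurable[ℱ T] Y →
    (∀ᵐ ω ∂μ, U (t + 1) Y ω ≤ U (t + 1) X ω) → ∀ᵐ ω ∂μ, U t Y ω ≤ U t X ω

/-- A solution of the Agent's recursion
`H_T = Θ'`, `H_t = esssup_{a ∈ L⁰(ℱ_t)^N} { Uᵃ_t(H_{t+1} + β'_t a·ΔP̃_{t+1}) − c_t(a) }`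
for the contract `(Θ', β')`, with all essential suprema attained at `Ahat`; in particular
the contract `(Θ', β')` is incentive compatible, with recommended effort process `Ahat`. -/
structure AgentSolution {m0 : MeasurableSpace Ω} {N : ℕ} (μ : Measure Ω)
    (ℱ : ℕ → MeasurableSpace Ω) (T : ℕ) (P : ℕ → Ω → Fin N → ℝ)
    (Ua : ℕ → (Ω → ℝ) → Ω → EReal) (c : ℕ → (Fin N → ℝ) → ℝ)
    (Θ' : Ω → ℝ) (β' : ℕ → Ω → ℝ) (H : ℕ → Ω → ℝ)
    (Ahat : ℕ → Ω → Fin N → ℝ) : Prop where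
  measH : ∀ t ≤ T, Measurable[ℱ t] (H t)
  measA : ∀ t < T, Measurable[ℱ t] (Ahat t)
  terminal : H T =ᵐ[μ] Θ'
  upperBound : ∀ t < T, ∀ a : Ω → Fin N → ℝ, Measurable[ℱ t] a →
    ∀ᵐ ω ∂μ,
      Ua t (fun ω' => H (t + 1) ω' + β' t ω' * ∑ i, a ω' i * relIncr P t i ω') ω +
          ((-(c t (a ω)) : ℝ) : EReal) ≤ ((H t ω : ℝ) : EReal)
  attained : ∀ t < T, ∀ᵐ ω ∂μ,
    Ua t (fun ω' => H (t + 1) ω' + β' t ω' * ∑ i, Ahat t ω' i * relIncr P t i ω') ω +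
        ((-(c t (Ahat t ω)) : ℝ) : EReal) = ((H t ω : ℝ) : EReal)

/-- The time-`t` incentive-compatibility set `C_t(β)`. -/
def MemIC {m0 : MeasurableSpace Ω} {N : ℕ} (μ : Measure Ω)
    (ℱ : ℕ → MeasurableSpace Ω) (P : ℕ → Ω → Fin N → ℝ)
    (Ua : ℕ → (Ω → ℝ) → Ω → EReal) (c : ℕ → (Fin N → ℝ) → ℝ)
    (t : ℕ) (β : Ω → ℝ) (a : Ω → Fin N → ℝ) (g : Ω → ℝ) : Prop :=
  Measurable[ℱ t] a ∧ Measurable[ℱ (t + 1)] g ∧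
    ∀ abar : Ω → Fin N → ℝ, Measurable[ℱ t] abar →
      ∀ᵐ ω ∂μ,
        Ua t (fun ω' => g ω' + β ω' * ∑ i, (abar ω' i - a ω' i) * relIncr P t i ω') ω +
            ((-(c t (abar ω)) : ℝ) : EReal) ≤
          Ua t g ω + ((-(c t (a ω)) : ℝ) : EReal)

/-- The objective of the Principal's one-step problem at time `t`:
`Uᵃ_t(Γ) − c_t(A) + Uᵖ_t(h_{t+1} + A·ΔP̃_{t+1} − Γ)`. -/
noncomputable def principalVal {N : ℕ} (P : ℕ → Ω → Fin N → ℝ)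
    (Ua Up : ℕ → (Ω → ℝ) → Ω → EReal) (c : ℕ → (Fin N → ℝ) → ℝ) (h : ℕ → Ω → ℝ)
    (t : ℕ) (a : Ω → Fin N → ℝ) (g : Ω → ℝ) (ω : Ω) : EReal :=
  Ua t g ω + ((-(c t (a ω)) : ℝ) : EReal) +
    Up t (fun ω' => h (t + 1) ω' + (∑ i, a ω' i * relIncr P t i ω') - g ω') ω

/-!
Under the proposed contract the Agent's value is
`H_t = R + Σ_{s<t} (Γ_{s+1} − Uᵃ_s(Γ_{s+1}) + c_s(A_s) − β_s A_s·ΔP̃_{s+1})`. Paying the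
surprise `Γ_{t+1} − Uᵃ_t(Γ_{t+1})` turns the Agent's one-step problem at `t` into the one
defining `C_t(β_t)`, shifted by an `ℱ_t`-measurable amount; hence `A` is optimal for him and
`H_0 = R`. Conversely, for any incentive-compatible contract with Agent value `H''` and effort
`Â`, the pair `(Â_t, H''_{t+1} + β''_t Â_t·ΔP̃_{t+1})` lies in `C_t(β''_t)`, so the Principal's
recursion gives `Uᵖ_t(h_{t+1} − H''_{t+1} + (1 − β''_t) Â_t·ΔP̃_{t+1}) ≤ h_t − H''_t`.
Translation invariance and time consistency chain such one-step relations into time-0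
statements, and individual rationality `H''_0 ≥ R` bounds the Principal's utility by
`W₀ − R + h₀`, with equality for the proposed contract.
-/

open Finset

theorem EReal.coe_toReal_of_add_eq_coe {x y : EReal} {b : ℝ} (h : x + y = b) :
    (x.toReal : EReal) = x := by
  -- `⊥ + ⊤ = ⊥` in `EReal`, so neither summand of a finite sum is infinite.
  have hne : x ≠ ⊥ ∧ y ≠ ⊥ := EReal.add_ne_bot_iff.mp (h ▸ EReal.coe_ne_bot b)
  refine EReal.coe_toReal (fun hx => ?_) hne.1
  rw [hx, EReal.top_add_of_ne_bot hne.2] at h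
  exact EReal.coe_ne_top b h.symm

theorem EReal.le_coe_sub_of_coe_add_le {a b : ℝ} {y : EReal} (h : (a : EReal) + y ≤ b) :
    y ≤ ((b - a : ℝ) : EReal) := by
  rw [EReal.coe_sub, EReal.le_sub_iff_add_le (Or.inl (EReal.coe_ne_bot a))
    (Or.inl (EReal.coe_ne_top a)), add_comm]
  exact h

section Measurability

variable {ℱ : ℕ → MeasurableSpace Ω} {T N : ℕ} {P : ℕ → Ω → Fin N → ℝ}

theorem measurable_relIncr (hℱ : Monotone ℱ) {t : ℕ} (hPt : Measurable[ℱ t] (P t))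
    (hPt' : Measurable[ℱ (t + 1)] (P (t + 1))) (i : Fin N) :
    Measurable[ℱ (t + 1)] (relIncr P t i) :=
  (((measurable_pi_apply i).comp hPt').sub
    (((measurable_pi_apply i).comp hPt).mono (hℱ t.le_succ) le_rfl)).div
    (((measurable_pi_apply i).comp hPt).mono (hℱ t.le_succ) le_rfl)

theorem measurable_dot_relIncr (hℱ : Monotone ℱ) {t : ℕ}
    (hrel : ∀ i, Measurable[ℱ (t + 1)] (relIncr P t i)) {a : Ω → Fin N → ℝ}
    (ha : Measurable[ℱ t] a) :
    Measurable[ℱ (t + 1)] (fun ω => ∑ i, a ω i * relIncr P t i ω) :=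
  Finset.measurable_sum _ fun i _ =>
    (((measurable_pi_apply i).comp ha).mono (hℱ t.le_succ) le_rfl).mul (hrel i)

theorem measurable_mul_dot_relIncr (hℱ : Monotone ℱ) {t : ℕ}
    (hrel : ∀ i, Measurable[ℱ (t + 1)] (relIncr P t i)) {b : Ω → ℝ} {a : Ω → Fin N → ℝ}
    (hb : Measurable[ℱ t] b) (ha : Measurable[ℱ t] a) :
    Measurable[ℱ (t + 1)] (fun ω => b ω * ∑ i, a ω i * relIncr P t i ω) :=
  (hb.mono (hℱ t.le_succ) le_rfl).mul (measurable_dot_relIncr hℱ hrel ha)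

theorem measurable_mul_dot_relIncr_sub_cost (hℱ : Monotone ℱ) {t : ℕ}
    (hrel : ∀ i, Measurable[ℱ (t + 1)] (relIncr P t i)) {c : (Fin N → ℝ) → ℝ}
    (hc : Measurable c) {b : Ω → ℝ} {a : Ω → Fin N → ℝ}
    (hb : Measurable[ℱ t] b) (ha : Measurable[ℱ t] a) :
    Measurable[ℱ (t + 1)] (fun ω => b ω * ∑ i, a ω i * relIncr P t i ω - c (a ω)) :=
  (measurable_mul_dot_relIncr hℱ hrel hb ha).sub ((hc.comp ha).mono (hℱ t.le_succ) le_rfl)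

theorem measurable_sum_range_of_adapted_succ (hℱ : Monotone ℱ) {D : ℕ → Ω → ℝ}
    (hD : ∀ s < T, Measurable[ℱ (s + 1)] (D s)) {t : ℕ} (ht : t ≤ T) :
    Measurable[ℱ t] (fun ω => ∑ s ∈ range t, D s ω) :=
  Finset.measurable_sum _ fun s hs =>
    (hD s ((mem_range.mp hs).trans_le ht)).mono (hℱ (mem_range.mp hs)) le_rfl

theorem measurable_wealth (hℱ : Monotone ℱ)
    (hrel : ∀ t < T, ∀ i, Measurable[ℱ (t + 1)] (relIncr P t i))
    {A : ℕ → Ω → Fin N → ℝ} (hA : ∀ t < T, Measurable[ℱ t] (A t)) (W0 : ℝ) :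
    Measurable[ℱ T] (wealth P W0 A T) :=
  measurable_const.add (measurable_sum_range_of_adapted_succ hℱ
    (fun t ht => measurable_dot_relIncr hℱ (hrel t ht) (hA t ht)) le_rfl)

end Measurability

namespace UsualFamily

variable {m0 : MeasurableSpace Ω} {μ : Measure Ω} {ℱ : ℕ → MeasurableSpace Ω} {T : ℕ}
  {U : ℕ → (Ω → ℝ) → Ω → EReal}

theorem ae_eq_add (hU : UsualFamily μ ℱ T U) {t : ℕ} (ht : t ≤ T) {X Y f : Ω → ℝ}
    (hX : Measurable[ℱ T] X) (hY : Measurable[ℱ t] Y) (hf : ∀ ω, f ω = X ω + Y ω) :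
    ∀ᵐ ω ∂μ, U t f ω = U t X ω + Y ω := by
  obtain rfl : f = fun ω => X ω + Y ω := funext hf
  exact hU.transInv t ht X Y hX hY

theorem ae_eq_self (hU : UsualFamily μ ℱ T U) {t : ℕ} (ht : t ≤ T) {Y : Ω → ℝ}
    (hY : Measurable[ℱ t] Y) : ∀ᵐ ω ∂μ, U t Y ω = Y ω := by
  filter_upwards [hU.ae_eq_add ht measurable_const hY (fun ω => (zero_add (Y ω)).symm),
    hU.normalized t ht] with ω hadd hzero
  rw [hadd, hzero, zero_add]

theorem ae_le_of_supersolution (hU : UsualFamily μ ℱ T U) (hℱ : Monotone ℱ) {X : Ω → ℝ}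
    (hX : Measurable[ℱ T] X) {V : ℕ → Ω → ℝ} (hV : ∀ t ≤ T, Measurable[ℱ t] (V t))
    (hXV : X ≤ᵐ[μ] V T) (hstep : ∀ t < T, ∀ᵐ ω ∂μ, U t (V (t + 1)) ω ≤ V t ω) :
    ∀ t ≤ T, ∀ᵐ ω ∂μ, U t X ω ≤ V t ω := by
  intro t ht
  induction ht using Nat.decreasingInduction with
  | self =>
    filter_upwards [hU.ae_eq_self le_rfl hX, hXV] with ω hXω hle
    exact hXω ▸ EReal.coe_le_coe_iff.mpr hle
  | of_succ t ht ih =>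
    have hV' : Measurable[ℱ T] (V (t + 1)) := (hV (t + 1) ht).mono (hℱ ht) le_rfl
    have hnext : ∀ᵐ ω ∂μ, U (t + 1) X ω ≤ U (t + 1) (V (t + 1)) ω := by
      filter_upwards [ih, hU.ae_eq_self ht (hV (t + 1) ht)] with ω hle heq
      exact heq ▸ hle
    filter_upwards [hU.timeConsistent t ht _ _ hV' hX hnext, hstep t ht] with ω h1 h2
    exact h1.trans h2

theorem ae_eq_of_solution (hU : UsualFamily μ ℱ T U) (hℱ : Monotone ℱ) {X : Ω → ℝ}
    (hX : Measurable[ℱ T] X) {V : ℕ → Ω → ℝ} (hV : ∀ t ≤ T, Measurable[ℱ t] (V t))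
    (hXV : X =ᵐ[μ] V T) (hstep : ∀ t < T, ∀ᵐ ω ∂μ, U t (V (t + 1)) ω = V t ω) :
    ∀ t ≤ T, ∀ᵐ ω ∂μ, U t X ω = V t ω := by
  intro t ht
  induction ht using Nat.decreasingInduction with
  | self =>
    filter_upwards [hU.ae_eq_self le_rfl hX, hXV] with ω hXω heq
    rw [hXω, heq]
  | of_succ t ht ih =>
    have hV' : Measurable[ℱ T] (V (t + 1)) := (hV (t + 1) ht).mono (hℱ ht) le_rfl
    have hnext : ∀ᵐ ω ∂μ, U (t + 1) X ω = U (t + 1) (V (t + 1)) ω := by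
      filter_upwards [ih, hU.ae_eq_self ht (hV (t + 1) ht)] with ω h1 h2
      rw [h1, h2]
    filter_upwards [hU.timeConsistent t ht _ _ hV' hX (hnext.mono fun _ => le_of_eq),
      hU.timeConsistent t ht _ _ hX hV' (hnext.mono fun _ => ge_of_eq), hstep t ht]
      with ω h1 h2 h3
    rw [le_antisymm h1 h2, h3]

theorem ae_eq_add_sum_range (hU : UsualFamily μ ℱ T U) (hℱ : Monotone ℱ)
    {Y D : ℕ → Ω → ℝ} (hY : ∀ t ≤ T, Measurable[ℱ t] (Y t))
    (hD : ∀ t < T, Measurable[ℱ (t + 1)] (D t)) {t : ℕ} (ht : t < T) :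
    ∀ᵐ ω ∂μ, U t (fun ω => Y (t + 1) ω + ∑ s ∈ range (t + 1), D s ω) ω =
      U t (fun ω => Y (t + 1) ω + D t ω) ω + ((∑ s ∈ range t, D s ω : ℝ) : EReal) :=
  hU.ae_eq_add ht.le (((hY (t + 1) ht).add (hD t ht)).mono (hℱ ht) le_rfl)
    (measurable_sum_range_of_adapted_succ hℱ hD ht.le)
    fun ω => by rw [sum_range_succ]; ring

theorem ae_le_of_step_le (hU : UsualFamily μ ℱ T U) (hℱ : Monotone ℱ)
    {Y D : ℕ → Ω → ℝ} (hY : ∀ t ≤ T, Measurable[ℱ t] (Y t))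
    (hD : ∀ t < T, Measurable[ℱ (t + 1)] (D t))
    (hstep : ∀ t < T, ∀ᵐ ω ∂μ, U t (fun ω' => Y (t + 1) ω' + D t ω') ω ≤ Y t ω)
    {X : Ω → ℝ} (hX : Measurable[ℱ T] X)
    (hXT : X =ᵐ[μ] fun ω => Y T ω + ∑ s ∈ range T, D s ω) :
    ∀ᵐ ω ∂μ, U 0 X ω ≤ Y 0 ω := by
  have hV : ∀ t ≤ T, Measurable[ℱ t] (fun ω => Y t ω + ∑ s ∈ range t, D s ω) :=
    fun t ht => (hY t ht).add (measurable_sum_range_of_adapted_succ hℱ hD ht)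
  have hsuper := hU.ae_le_of_supersolution hℱ hX hV hXT.le (fun t ht => by
    filter_upwards [hU.ae_eq_add_sum_range hℱ hY hD ht, hstep t ht] with ω hsplit hle
    rw [hsplit, EReal.coe_add]
    gcongr) 0 T.zero_le
  simpa using hsuper

theorem ae_eq_of_step_eq (hU : UsualFamily μ ℱ T U) (hℱ : Monotone ℱ)
    {Y D : ℕ → Ω → ℝ} (hY : ∀ t ≤ T, Measurable[ℱ t] (Y t))
    (hD : ∀ t < T, Measurable[ℱ (t + 1)] (D t))
    (hstep : ∀ t < T, ∀ᵐ ω ∂μ, U t (fun ω' => Y (t + 1) ω' + D t ω') ω = Y t ω)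
    {X : Ω → ℝ} (hX : Measurable[ℱ T] X)
    (hXT : X =ᵐ[μ] fun ω => Y T ω + ∑ s ∈ range T, D s ω) :
    ∀ᵐ ω ∂μ, U 0 X ω = Y 0 ω := by
  have hV : ∀ t ≤ T, Measurable[ℱ t] (fun ω => Y t ω + ∑ s ∈ range t, D s ω) :=
    fun t ht => (hY t ht).add (measurable_sum_range_of_adapted_succ hℱ hD ht)
  have hsol := hU.ae_eq_of_solution hℱ hX hV hXT (fun t ht => by
    filter_upwards [hU.ae_eq_add_sum_range hℱ hY hD ht, hstep t ht] with ω hsplit heq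
    rw [hsplit, heq, EReal.coe_add]) 0 T.zero_le
  simpa using hsol

end UsualFamily

section Payoffs

variable {N : ℕ} {P : ℕ → Ω → Fin N → ℝ} {Ua Up : ℕ → (Ω → ℝ) → Ω → EReal}
  {c : ℕ → (Fin N → ℝ) → ℝ} {h : ℕ → Ω → ℝ} {t : ℕ} {a : Ω → Fin N → ℝ} {g : Ω → ℝ}
  {ω : Ω} {v : ℝ}

theorem coe_toReal_Ua_of_principalVal_eq (hval : principalVal P Ua Up c h t a g ω = v) :
    ((Ua t g ω).toReal : EReal) = Ua t g ω :=
  EReal.coe_toReal_of_add_eq_coe ((add_assoc (Ua t g ω) _ _).symm.trans hval)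

theorem Up_eq_of_principalVal_eq (hval : principalVal P Ua Up c h t a g ω = v) :
    Up t (fun ω' => h (t + 1) ω' + (∑ i, a ω' i * relIncr P t i ω') - g ω') ω =
      ((v - (Ua t g ω).toReal + c t (a ω) : ℝ) : EReal) := by
  have hUa := coe_toReal_Ua_of_principalVal_eq hval
  unfold principalVal at hval
  rw [← hUa, ← EReal.coe_add] at hval
  have hUp := EReal.coe_toReal_of_add_eq_coe ((add_comm _ _).trans hval)
  rw [← hUp, ← EReal.coe_add, EReal.coe_eq_coe_iff] at hval
  rw [← hUp, EReal.coe_eq_coe_iff]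
  linarith

theorem contractPay_eq (T : ℕ) (R : ℝ) (Θ : Ω → ℝ) (β : ℕ → Ω → ℝ)
    (A Abar : ℕ → Ω → Fin N → ℝ) :
    contractPay P T R Θ β A Abar ω =
      (R + Θ ω - ∑ t ∈ range T, β t ω * ∑ i, A t ω i * relIncr P t i ω) +
        ∑ t ∈ range T, β t ω * ∑ i, Abar t ω i * relIncr P t i ω := by
  simp only [contractPay, sub_mul, sum_sub_distrib, mul_sub]
  ring

end Payoffs

namespace AgentSolution

variable {m0 : MeasurableSpace Ω} {μ : Measure Ω} {ℱ : ℕ → MeasurableSpace Ω} {T N : ℕ}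
  {P : ℕ → Ω → Fin N → ℝ} {Ua Up : ℕ → (Ω → ℝ) → Ω → EReal} {c : ℕ → (Fin N → ℝ) → ℝ}
  {Θ' : Ω → ℝ} {β' H : ℕ → Ω → ℝ} {Ahat : ℕ → Ω → Fin N → ℝ} {h : ℕ → Ω → ℝ}

theorem memIC (hsol : AgentSolution μ ℱ T P Ua c Θ' β' H Ahat) (hℱ : Monotone ℱ)
    (hrel : ∀ t < T, ∀ i, Measurable[ℱ (t + 1)] (relIncr P t i))
    (hβ' : ∀ t < T, Measurable[ℱ t] (β' t)) {t : ℕ} (ht : t < T) :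
    MemIC μ ℱ P Ua c t (β' t) (Ahat t)
      (fun ω => H (t + 1) ω + β' t ω * ∑ i, Ahat t ω i * relIncr P t i ω) := by
  refine ⟨hsol.measA t ht, (hsol.measH (t + 1) ht).add
    (measurable_mul_dot_relIncr hℱ (hrel t ht) (hβ' t ht) (hsol.measA t ht)), fun a ha => ?_⟩
  have hshift : (fun ω' => (H (t + 1) ω' + β' t ω' * ∑ i, Ahat t ω' i * relIncr P t i ω') +
        β' t ω' * ∑ i, (a ω' i - Ahat t ω' i) * relIncr P t i ω') =
      fun ω' => H (t + 1) ω' + β' t ω' * ∑ i, a ω' i * relIncr P t i ω' := by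
    funext ω'
    simp only [sub_mul, sum_sub_distrib]
    ring
  filter_upwards [hsol.upperBound t ht a ha, hsol.attained t ht] with ω hle heq
  rw [hshift, heq]
  exact hle

theorem ae_eq_sub_cost (hsol : AgentSolution μ ℱ T P Ua c Θ' β' H Ahat)
    (hUa : UsualFamily μ ℱ T Ua) (hℱ : Monotone ℱ)
    (hrel : ∀ t < T, ∀ i, Measurable[ℱ (t + 1)] (relIncr P t i))
    (hc : ∀ t < T, Measurable (c t)) (hβ' : ∀ t < T, Measurable[ℱ t] (β' t))
    {t : ℕ} (ht : t < T) {a : Ω → Fin N → ℝ} (ha : Measurable[ℱ t] a) :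
    ∀ᵐ ω ∂μ, Ua t (fun ω' => H (t + 1) ω' +
        (β' t ω' * ∑ i, a ω' i * relIncr P t i ω' - c t (a ω'))) ω =
      Ua t (fun ω' => H (t + 1) ω' + β' t ω' * ∑ i, a ω' i * relIncr P t i ω') ω +
        ((-(c t (a ω)) : ℝ) : EReal) :=
  hUa.ae_eq_add ht.le (((hsol.measH (t + 1) ht).add
      (measurable_mul_dot_relIncr hℱ (hrel t ht) (hβ' t ht) ha)).mono (hℱ ht) le_rfl)
    ((hc t ht).comp ha).neg fun ω => by ring

theorem utility_le (hsol : AgentSolution μ ℱ T P Ua c Θ' β' H Ahat)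
    (hUa : UsualFamily μ ℱ T Ua) (hℱ : Monotone ℱ)
    (hrel : ∀ t < T, ∀ i, Measurable[ℱ (t + 1)] (relIncr P t i))
    (hc : ∀ t < T, Measurable (c t)) (hΘ' : Measurable[ℱ T] Θ')
    (hβ' : ∀ t < T, Measurable[ℱ t] (β' t)) {Abar : ℕ → Ω → Fin N → ℝ}
    (hAbar : ∀ t < T, Measurable[ℱ t] (Abar t)) :
    ∀ᵐ ω ∂μ, Ua 0 (fun ω' => Θ' ω' + ∑ t ∈ range T,
      (β' t ω' * ∑ i, Abar t ω' i * relIncr P t i ω' - c t (Abar t ω'))) ω ≤ H 0 ω := by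
  have hD := fun t (ht : t < T) =>
    measurable_mul_dot_relIncr_sub_cost hℱ (hrel t ht) (hc t ht) (hβ' t ht) (hAbar t ht)
  exact hUa.ae_le_of_step_le hℱ hsol.measH hD
    (fun t ht => Filter.EventuallyEq.trans_le
      (hsol.ae_eq_sub_cost hUa hℱ hrel hc hβ' ht (hAbar t ht))
      (hsol.upperBound t ht (Abar t) (hAbar t ht)))
    (hΘ'.add (measurable_sum_range_of_adapted_succ hℱ hD le_rfl))
    (hsol.terminal.mono fun ω hω => by simp only [hω])

theorem utility_eq (hsol : AgentSolution μ ℱ T P Ua c Θ' β' H Ahat)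
    (hUa : UsualFamily μ ℱ T Ua) (hℱ : Monotone ℱ)
    (hrel : ∀ t < T, ∀ i, Measurable[ℱ (t + 1)] (relIncr P t i))
    (hc : ∀ t < T, Measurable (c t)) (hΘ' : Measurable[ℱ T] Θ')
    (hβ' : ∀ t < T, Measurable[ℱ t] (β' t)) :
    ∀ᵐ ω ∂μ, Ua 0 (fun ω' => Θ' ω' + ∑ t ∈ range T,
      (β' t ω' * ∑ i, Ahat t ω' i * relIncr P t i ω' - c t (Ahat t ω'))) ω = H 0 ω := by
  have hD := fun t (ht : t < T) =>
    measurable_mul_dot_relIncr_sub_cost hℱ (hrel t ht) (hc t ht) (hβ' t ht) (hsol.measA t ht)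
  exact hUa.ae_eq_of_step_eq hℱ hsol.measH hD
    (fun t ht => Filter.EventuallyEq.trans
      (hsol.ae_eq_sub_cost hUa hℱ hrel hc hβ' ht (hsol.measA t ht))
      (hsol.attained t ht))
    (hΘ'.add (measurable_sum_range_of_adapted_succ hℱ hD le_rfl))
    (hsol.terminal.mono fun ω hω => by simp only [hω])

theorem principal_step_le (hsol : AgentSolution μ ℱ T P Ua c Θ' β' H Ahat) {t : ℕ} (ht : t < T)
    (hdom : ∀ᵐ ω ∂μ, principalVal P Ua Up c h t (Ahat t)
      (fun ω => H (t + 1) ω + β' t ω * ∑ i, Ahat t ω i * relIncr P t i ω) ω ≤ h t ω) :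
    ∀ᵐ ω ∂μ, Up t (fun ω' => h (t + 1) ω' + (∑ i, Ahat t ω' i * relIncr P t i ω') -
        (H (t + 1) ω' + β' t ω' * ∑ i, Ahat t ω' i * relIncr P t i ω')) ω ≤
      ((h t ω - H t ω : ℝ) : EReal) := by
  filter_upwards [hdom, hsol.attained t ht] with ω hle heq
  rw [principalVal, heq] at hle
  exact EReal.le_coe_sub_of_coe_add_le hle

theorem principal_ae_eq_add_const (hsol : AgentSolution μ ℱ T P Ua c Θ' β' H Ahat)
    (hUp : UsualFamily μ ℱ T Up) (hℱ : Monotone ℱ)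
    (hrel : ∀ t < T, ∀ i, Measurable[ℱ (t + 1)] (relIncr P t i))
    (hβ' : ∀ t < T, Measurable[ℱ t] (β' t)) (hh : ∀ t ≤ T, Measurable[ℱ t] (h t))
    (W0 : ℝ) {t : ℕ} (ht : t < T) :
    ∀ᵐ ω ∂μ, Up t (fun ω' => (W0 - H (t + 1) ω' + h (t + 1) ω') +
        ((∑ i, Ahat t ω' i * relIncr P t i ω') -
          β' t ω' * ∑ i, Ahat t ω' i * relIncr P t i ω')) ω =
      Up t (fun ω' => h (t + 1) ω' + (∑ i, Ahat t ω' i * relIncr P t i ω') -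
        (H (t + 1) ω' + β' t ω' * ∑ i, Ahat t ω' i * relIncr P t i ω')) ω + (W0 : EReal) :=
  hUp.ae_eq_add ht.le ((((hh (t + 1) ht).add
      (measurable_dot_relIncr hℱ (hrel t ht) (hsol.measA t ht))).sub
      ((hsol.measH (t + 1) ht).add
        (measurable_mul_dot_relIncr hℱ (hrel t ht) (hβ' t ht) (hsol.measA t ht)))).mono
      (hℱ ht) le_rfl) measurable_const fun ω => by ring

theorem measurable_principal_payoff (hsol : AgentSolution μ ℱ T P Ua c Θ' β' H Ahat)
    (hℱ : Monotone ℱ) (hrel : ∀ t < T, ∀ i, Measurable[ℱ (t + 1)] (relIncr P t i))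
    (hΘ' : Measurable[ℱ T] Θ') (hβ' : ∀ t < T, Measurable[ℱ t] (β' t)) (W0 : ℝ) :
    Measurable[ℱ T] (fun ω' => wealth P W0 Ahat T ω' - (Θ' ω' + ∑ t ∈ range T,
        β' t ω' * ∑ i, Ahat t ω' i * relIncr P t i ω')) :=
  (measurable_wealth hℱ hrel hsol.measA W0).sub
    (hΘ'.add (measurable_sum_range_of_adapted_succ hℱ (fun t ht =>
      measurable_mul_dot_relIncr hℱ (hrel t ht) (hβ' t ht) (hsol.measA t ht)) le_rfl))

theorem principal_payoff_ae_eq (hsol : AgentSolution μ ℱ T P Ua c Θ' β' H Ahat)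
    (hhT : h T =ᵐ[μ] fun _ => (0 : ℝ)) (W0 : ℝ) :
    (fun ω' => wealth P W0 Ahat T ω' - (Θ' ω' + ∑ t ∈ range T,
        β' t ω' * ∑ i, Ahat t ω' i * relIncr P t i ω')) =ᵐ[μ]
      fun ω => (W0 - H T ω + h T ω) + ∑ t ∈ range T, ((∑ i, Ahat t ω i * relIncr P t i ω) -
        β' t ω * ∑ i, Ahat t ω i * relIncr P t i ω) := by
  filter_upwards [hsol.terminal, hhT] with ω hH hh
  simp only [wealth, hH, hh, sum_sub_distrib]
  ring

theorem principal_utility_le (hsol : AgentSolution μ ℱ T P Ua c Θ' β' H Ahat)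
    (hUp : UsualFamily μ ℱ T Up) (hℱ : Monotone ℱ)
    (hrel : ∀ t < T, ∀ i, Measurable[ℱ (t + 1)] (relIncr P t i))
    (hΘ' : Measurable[ℱ T] Θ') (hβ' : ∀ t < T, Measurable[ℱ t] (β' t))
    (hh : ∀ t ≤ T, Measurable[ℱ t] (h t)) (hhT : h T =ᵐ[μ] fun _ => (0 : ℝ)) (W0 : ℝ)
    (hstep : ∀ t < T, ∀ᵐ ω ∂μ, Up t (fun ω' => h (t + 1) ω' +
        (∑ i, Ahat t ω' i * relIncr P t i ω') -
          (H (t + 1) ω' + β' t ω' * ∑ i, Ahat t ω' i * relIncr P t i ω')) ω ≤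
        ((h t ω - H t ω : ℝ) : EReal)) :
    ∀ᵐ ω ∂μ, Up 0 (fun ω' => wealth P W0 Ahat T ω' - (Θ' ω' + ∑ t ∈ range T,
        β' t ω' * ∑ i, Ahat t ω' i * relIncr P t i ω')) ω ≤
      ((W0 - H 0 ω + h 0 ω : ℝ) : EReal) := by
  have hD : ∀ t < T, Measurable[ℱ (t + 1)] (fun ω => (∑ i, Ahat t ω i * relIncr P t i ω) -
      β' t ω * ∑ i, Ahat t ω i * relIncr P t i ω) := fun t ht =>
    (measurable_dot_relIncr hℱ (hrel t ht) (hsol.measA t ht)).sub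
      (measurable_mul_dot_relIncr hℱ (hrel t ht) (hβ' t ht) (hsol.measA t ht))
  refine hUp.ae_le_of_step_le hℱ (Y := fun t ω => W0 - H t ω + h t ω)
    (fun t ht => (measurable_const.sub (hsol.measH t ht)).add (hh t ht)) hD (fun t ht => ?_)
    (hsol.measurable_principal_payoff hℱ hrel hΘ' hβ' W0) (hsol.principal_payoff_ae_eq hhT W0)
  filter_upwards [hsol.principal_ae_eq_add_const hUp hℱ hrel hβ' hh W0 ht, hstep t ht]
    with ω hω hle
  rw [hω]
  calc _ ≤ ((h t ω - H t ω : ℝ) : EReal) + W0 := by gcongr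
    _ = _ := by rw [← EReal.coe_add]; congr 1; ring

theorem principal_utility_eq (hsol : AgentSolution μ ℱ T P Ua c Θ' β' H Ahat)
    (hUp : UsualFamily μ ℱ T Up) (hℱ : Monotone ℱ)
    (hrel : ∀ t < T, ∀ i, Measurable[ℱ (t + 1)] (relIncr P t i))
    (hΘ' : Measurable[ℱ T] Θ') (hβ' : ∀ t < T, Measurable[ℱ t] (β' t))
    (hh : ∀ t ≤ T, Measurable[ℱ t] (h t)) (hhT : h T =ᵐ[μ] fun _ => (0 : ℝ)) (W0 : ℝ)
    (hstep : ∀ t < T, ∀ᵐ ω ∂μ, Up t (fun ω' => h (t + 1) ω' +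
        (∑ i, Ahat t ω' i * relIncr P t i ω') -
          (H (t + 1) ω' + β' t ω' * ∑ i, Ahat t ω' i * relIncr P t i ω')) ω =
        ((h t ω - H t ω : ℝ) : EReal)) :
    ∀ᵐ ω ∂μ, Up 0 (fun ω' => wealth P W0 Ahat T ω' - (Θ' ω' + ∑ t ∈ range T,
        β' t ω' * ∑ i, Ahat t ω' i * relIncr P t i ω')) ω =
      ((W0 - H 0 ω + h 0 ω : ℝ) : EReal) := by
  have hD : ∀ t < T, Measurable[ℱ (t + 1)] (fun ω => (∑ i, Ahat t ω i * relIncr P t i ω) -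
      β' t ω * ∑ i, Ahat t ω i * relIncr P t i ω) := fun t ht =>
    (measurable_dot_relIncr hℱ (hrel t ht) (hsol.measA t ht)).sub
      (measurable_mul_dot_relIncr hℱ (hrel t ht) (hβ' t ht) (hsol.measA t ht))
  refine hUp.ae_eq_of_step_eq hℱ (Y := fun t ω => W0 - H t ω + h t ω)
    (fun t ht => (measurable_const.sub (hsol.measH t ht)).add (hh t ht)) hD (fun t ht => ?_)
    (hsol.measurable_principal_payoff hℱ hrel hΘ' hβ' W0) (hsol.principal_payoff_ae_eq hhT W0)
  filter_upwards [hsol.principal_ae_eq_add_const hUp hℱ hrel hβ' hh W0 ht, hstep t ht]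
    with ω hω heq
  rw [hω, heq, ← EReal.coe_add]
  congr 1
  ring

end AgentSolution

section Construction

variable {m0 : MeasurableSpace Ω} {μ : Measure Ω} {ℱ : ℕ → MeasurableSpace Ω} {T N : ℕ}
  {P : ℕ → Ω → Fin N → ℝ} {Ua : ℕ → (Ω → ℝ) → Ω → EReal} {c : ℕ → (Fin N → ℝ) → ℝ}
  {β : ℕ → Ω → ℝ} {A : ℕ → Ω → Fin N → ℝ} {Γ : ℕ → Ω → ℝ}

noncomputable def continuationValue (P : ℕ → Ω → Fin N → ℝ)
    (Ua : ℕ → (Ω → ℝ) → Ω → EReal) (c : ℕ → (Fin N → ℝ) → ℝ) (R : ℝ) (β : ℕ → Ω → ℝ)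
    (A : ℕ → Ω → Fin N → ℝ) (Γ : ℕ → Ω → ℝ) (t : ℕ) (ω : Ω) : ℝ :=
  R + ∑ s ∈ range t, (Γ (s + 1) ω - (Ua s (Γ (s + 1)) ω).toReal + c s (A s ω) -
    β s ω * ∑ i, A s ω i * relIncr P s i ω)

@[simp]
theorem continuationValue_zero (R : ℝ) (ω : Ω) : continuationValue P Ua c R β A Γ 0 ω = R := by
  simp [continuationValue]

theorem continuationValue_succ_add (R : ℝ) (t : ℕ) (a : Ω → Fin N → ℝ) (ω : Ω) :
    continuationValue P Ua c R β A Γ (t + 1) ω + β t ω * ∑ i, a ω i * relIncr P t i ω =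
      (Γ (t + 1) ω + β t ω * ∑ i, (a ω i - A t ω i) * relIncr P t i ω) +
        (continuationValue P Ua c R β A Γ t ω - (Ua t (Γ (t + 1)) ω).toReal + c t (A t ω)) := by
  simp only [continuationValue, sum_range_succ, sub_mul, sum_sub_distrib]
  ring

theorem continuationValue_terminal (R : ℝ) (T : ℕ) :
    continuationValue P Ua c R β A Γ T = fun ω =>
      R + ∑ t ∈ range T, (Γ (t + 1) ω - (Ua t (Γ (t + 1)) ω).toReal + c t (A t ω)) -
        ∑ t ∈ range T, β t ω * ∑ i, A t ω i * relIncr P t i ω := by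
  funext ω
  simp only [continuationValue, sum_sub_distrib]
  ring

theorem measurable_continuationValue (hUa : UsualFamily μ ℱ T Ua) (hℱ : Monotone ℱ)
    (hrel : ∀ t < T, ∀ i, Measurable[ℱ (t + 1)] (relIncr P t i))
    (hc : ∀ t < T, Measurable (c t)) (hβ : ∀ t < T, Measurable[ℱ t] (β t))
    (hA : ∀ t < T, Measurable[ℱ t] (A t)) (hΓ : ∀ t < T, Measurable[ℱ (t + 1)] (Γ (t + 1)))
    (R : ℝ) {t : ℕ} (ht : t ≤ T) :
    Measurable[ℱ t] (continuationValue P Ua c R β A Γ t) := by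
  refine measurable_const.add (measurable_sum_range_of_adapted_succ hℱ (fun s hs => ?_) ht)
  have hsucc : ℱ s ≤ ℱ (s + 1) := hℱ s.le_succ
  exact (((hΓ s hs).sub (((hUa.meas s hs.le _ ((hΓ s hs).mono (hℱ hs) le_rfl)).ereal_toReal).mono
    hsucc le_rfl)).add (((hc s hs).comp (hA s hs)).mono hsucc le_rfl)).sub
    (measurable_mul_dot_relIncr hℱ (hrel s hs) (hβ s hs) (hA s hs))

theorem measurable_continuationValue_shift (hUa : UsualFamily μ ℱ T Ua) (hℱ : Monotone ℱ)
    (hrel : ∀ t < T, ∀ i, Measurable[ℱ (t + 1)] (relIncr P t i))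
    (hc : ∀ t < T, Measurable (c t)) (hβ : ∀ t < T, Measurable[ℱ t] (β t))
    (hA : ∀ t < T, Measurable[ℱ t] (A t)) (hΓ : ∀ t < T, Measurable[ℱ (t + 1)] (Γ (t + 1)))
    (R : ℝ) {t : ℕ} (ht : t < T) :
    Measurable[ℱ t] (fun ω => continuationValue P Ua c R β A Γ t ω -
      (Ua t (Γ (t + 1)) ω).toReal + c t (A t ω)) :=
  ((measurable_continuationValue hUa hℱ hrel hc hβ hA hΓ R ht.le).sub
    (hUa.meas t ht.le _ ((hΓ t ht).mono (hℱ ht) le_rfl)).ereal_toReal).add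
    ((hc t ht).comp (hA t ht))

theorem ae_eq_continuationValue_step (hUa : UsualFamily μ ℱ T Ua) (hℱ : Monotone ℱ)
    (hrel : ∀ t < T, ∀ i, Measurable[ℱ (t + 1)] (relIncr P t i))
    (hc : ∀ t < T, Measurable (c t)) (hβ : ∀ t < T, Measurable[ℱ t] (β t))
    (hA : ∀ t < T, Measurable[ℱ t] (A t)) (hΓ : ∀ t < T, Measurable[ℱ (t + 1)] (Γ (t + 1)))
    (R : ℝ) {t : ℕ} (ht : t < T) {a : Ω → Fin N → ℝ} (ha : Measurable[ℱ t] a) :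
    ∀ᵐ ω ∂μ, Ua t (fun ω' => continuationValue P Ua c R β A Γ (t + 1) ω' +
        β t ω' * ∑ i, a ω' i * relIncr P t i ω') ω =
      Ua t (fun ω' => Γ (t + 1) ω' + β t ω' * ∑ i, (a ω' i - A t ω' i) * relIncr P t i ω') ω +
        ((continuationValue P Ua c R β A Γ t ω - (Ua t (Γ (t + 1)) ω).toReal +
          c t (A t ω) : ℝ) : EReal) :=
  hUa.ae_eq_add ht.le (((hΓ t ht).add (measurable_mul_dot_relIncr hℱ (hrel t ht) (hβ t ht)
      (ha.sub (hA t ht)))).mono (hℱ ht) le_rfl)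
    (measurable_continuationValue_shift hUa hℱ hrel hc hβ hA hΓ R ht)
    (continuationValue_succ_add R t a)

theorem agentSolution_continuationValue (hUa : UsualFamily μ ℱ T Ua) (hℱ : Monotone ℱ)
    (hrel : ∀ t < T, ∀ i, Measurable[ℱ (t + 1)] (relIncr P t i))
    (hc : ∀ t < T, Measurable (c t)) (hβ : ∀ t < T, Measurable[ℱ t] (β t))
    (hIC : ∀ t < T, MemIC μ ℱ P Ua c t (β t) (A t) (Γ (t + 1)))
    (hfin : ∀ t < T, ∀ᵐ ω ∂μ, ((Ua t (Γ (t + 1)) ω).toReal : EReal) = Ua t (Γ (t + 1)) ω)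
    (R : ℝ) :
    AgentSolution μ ℱ T P Ua c
      (fun ω => R + ∑ t ∈ range T, (Γ (t + 1) ω - (Ua t (Γ (t + 1)) ω).toReal + c t (A t ω)) -
        ∑ t ∈ range T, β t ω * ∑ i, A t ω i * relIncr P t i ω)
      β (continuationValue P Ua c R β A Γ) A := by
  have hA : ∀ t < T, Measurable[ℱ t] (A t) := fun t ht => (hIC t ht).1
  have hΓ : ∀ t < T, Measurable[ℱ (t + 1)] (Γ (t + 1)) := fun t ht => (hIC t ht).2.1
  have hstep := fun t (ht : t < T) {a} (ha : Measurable[ℱ t] a) =>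
    ae_eq_continuationValue_step hUa hℱ hrel hc hβ hA hΓ R ht ha
  refine ⟨fun t ht => measurable_continuationValue hUa hℱ hrel hc hβ hA hΓ R ht, hA,
    by rw [continuationValue_terminal], fun t ht a ha => ?_, fun t ht => ?_⟩
  · filter_upwards [hstep t ht ha, (hIC t ht).2.2 a ha, hfin t ht] with ω hω hle hfinω
    rw [hω, add_right_comm]
    calc _ ≤ Ua t (Γ (t + 1)) ω + ((-(c t (A t ω)) : ℝ) : EReal) +
          ((continuationValue P Ua c R β A Γ t ω - (Ua t (Γ (t + 1)) ω).toReal +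
            c t (A t ω) : ℝ) : EReal) := by gcongr
      _ = _ := by
        rw [← hfinω, EReal.toReal_coe, ← EReal.coe_add, ← EReal.coe_add]
        congr 1
        ring
  · filter_upwards [hstep t ht (hA t ht), hfin t ht] with ω hω hfinω
    simp only [sub_self, zero_mul, sum_const_zero, mul_zero, add_zero] at hω
    rw [hω, add_right_comm, ← hfinω, EReal.toReal_coe, ← EReal.coe_add, ← EReal.coe_add]
    congr 1
    ring

theorem principal_step_continuationValue {Up : ℕ → (Ω → ℝ) → Ω → EReal} {h : ℕ → Ω → ℝ}
    (hUa : UsualFamily μ ℱ T Ua) (hUp : UsualFamily μ ℱ T Up) (hℱ : Monotone ℱ)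
    (hrel : ∀ t < T, ∀ i, Measurable[ℱ (t + 1)] (relIncr P t i))
    (hc : ∀ t < T, Measurable (c t)) (hβ : ∀ t < T, Measurable[ℱ t] (β t))
    (hA : ∀ t < T, Measurable[ℱ t] (A t)) (hΓ : ∀ t < T, Measurable[ℱ (t + 1)] (Γ (t + 1)))
    (hh : ∀ t ≤ T, Measurable[ℱ t] (h t)) (R : ℝ) {t : ℕ} (ht : t < T)
    (hattain : ∀ᵐ ω ∂μ, principalVal P Ua Up c h t (A t) (Γ (t + 1)) ω = h t ω) :
    ∀ᵐ ω ∂μ, Up t (fun ω' => h (t + 1) ω' + (∑ i, A t ω' i * relIncr P t i ω') -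
        (continuationValue P Ua c R β A Γ (t + 1) ω' +
          β t ω' * ∑ i, A t ω' i * relIncr P t i ω')) ω =
      ((h t ω - continuationValue P Ua c R β A Γ t ω : ℝ) : EReal) := by
  have hX : Measurable[ℱ T] (fun ω => h (t + 1) ω + (∑ i, A t ω i * relIncr P t i ω) -
      Γ (t + 1) ω) :=
    (((hh (t + 1) ht).add (measurable_dot_relIncr hℱ (hrel t ht) (hA t ht))).sub
      (hΓ t ht)).mono (hℱ ht) le_rfl
  have hK : Measurable[ℱ t] (fun ω => -(continuationValue P Ua c R β A Γ t ω -
      (Ua t (Γ (t + 1)) ω).toReal + c t (A t ω))) :=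
    (measurable_continuationValue_shift hUa hℱ hrel hc hβ hA hΓ R ht).neg
  refine Filter.EventuallyEq.trans (hUp.ae_eq_add ht.le hX hK fun ω => ?_) ?_
  · rw [continuationValue_succ_add]
    simp only [sub_self, zero_mul, sum_const_zero, mul_zero, add_zero]
    ring
  · filter_upwards [hattain] with ω hval
    rw [Up_eq_of_principalVal_eq hval, ← EReal.coe_add]
    congr 1
    ring

end Construction

theorem principal_agent_dynamic_solution_general
    {m0 : MeasurableSpace Ω} (μ : Measure Ω)
    (T N : ℕ)
    (ℱ : ℕ → MeasurableSpace Ω) (hmono : ∀ s t, s ≤ t → ℱ s ≤ ℱ t)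
    -- the price process: strictly positive, generating the filtration, `E[P_{t+1}|ℱ_t]` finite
    (P : ℕ → Ω → Fin N → ℝ)
    (hPadapted : ∀ t ≤ T, Measurable[ℱ t] (P t))
    -- strictly convex costs
    (c : ℕ → (Fin N → ℝ) → ℝ) (hc : ∀ t < T, StrictConvexOn ℝ Set.univ (c t))
    -- the Agent's and the Principal's utility families satisfy the usual conditions
    (Ua Up : ℕ → (Ω → ℝ) → Ω → EReal)
    (hUa : UsualFamily μ ℱ T Ua) (hUp : UsualFamily μ ℱ T Up)
    (W0 R : ℝ)
    -- a solution `h` of the Principal's recursion, with maximizers `(β_t, A_t, Γ_{t+1})`: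
    (h : ℕ → Ω → ℝ) (hhmeas : ∀ t ≤ T, Measurable[ℱ t] (h t))
    (hhT : h T =ᵐ[μ] fun _ => (0 : ℝ))
    (β : ℕ → Ω → ℝ) (A : ℕ → Ω → Fin N → ℝ) (Γ : ℕ → Ω → ℝ)
    (hβ : ∀ t < T, Measurable[ℱ t] (β t))
    (hA : ∀ t < T, Measurable[ℱ t] (A t))
    (hΓ : ∀ t < T, Measurable[ℱ (t + 1)] (Γ (t + 1)))
    (hfeas : ∀ t, t < T → MemIC μ ℱ P Ua c t (β t) (A t) (Γ (t + 1)))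
    (hdomin : ∀ t, t < T → ∀ b : Ω → ℝ, Measurable[ℱ t] b →
      ∀ a : Ω → Fin N → ℝ, ∀ g : Ω → ℝ, MemIC μ ℱ P Ua c t b a g →
      ∀ᵐ ω ∂μ, principalVal P Ua Up c h t a g ω ≤ ((h t ω : ℝ) : EReal))
    (hattain : ∀ t, t < T →
      ∀ᵐ ω ∂μ, principalVal P Ua Up c h t (A t) (Γ (t + 1)) ω = ((h t ω : ℝ) : EReal)) :
    -- with `Θ := Σ_{t<T} [Γ_{t+1} − Uᵃ_t(Γ_{t+1}) + c_t(A_t)]` and the contract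
    -- `S(Ā) := R + Θ + Σ_{t<T} β_t (ΔW^Ā_{t+1} − A_t·ΔP̃_{t+1})`:
    (fun Θ : Ω → ℝ => fun S : (ℕ → Ω → Fin N → ℝ) → Ω → ℝ =>
      -- (1) `S`, written in standard lump-sum form, is incentive compatible with
      --     recommended effort `A`, and the Agent's optimal time-0 utility equals `R`
      --     (so the individual rationality constraint binds);
      ((∃ H : ℕ → Ω → ℝ,
          AgentSolution μ ℱ T P Ua c
            (fun ω => R + Θ ω - ∑ t ∈ Finset.range T,
              β t ω * ∑ i, A t ω i * relIncr P t i ω) β H A ∧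
          H 0 =ᵐ[μ] fun _ => R) ∧
      -- (2) the Agent's optimal effort under `S` is `A`, with optimal time-0 utility `R`:
      --     any adapted effort `Ā` gives him at most `R`, and `A` attains `R`;
      (∀ Abar : ℕ → Ω → Fin N → ℝ, (∀ t < T, Measurable[ℱ t] (Abar t)) →
        ∀ᵐ ω ∂μ,
          Ua 0 (fun ω' => S Abar ω' - ∑ t ∈ Finset.range T, c t (Abar t ω')) ω ≤
            ((R : ℝ) : EReal)) ∧
      (∀ᵐ ω ∂μ,
        Ua 0 (fun ω' => S A ω' - ∑ t ∈ Finset.range T, c t (A t ω')) ω =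
          ((R : ℝ) : EReal)) ∧
      -- (3) the Principal's time-0 utility from `S` (with the Agent playing `A`) equals
      --     `W₀ − R + h₀`;
      (∀ᵐ ω ∂μ,
        Up 0 (fun ω' => wealth P W0 A T ω' - S A ω') ω =
          ((W0 - R + h 0 ω : ℝ) : EReal)) ∧
      -- (4) `S` is optimal: every incentive-compatible and individually rational contract
      --     `(Θ'', β'')`, under the corresponding Agent-optimal effort, gives the Principal
      --     a time-0 utility of at most `W₀ − R + h₀`.
      (∀ Θ'' : Ω → ℝ, Measurable[ℱ T] Θ'' →
        ∀ β'' : ℕ → Ω → ℝ, (∀ t < T, Measurable[ℱ t] (β'' t)) →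
        ∀ H'' : ℕ → Ω → ℝ, ∀ Ahat'' : ℕ → Ω → Fin N → ℝ,
        AgentSolution μ ℱ T P Ua c Θ'' β'' H'' Ahat'' →
        (∀ᵐ ω ∂μ, R ≤ H'' 0 ω) →
        ∀ᵐ ω ∂μ,
          Up 0 (fun ω' => wealth P W0 Ahat'' T ω' -
              (Θ'' ω' + ∑ t ∈ Finset.range T,
                β'' t ω' * ∑ i, Ahat'' t ω' i * relIncr P t i ω')) ω ≤
            ((W0 - R + h 0 ω : ℝ) : EReal))))
      (fun ω => ∑ t ∈ Finset.range T,
        (Γ (t + 1) ω - (Ua t (Γ (t + 1)) ω).toReal + c t (A t ω)))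
      (contractPay P T R
        (fun ω => ∑ t ∈ Finset.range T,
          (Γ (t + 1) ω - (Ua t (Γ (t + 1)) ω).toReal + c t (A t ω))) β A) := by
  have hℱ : Monotone ℱ := fun s t hst => hmono s t hst
  have hrel : ∀ t < T, ∀ i, Measurable[ℱ (t + 1)] (relIncr P t i) := fun t ht =>
    measurable_relIncr hℱ (hPadapted t ht.le) (hPadapted (t + 1) ht)
  have hcm : ∀ t < T, Measurable (c t) := fun t ht =>
    (continuousOn_univ.mp ((hc t ht).convexOn.continuousOn isOpen_univ)).measurable
  -- `hattain` forces `Uᵃ_t(Γ_{t+1})` to be finite, so its `toReal` in `Θ` is not a junk value.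
  have hsol := agentSolution_continuationValue hUa hℱ hrel hcm hβ hfeas
    (fun t ht => (hattain t ht).mono fun _ => coe_toReal_Ua_of_principalVal_eq) R
  have hΘ := hsol.measH T le_rfl
  rw [continuationValue_terminal] at hΘ
  refine ⟨⟨_, hsol, ae_of_all _ (continuationValue_zero R)⟩, fun Abar hAbar => ?_, ?_,
    ?_, fun Θ'' hΘ'' β'' hβ'' H'' Ahat'' hsol'' hIR => ?_⟩
  · have hle := hsol.utility_le hUa hℱ hrel hcm hΘ hβ hAbar
    simpa only [contractPay_eq, sum_sub_distrib, add_sub_assoc, continuationValue_zero] using hle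
  · have heq := hsol.utility_eq hUa hℱ hrel hcm hΘ hβ
    simpa only [contractPay_eq, sum_sub_distrib, add_sub_assoc, continuationValue_zero] using heq
  · have heq := hsol.principal_utility_eq hUp hℱ hrel hΘ hβ hhmeas hhT W0 fun t ht =>
      principal_step_continuationValue hUa hUp hℱ hrel hcm hβ hA hΓ hhmeas R ht (hattain t ht)
    simpa only [contractPay_eq, continuationValue_zero] using heq
  · filter_upwards [hsol''.principal_utility_le hUp hℱ hrel hΘ'' hβ'' hhmeas hhT W0
      fun t ht => hsol''.principal_step_le ht
        (hdomin t ht _ (hβ'' t ht) _ _ (hsol''.memIC hℱ hrel hβ'' ht)), hIR] with ω hle hR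
    exact hle.trans (EReal.coe_le_coe_iff.mpr (by linarith))

/-- (Theorem 2.5 of the paper.)  Assume the Agent's recursion and the
Principal's recursion admit solutions with all essential suprema attained at every
`t ∈ {0,…,T−1}`.  Then the Principal's optimal time-0 utility over incentive-compatible and
individually rational contracts equals `W₀ − R + h₀`.  Moreover, for maximizers
`(β_t, A_t, Γ_{t+1})_{t<T}` of the Principal's recursion and
`Θ := Σ_{t<T} [Γ_{t+1} − Uᵃ_t(Γ_{t+1}) + c_t(A_t)]`, the contract
`S(Ā) = R + Θ + Σ_{t<T} β_t (ΔW^Ā_{t+1} − A_t·ΔP̃_{t+1})` is optimal for the Principal among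
incentive-compatible and individually rational contracts, the Agent's optimal effort under
this contract is `A = (A_t)`, and his optimal time-0 utility equals `R`. -/
theorem principal_agent_dynamic_solution
    {m0 : MeasurableSpace Ω} (μ : Measure Ω) [IsProbabilityMeasure μ]
    (T N : ℕ) (hT : 0 < T)
    (ℱ : ℕ → MeasurableSpace Ω) (hmono : ∀ s t, s ≤ t → ℱ s ≤ ℱ t) (hFT : ℱ T ≤ m0)
    -- the price process: strictly positive, generating the filtration, `E[P_{t+1}|ℱ_t]` finite
    (P : ℕ → Ω → Fin N → ℝ)
    (hPgen : ∀ t ≤ T, ℱ t = ⨆ s ∈ Set.Iic t,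
      MeasurableSpace.comap (fun ω => P s ω) inferInstance)
    (hPadapted : ∀ t ≤ T, Measurable[ℱ t] (P t))
    (hPpos : ∀ t ≤ T, ∀ᵐ ω ∂μ, ∀ i, 0 < P t ω i)
    (hPint : ∀ t < T, ∀ i, MemCondL1 μ (ℱ t) (fun ω => P (t + 1) ω i))
    -- strictly convex costs
    (c : ℕ → (Fin N → ℝ) → ℝ) (hc : ∀ t < T, StrictConvexOn ℝ Set.univ (c t))
    -- the Agent's and the Principal's utility families satisfy the usual conditions
    (Ua Up : ℕ → (Ω → ℝ) → Ω → EReal)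
    (hUa : UsualFamily μ ℱ T Ua) (hUp : UsualFamily μ ℱ T Up)
    (W0 R : ℝ)
    -- a solution `h` of the Principal's recursion, with maximizers `(β_t, A_t, Γ_{t+1})`:
    (h : ℕ → Ω → ℝ) (hhmeas : ∀ t ≤ T, Measurable[ℱ t] (h t))
    (hhT : h T =ᵐ[μ] fun _ => (0 : ℝ))
    (β : ℕ → Ω → ℝ) (A : ℕ → Ω → Fin N → ℝ) (Γ : ℕ → Ω → ℝ)
    (hβ : ∀ t < T, Measurable[ℱ t] (β t))
    (hA : ∀ t < T, Measurable[ℱ t] (A t))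
    (hΓ : ∀ t < T, Measurable[ℱ (t + 1)] (Γ (t + 1)))
    (hfeas : ∀ t, t < T → MemIC μ ℱ P Ua c t (β t) (A t) (Γ (t + 1)))
    (hdomin : ∀ t, t < T → ∀ b : Ω → ℝ, Measurable[ℱ t] b →
      ∀ a : Ω → Fin N → ℝ, ∀ g : Ω → ℝ, MemIC μ ℱ P Ua c t b a g →
      ∀ᵐ ω ∂μ, principalVal P Ua Up c h t a g ω ≤ ((h t ω : ℝ) : EReal))
    (hattain : ∀ t, t < T →
      ∀ᵐ ω ∂μ, principalVal P Ua Up c h t (A t) (Γ (t + 1)) ω = ((h t ω : ℝ) : EReal)) :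
    -- with `Θ := Σ_{t<T} [Γ_{t+1} − Uᵃ_t(Γ_{t+1}) + c_t(A_t)]` and the contract
    -- `S(Ā) := R + Θ + Σ_{t<T} β_t (ΔW^Ā_{t+1} − A_t·ΔP̃_{t+1})`:
    (fun Θ : Ω → ℝ => fun S : (ℕ → Ω → Fin N → ℝ) → Ω → ℝ =>
      -- (1) `S`, written in standard lump-sum form, is incentive compatible with
      --     recommended effort `A`, and the Agent's optimal time-0 utility equals `R`
      --     (so the individual rationality constraint binds);
      ((∃ H : ℕ → Ω → ℝ,
          AgentSolution μ ℱ T P Ua c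
            (fun ω => R + Θ ω - ∑ t ∈ Finset.range T,
              β t ω * ∑ i, A t ω i * relIncr P t i ω) β H A ∧
          H 0 =ᵐ[μ] fun _ => R) ∧
      -- (2) the Agent's optimal effort under `S` is `A`, with optimal time-0 utility `R`:
      --     any adapted effort `Ā` gives him at most `R`, and `A` attains `R`;
      (∀ Abar : ℕ → Ω → Fin N → ℝ, (∀ t < T, Measurable[ℱ t] (Abar t)) →
        ∀ᵐ ω ∂μ,
          Ua 0 (fun ω' => S Abar ω' - ∑ t ∈ Finset.range T, c t (Abar t ω')) ω ≤
            ((R : ℝ) : EReal)) ∧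
      (∀ᵐ ω ∂μ,
        Ua 0 (fun ω' => S A ω' - ∑ t ∈ Finset.range T, c t (A t ω')) ω =
          ((R : ℝ) : EReal)) ∧
      -- (3) the Principal's time-0 utility from `S` (with the Agent playing `A`) equals
      --     `W₀ − R + h₀`;
      (∀ᵐ ω ∂μ,
        Up 0 (fun ω' => wealth P W0 A T ω' - S A ω') ω =
          ((W0 - R + h 0 ω : ℝ) : EReal)) ∧
      -- (4) `S` is optimal: every incentive-compatible and individually rational contract
      --     `(Θ'', β'')`, under the corresponding Agent-optimal effort, gives the Principal
      --     a time-0 utility of at most `W₀ − R + h₀`.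
      (∀ Θ'' : Ω → ℝ, Measurable[ℱ T] Θ'' →
        ∀ β'' : ℕ → Ω → ℝ, (∀ t < T, Measurable[ℱ t] (β'' t)) →
        ∀ H'' : ℕ → Ω → ℝ, ∀ Ahat'' : ℕ → Ω → Fin N → ℝ,
        AgentSolution μ ℱ T P Ua c Θ'' β'' H'' Ahat'' →
        (∀ᵐ ω ∂μ, R ≤ H'' 0 ω) →
        ∀ᵐ ω ∂μ,
          Up 0 (fun ω' => wealth P W0 Ahat'' T ω' -
              (Θ'' ω' + ∑ t ∈ Finset.range T,
                β'' t ω' * ∑ i, Ahat'' t ω' i * relIncr P t i ω')) ω ≤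
            ((W0 - R + h 0 ω : ℝ) : EReal))))
      (fun ω => ∑ t ∈ Finset.range T,
        (Γ (t + 1) ω - (Ua t (Γ (t + 1)) ω).toReal + c t (A t ω)))
      (contractPay P T R
        (fun ω => ∑ t ∈ Finset.range T,
          (Γ (t + 1) ω - (Ua t (Γ (t + 1)) ω).toReal + c t (A t ω))) β A) :=
  principal_agent_dynamic_solution_general (m0 := m0) μ T N ℱ hmono P hPadapted c hc Ua Up hUa hUp
    W0 R h hhmeas hhT β A Γ hβ hA hΓ hfeas hdomin hattain
end

section
/- Let N, d ∈ ℕ, μ ∈ ℝ^N, σ an N×d real matrix, β ∈ ℝ with β > 0, vectors u, v ∈ ℝ^d, w ∈ ℝ^N, λ ∈ ℝ^N, a symmetric negative semidefinite matrix G ∈ ℝ^{d×d} and a symmetric positive definite matrix M ∈ ℝ^{N×N}. Suppose the first-order Lagrangian system holds: (i) βμ − w + βσu = 0; (ii) μ − w + σv − Mλ = 0; (iii) u − v + βGσᵀλ = 0; (iv) λ·(μ + σu) = 0. Then λ = 0. -/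
open Matrix

theorem Matrix.PosDef.eq_zero_of_dotProduct_mulVec_nonpos {n R : Type*} [Fintype n] [Ring R]
    [PartialOrder R] [StarRing R] {M : Matrix n n R} (hM : M.PosDef) {x : n → R}
    (hx : star x ⬝ᵥ M *ᵥ x ≤ 0) : x = 0 := by
  by_contra hx0
  exact (hM.dotProduct_mulVec_pos hx0).not_ge hx

theorem Matrix.PosSemidef.dotProduct_mulVec_nonpos_of_neg {n R : Type*} [Fintype n] [Ring R]
    [PartialOrder R] [IsOrderedAddMonoid R] [StarRing R] {G : Matrix n n R} (hG : (-G).PosSemidef)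
    (x : n → R) : star x ⬝ᵥ G *ᵥ x ≤ 0 := by
  simpa only [neg_mulVec, dotProduct_neg, neg_nonneg] using hG.dotProduct_mulVec_nonneg x

/-- Condition (i) and the complementarity (iv) make `λ ⬝ᵥ w` vanish, and (iii) turns
`σᵀλ ⬝ᵥ v` into `σᵀλ ⬝ᵥ u + β (σᵀλ ⬝ᵥ G σᵀλ)`. -/
theorem dotProduct_mulVec_eq_of_first_order_conditions {m n R : Type*} [Fintype m] [Fintype n]
    [CommRing R] {μv w lam : m → R} {u v : n → R} {σ : Matrix m n R} {G : Matrix n n R}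
    {M : Matrix m m R} {β : R}
    (h1 : β • μv - w + β • σ *ᵥ u = 0)
    (h2 : μv - w + σ *ᵥ v - M *ᵥ lam = 0)
    (h3 : u - v + β • G *ᵥ (σᵀ *ᵥ lam) = 0)
    (h4 : lam ⬝ᵥ (μv + σ *ᵥ u) = 0) :
    lam ⬝ᵥ M *ᵥ lam = β * ((σᵀ *ᵥ lam) ⬝ᵥ G *ᵥ (σᵀ *ᵥ lam)) := by
  have hw : w = β • μv + β • σ *ᵥ u := by linear_combination (norm := module) -h1
  have hMlam : M *ᵥ lam = μv - w + σ *ᵥ v := by linear_combination (norm := module) -h2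
  have hv : v = u + β • G *ᵥ (σᵀ *ᵥ lam) := by linear_combination (norm := module) -h3
  rw [hMlam, hw, hv]
  simp only [dotProduct_add, dotProduct_sub, dotProduct_smul, smul_eq_mul, mulVec_add,
    mulVec_smul, dotProduct_mulVec, mulVec_transpose] at h4 ⊢
  linear_combination (1 - β) * h4

/-- In the Markovian Principal–Agent problem, any Lagrange multiplier `λ` of
the incentive-compatibility constraint must vanish when `β > 0`.  Here `u = ∇gᵃ(γ)`,
`v = ∇gᵖ(σᵀA − γ)` are gradients of the Agent's and Principal's concave generators,
`w = ∇c(A)` is the gradient of the strictly convex cost, `G = ∇²gᵃ(γ)` is symmetric negative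
semidefinite and `M = ∇²c(A)` is symmetric positive definite.  The first-order Lagrangian
system (i) `βμ − w + βσu = 0`, (ii) `μ − w + σv − Mλ = 0`, (iii) `u − v + βGσᵀλ = 0`,
(iv) `λ·(μ + σu) = 0` forces `λ = 0`. -/
theorem lagrange_multiplier_vanishes {N d : ℕ}
    (μv w : Fin N → ℝ) (σ : Matrix (Fin N) (Fin d) ℝ) (β : ℝ) (hβ : 0 < β)
    (u v : Fin d → ℝ) (lam : Fin N → ℝ)
    (G : Matrix (Fin d) (Fin d) ℝ) (M : Matrix (Fin N) (Fin N) ℝ)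
    (hG : (-G).PosSemidef) (hM : M.PosDef)
    (h1 : β • μv - w + β • σ.mulVec u = 0)
    (h2 : μv - w + σ.mulVec v - M.mulVec lam = 0)
    (h3 : u - v + β • G.mulVec (σ.transpose.mulVec lam) = 0)
    (h4 : dotProduct lam (μv + σ.mulVec u) = 0) :
    lam = 0 := by
  apply hM.eq_zero_of_dotProduct_mulVec_nonpos
  rw [star_trivial, dotProduct_mulVec_eq_of_first_order_conditions h1 h2 h3 h4]
  exact mul_nonpos_of_nonneg_of_nonpos hβ.le (hG.dotProduct_mulVec_nonpos_of_neg _)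
end

section
/- Let (x_n) be a sequence in L^0(ℱ) such that x := limsup_n x_n is finite a.s. Then there exists a sequence (N_n) of ℕ-valued ℱ-measurable random variables with N_{n+1} > N_n a.s. for every n, such that x_{N_n} → x a.s. as n → ∞, where x_N denotes the random variable ω ↦ x_{N(ω)}(ω). -/
open MeasureTheory Filter
open scoped Classical

section Aux

variable {Ω : Type*}

/-- Auxiliary recursive choice of indices. -/
noncomputable def nIdx (f : ℕ → Ω → ℝ) (x : Ω → ℝ) : ℕ → Ω → ℕ
  | 0, ω => if h : ∃ k, 0 < k ∧ |f k ω - x ω| < 1 / ((0 : ℕ) + 1 : ℝ) then Nat.find h else 1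
  | n + 1, ω =>
      if h : ∃ k, nIdx f x n ω < k ∧ |f k ω - x ω| < 1 / ((n + 1 : ℕ) + 1 : ℝ) then Nat.find h
      else nIdx f x n ω + 1

lemma nIdx_lt_succ (f : ℕ → Ω → ℝ) (x : Ω → ℝ) (n : ℕ) (ω : Ω) :
    nIdx f x n ω < nIdx f x (n + 1) ω := by
  rw [nIdx]
  split_ifs with h
  · exact (Nat.find_spec h).1
  · exact Nat.lt_succ_self _

lemma nIdx_close (f : ℕ → Ω → ℝ) (x : Ω → ℝ) {ω : Ω}
    (hω : ∀ (ε : ℝ), 0 < ε → ∀ p : ℕ, ∃ k, p < k ∧ |f k ω - x ω| < ε) (n : ℕ) :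
    |f (nIdx f x n ω) ω - x ω| < 1 / ((n : ℕ) + 1 : ℝ) := by
  have hpos : (0 : ℝ) < 1 / ((n : ℕ) + 1 : ℝ) := by positivity
  cases n with
  | zero =>
      rw [nIdx, dif_pos (hω _ hpos 0)]
      exact (Nat.find_spec (hω _ hpos 0)).2
  | succ m =>
      have hpos' : (0 : ℝ) < 1 / (((m + 1 : ℕ)) + 1 : ℝ) := by positivity
      rw [nIdx, dif_pos (hω _ hpos' (nIdx f x m ω))]
      exact (Nat.find_spec (hω _ hpos' (nIdx f x m ω))).2

lemma meas_step {F : MeasurableSpace Ω} {f : ℕ → Ω → ℝ} {x : Ω → ℝ}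
    (hf : ∀ n, Measurable[F] (f n)) (hx : Measurable[F] x) (c : ℝ) (p : ℕ) :
    Measurable[F] fun ω =>
      if h : ∃ k, p < k ∧ |f k ω - x ω| < c then Nat.find h else p + 1 := by
  have hA : ∀ k : ℕ, MeasurableSet[F] {ω | p < k ∧ |f k ω - x ω| < c} := by
    intro k
    have : {ω | p < k ∧ |f k ω - x ω| < c}
        = {ω : Ω | p < k} ∩ {ω | |f k ω - x ω| < c} := by ext ω; simp [Set.mem_setOf_eq]
    rw [this]
    exact (MeasurableSet.const _).inter
      (measurableSet_lt ((hf k).sub hx).abs measurable_const)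
  apply measurable_to_countable'
  intro m
  have hset : (fun ω =>
      if h : ∃ k, p < k ∧ |f k ω - x ω| < c then Nat.find h else p + 1) ⁻¹' {m}
      = ((⋂ k, ⋂ _ : k < m, {ω | p < k ∧ |f k ω - x ω| < c}ᶜ)
            ∩ {ω | p < m ∧ |f m ω - x ω| < c}
        ∪ if m = p + 1 then ⋂ k, {ω | p < k ∧ |f k ω - x ω| < c}ᶜ else ∅) := by
    ext ω
    simp only [Set.mem_preimage, Set.mem_singleton_iff, Set.mem_union, Set.mem_inter_iff,
      Set.mem_iInter, Set.mem_compl_iff, Set.mem_setOf_eq]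
    by_cases h : ∃ k, p < k ∧ |f k ω - x ω| < c
    · rw [dif_pos h]
      constructor
      · intro hm
        left
        subst hm
        exact ⟨fun k hk => Nat.find_min h hk, Nat.find_spec h⟩
      · rintro (⟨h2, h1⟩ | h2)
        · exact (Nat.find_eq_iff h).2 ⟨h1, fun k hk => h2 k hk⟩
        · obtain ⟨k, hk⟩ := h
          by_cases hm : m = p + 1
          · rw [if_pos hm] at h2
            simp only [Set.mem_iInter, Set.mem_compl_iff, Set.mem_setOf_eq] at h2
            exact absurd hk (h2 k)
          · rw [if_neg hm] at h2; exact absurd h2 (Set.notMem_empty ω)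
    · rw [dif_neg h]
      push_neg at h
      constructor
      · intro hm
        right
        rw [if_pos hm.symm]
        simp only [Set.mem_iInter, Set.mem_compl_iff, Set.mem_setOf_eq]
        intro k hk
        exact absurd hk.2 (not_lt.2 (h k hk.1))
      · rintro (⟨_, h1⟩ | h2)
        · exact absurd h1.2 (not_lt.2 (h m h1.1))
        · by_cases hm : m = p + 1
          · exact hm.symm
          · rw [if_neg hm] at h2; exact absurd h2 (Set.notMem_empty ω)
  rw [hset]
  apply MeasurableSet.union
  · exact (MeasurableSet.iInter fun k => MeasurableSet.iInter fun _ =>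
      (hA k).compl).inter (hA m)
  · split_ifs
    · exact MeasurableSet.iInter fun k => (hA k).compl
    · exact MeasurableSet.empty

lemma meas_comp {F : MeasurableSpace Ω} {g : Ω → ℕ} (hg : Measurable[F] g)
    {h : ℕ → Ω → ℕ} (hh : ∀ p, Measurable[F] (h p)) :
    Measurable[F] fun ω => h (g ω) ω := by
  apply measurable_to_countable'
  intro m
  have : (fun ω => h (g ω) ω) ⁻¹' {m} = ⋃ p, (g ⁻¹' {p}) ∩ (h p ⁻¹' {m}) := by
    ext ω
    simp only [Set.mem_preimage, Set.mem_singleton_iff, Set.mem_iUnion, Set.mem_inter_iff]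
    exact ⟨fun hm => ⟨g ω, rfl, hm⟩, by rintro ⟨p, rfl, hm⟩; exact hm⟩
  rw [this]
  exact MeasurableSet.iUnion fun p =>
    (hg (measurableSet_singleton p)).inter ((hh p) (measurableSet_singleton m))

lemma nIdx_measurable {F : MeasurableSpace Ω} {f : ℕ → Ω → ℝ} {x : Ω → ℝ}
    (hf : ∀ n, Measurable[F] (f n)) (hx : Measurable[F] x) (n : ℕ) :
    Measurable[F] (nIdx f x n) := by
  induction n with
  | zero =>
      have h1 := meas_step (F := F) hf hx (1 / ((0 : ℕ) + 1 : ℝ)) 0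
      have h2 : nIdx f x 0 = fun ω =>
          if h : ∃ k, 0 < k ∧ |f k ω - x ω| < 1 / ((0 : ℕ) + 1 : ℝ) then Nat.find h
          else 0 + 1 := by
        funext ω; rw [nIdx]
      rw [h2]; exact h1
  | succ m ih =>
      have h2 : (nIdx f x (m + 1)) = fun ω =>
          (fun p w => if h : ∃ k, p < k ∧ |f k w - x w| < 1 / ((m + 1 : ℕ) + 1 : ℝ)
            then Nat.find h else p + 1) (nIdx f x m ω) ω := by
        funext ω; rw [nIdx]
      rw [h2]
      exact meas_comp ih fun p => meas_step hf hx _ p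

end Aux

/-- (Conditional Bolzano–Weierstrass along the limit superior.)
Let `(x_n)` be a sequence in `L⁰(ℱ)` such that `x := limsup_n x_n` is (a.s.) finite.  Then
there is a sequence `(N_n)` of `ℕ`-valued `ℱ`-measurable random variables with
`N_{n+1} > N_n` a.s. for every `n`, such that `x_{N_n} → x` a.s., where `x_N` denotes the
random variable `ω ↦ x_{N(ω)}(ω)`. -/
theorem exists_measurable_random_subsequence_tendsto_limsup
    {Ω : Type*} {m0 : MeasurableSpace Ω} (μ : Measure Ω) [IsProbabilityMeasure μ]
    (F : MeasurableSpace Ω) (hF : F ≤ m0)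
    (f : ℕ → Ω → ℝ) (hf : ∀ n, Measurable[F] (f n))
    (x : Ω → ℝ) (hx : Measurable[F] x)
    (hlim : ∀ᵐ ω ∂μ,
      Filter.limsup (fun n => ((f n ω : ℝ) : EReal)) Filter.atTop = ((x ω : ℝ) : EReal)) :
    ∃ N : ℕ → Ω → ℕ,
      (∀ n, Measurable[F] (N n)) ∧
      (∀ n, ∀ᵐ ω ∂μ, N n ω < N (n + 1) ω) ∧
      (∀ᵐ ω ∂μ, Filter.Tendsto (fun n => f (N n ω) ω) Filter.atTop (nhds (x ω))) := by
  refine ⟨nIdx f x, fun n => nIdx_measurable hf hx n,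
    fun n => Filter.Eventually.of_forall fun ω => nIdx_lt_succ f x n ω, ?_⟩
  filter_upwards [hlim] with ω hω
  have hfreq : ∀ (ε : ℝ), 0 < ε → ∀ p : ℕ, ∃ k, p < k ∧ |f k ω - x ω| < ε := by
    intro ε hε p
    have h1 : ∀ᶠ k in atTop, ((f k ω : ℝ) : EReal) < ((x ω + ε : ℝ) : EReal) :=
      eventually_lt_of_limsup_lt
        (by rw [hω]; exact_mod_cast (by linarith : x ω < x ω + ε))
    have h2 : ∃ᶠ k in atTop, ((x ω - ε : ℝ) : EReal) < ((f k ω : ℝ) : EReal) :=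
      frequently_lt_of_lt_limsup (by isBoundedDefault)
        (by rw [hω]; exact_mod_cast (by linarith : x ω - ε < x ω))
    have h3 : ∃ᶠ k in atTop, |f k ω - x ω| < ε := by
      refine (h2.and_eventually h1).mono ?_
      rintro k ⟨hk2, hk1⟩
      have hk2' : x ω - ε < f k ω := by exact_mod_cast hk2
      have hk1' : f k ω < x ω + ε := by exact_mod_cast hk1
      rw [abs_lt]; constructor <;> linarith
    obtain ⟨k, hk, hk2⟩ := (frequently_atTop.mp h3) (p + 1)
    exact ⟨k, by omega, hk2⟩
  have hclose := nIdx_close f x hfreq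
  have h0 : Filter.Tendsto (fun n : ℕ => 1 / ((n : ℝ) + 1)) atTop (nhds 0) :=
    tendsto_one_div_add_atTop_nhds_zero_nat
  apply tendsto_iff_dist_tendsto_zero.2
  apply squeeze_zero (fun n => dist_nonneg) (fun n => ?_) h0
  rw [Real.dist_eq]
  exact le_of_lt (by simpa using hclose n)
end

section
/- Let C be a sequentially closed, L^0-convex subset of (L^0(ℱ))^N containing 0. Then C is L^0-bounded if and only if for every X ∈ C with P(X ≠ 0) > 0 there exists k ∈ ℕ such that kX ∉ C. -/
open MeasureTheory Filter

section helpers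

lemma nat_set_infinite_iff {S : Set ℕ} : S.Infinite ↔ ∀ m, ∃ n, m ≤ n ∧ n ∈ S := by
  constructor
  · intro h m
    obtain ⟨b, hb, hmb⟩ := h.exists_gt m
    exact ⟨b, hmb.le, hb⟩
  · intro h
    intro hfin
    obtain ⟨b, hb⟩ := hfin.bddAbove
    obtain ⟨n, hmn, hnS⟩ := h (b+1)
    exact absurd (hb hnS) (by omega)

lemma nat_sInf_eq_iff {S : Set ℕ} {j : ℕ} :
    sInf S = j ↔ (j ∈ S ∧ ∀ i < j, i ∉ S) ∨ (j = 0 ∧ ∀ n, n ∉ S) := by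
  constructor
  · intro h
    rcases S.eq_empty_or_nonempty with he | hne
    · right
      subst he
      simp only [Nat.sInf_empty] at h
      exact ⟨h.symm, by simp⟩
    · left
      subst h
      exact ⟨Nat.sInf_mem hne, fun i hi => Nat.notMem_of_lt_sInf hi⟩
  · rintro (⟨hj, hlt⟩ | ⟨hj, hall⟩)
    · refine le_antisymm (Nat.sInf_le hj) ?_
      by_contra hc
      push_neg at hc
      exact hlt _ hc (Nat.sInf_mem ⟨j, hj⟩)
    · subst hj
      have : S = ∅ := Set.eq_empty_iff_forall_notMem.2 hall
      simp [this]

variable {Ω : Type*} {F : MeasurableSpace Ω}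

lemma measurable_nat_sInf {p : ℕ → Ω → Prop} (hp : ∀ n, MeasurableSet[F] {ω | p n ω}) :
    Measurable[F] (fun ω => sInf {n | p n ω}) := by
  apply measurable_to_countable'
  intro j
  have : (fun ω => sInf {n | p n ω}) ⁻¹' {j} =
      ({ω | p j ω} ∩ ⋂ i ∈ Set.Iio j, {ω | p i ω}ᶜ) ∪
      ((if j = 0 then Set.univ else ∅) ∩ ⋂ n, {ω | p n ω}ᶜ) := by
    ext ω
    simp only [Set.mem_preimage, Set.mem_singleton_iff, Set.mem_union, Set.mem_inter_iff,
      Set.mem_iInter, Set.mem_compl_iff, Set.mem_setOf_eq, nat_sInf_eq_iff]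
    constructor
    · rintro (⟨h1, h2⟩ | ⟨h1, h2⟩)
      · exact Or.inl ⟨h1, fun i hi => h2 i hi⟩
      · exact Or.inr ⟨by simp [h1], h2⟩
    · rintro (⟨h1, h2⟩ | ⟨h1, h2⟩)
      · exact Or.inl ⟨h1, fun i hi => h2 i hi⟩
      · refine Or.inr ⟨?_, h2⟩
        by_cases hj : j = 0
        · exact hj
        · simp [hj] at h1
  rw [this]
  refine MeasurableSet.union ?_ ?_
  · exact (hp j).inter (MeasurableSet.biInter (Set.to_countable _) (fun i _ => (hp i).compl))
  · refine MeasurableSet.inter ?_ (MeasurableSet.iInter (fun n => (hp n).compl))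
    split <;> simp

lemma measurable_nat_glue {E : Type*} [MeasurableSpace E] {W : ℕ → Ω → E}
    (hWm : ∀ n, Measurable[F] (W n)) {τ : Ω → ℕ} (hτ : Measurable[F] τ) :
    Measurable[F] (fun ω => W (τ ω) ω) := by
  intro s hs
  have : (fun ω => W (τ ω) ω) ⁻¹' s = ⋃ n, (τ ⁻¹' {n} ∩ (W n) ⁻¹' s) := by
    ext ω
    simp only [Set.mem_preimage, Set.mem_iUnion, Set.mem_inter_iff, Set.mem_singleton_iff]
    constructor
    · intro h; exact ⟨τ ω, rfl, h⟩
    · rintro ⟨n, hn, h⟩; rwa [hn]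
  rw [this]
  exact MeasurableSet.iUnion fun n =>
    (hτ (MeasurableSet.singleton n)).inter (hWm n hs)

end helpers
section BW

variable {Ω : Type*} {F : MeasurableSpace Ω} {N : ℕ}

local notation "E" => EuclideanSpace ℝ (Fin N)

lemma measurableSet_infinite {p : ℕ → Ω → Prop}
    (hp : ∀ n, MeasurableSet[F] {ω | p n ω}) :
    MeasurableSet[F] {ω | {n | p n ω}.Infinite} := by
  have : {ω | {n | p n ω}.Infinite} = ⋂ m, ⋃ n, ⋃ (_ : m ≤ n), {ω | p n ω} := by
    ext ω
    simp only [Set.mem_setOf_eq, nat_set_infinite_iff, Set.mem_iInter, Set.mem_iUnion,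
      exists_prop]
  rw [this]
  exact MeasurableSet.iInter fun m => MeasurableSet.iUnion fun n =>
    MeasurableSet.iUnion fun _ => hp n

/-- Measurable Bolzano–Weierstrass: a measurable selection of a cluster point of a
uniformly bounded sequence of measurable functions. -/
lemma exists_measurable_cluster_point {U : ℕ → Ω → E}
    (hU : ∀ n, Measurable[F] (U n)) (hUb : ∀ n ω, ‖U n ω‖ ≤ 1) :
    ∃ L : Ω → E, Measurable[F] L ∧
      ∀ ω, ∀ ε > 0, ∀ m : ℕ, ∃ n, m ≤ n ∧ dist (U n ω) (L ω) < ε := by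
  classical
  obtain ⟨q, hq⟩ : ∃ q : ℕ → E, DenseRange q :=
    ⟨TopologicalSpace.denseSeq E, TopologicalSpace.denseRange_denseSeq E⟩
  set r : ℕ → ℝ := fun k => (2:ℝ)⁻¹ ^ (k+1) with hr
  have hrpos : ∀ k, 0 < r k := fun k => pow_pos (by norm_num) _
  -- the recursive nested index sets
  let S : ℕ → Ω → Set ℕ := fun k => Nat.rec (fun _ => Set.univ)
    (fun k Sk ω => Sk ω ∩ {n | dist (U n ω)
      (q (sInf {i | (Sk ω ∩ {n | dist (U n ω) (q i) < r k}).Infinite})) < r k}) k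
  let idx : ℕ → Ω → ℕ := fun k ω =>
    sInf {i | (S k ω ∩ {n | dist (U n ω) (q i) < r k}).Infinite}
  have hSsucc : ∀ k ω, S (k+1) ω
      = S k ω ∩ {n | dist (U n ω) (q (idx k ω)) < r k} := fun _ _ => rfl
  -- covering lemma
  have hcover : ∀ (ω : Ω) (T : Set ℕ), T.Infinite → ∀ ρ : ℝ, 0 < ρ →
      ∃ i, (T ∩ {n | dist (U n ω) (q i) < ρ}).Infinite := by
    intro ω T hT ρ hρ
    have hcomp : IsCompact (Metric.closedBall (0:E) 1) := isCompact_closedBall _ _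
    have hcov : Metric.closedBall (0:E) 1 ⊆ ⋃ i, Metric.ball (q i) ρ := by
      intro x _
      obtain ⟨i, hi⟩ := (Metric.denseRange_iff.1 hq) x ρ hρ
      exact Set.mem_iUnion.2 ⟨i, by simpa [Metric.mem_ball, dist_comm] using hi⟩
    obtain ⟨t, ht⟩ := hcomp.elim_finite_subcover (fun i => Metric.ball (q i) ρ)
      (fun i => Metric.isOpen_ball) hcov
    by_contra hc
    push_neg at hc
    have : T ⊆ ⋃ i ∈ t, (T ∩ {n | dist (U n ω) (q i) < ρ}) := by
      intro n hn
      have hmem : U n ω ∈ Metric.closedBall (0:E) 1 := by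
        simpa [Metric.mem_closedBall, dist_eq_norm] using hUb n ω
      obtain ⟨i, hit, hi⟩ := Set.mem_iUnion₂.1 (ht hmem)
      exact Set.mem_iUnion₂.2 ⟨i, hit, hn, by simpa [Metric.mem_ball] using hi⟩
    exact hT (Set.Finite.subset (t.finite_toSet.biUnion (fun i _ => hc i)) this)
  -- the invariant: all the S k ω are infinite
  have hSinf : ∀ k ω, (S k ω).Infinite := by
    intro k
    induction k with
    | zero => exact fun ω => Set.infinite_univ
    | succ k ih =>
      intro ω
      have hne : {i | (S k ω ∩ {n | dist (U n ω) (q i) < r k}).Infinite}.Nonempty := by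
        obtain ⟨i, hi⟩ := hcover ω (S k ω) (ih ω) (r k) (hrpos k)
        exact ⟨i, hi⟩
      have := Nat.sInf_mem hne
      rw [hSsucc]
      exact this
  -- measurability of membership and of idx
  have hmeasS : ∀ k, (∀ n, MeasurableSet[F] {ω | n ∈ S k ω}) ∧ Measurable[F] (idx k) := by
    intro k
    induction k with
    | zero =>
      have hS0meas : ∀ n, MeasurableSet[F] {ω | n ∈ S 0 ω} := fun n => MeasurableSet.univ
      refine ⟨hS0meas, ?_⟩
      apply measurable_nat_sInf
      intro i
      have : {ω | (S 0 ω ∩ {n | dist (U n ω) (q i) < r 0}).Infinite}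
          = {ω | {n | n ∈ S 0 ω ∧ dist (U n ω) (q i) < r 0}.Infinite} := by
        ext ω
        rfl
      rw [this]
      exact measurableSet_infinite fun n => (hS0meas n).inter
        (measurableSet_lt ((hU n).dist measurable_const) measurable_const)
    | succ k ih =>
      obtain ⟨ihS, ihidx⟩ := ih
      have hmem : ∀ n, MeasurableSet[F] {ω | n ∈ S (k+1) ω} := by
        intro n
        have : {ω | n ∈ S (k+1) ω}
            = {ω | n ∈ S k ω} ∩ {ω | dist (U n ω) (q (idx k ω)) < r k} := by
          ext ω; rw [Set.mem_setOf_eq, hSsucc]; rfl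
        rw [this]
        refine (ihS n).inter ?_
        have hqidx : Measurable[F] (fun ω => q (idx k ω)) :=
          (measurable_from_nat (f := q)).comp ihidx
        exact measurableSet_lt ((hU n).dist hqidx) measurable_const
      refine ⟨hmem, ?_⟩
      apply measurable_nat_sInf
      intro i
      have : {ω | (S (k+1) ω ∩ {n | dist (U n ω) (q i) < r (k+1)}).Infinite}
          = {ω | {n | n ∈ S (k+1) ω ∧ dist (U n ω) (q i) < r (k+1)}.Infinite} := by
        ext ω
        rfl
      rw [this]
      exact measurableSet_infinite fun n => (hmem n).inter
        (measurableSet_lt ((hU n).dist measurable_const) measurable_const)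
  -- properties of the centers
  have hanti : ∀ k ω, S (k+1) ω ⊆ S k ω := by
    intro k ω; rw [hSsucc]; exact Set.inter_subset_left
  have hanti' : ∀ k k', k ≤ k' → ∀ ω, S k' ω ⊆ S k ω := by
    intro k k' hkk' ω
    induction k' with
    | zero => have : k = 0 := by omega
              subst this; exact subset_rfl
    | succ k' ih =>
      rcases Nat.lt_or_ge k (k'+1) with h | h
      · exact (ih (by omega)).trans' (hanti k' ω) |>.trans subset_rfl
      · have : k = k' + 1 := by omega
        subst this; exact subset_rfl
  have hball : ∀ k ω n, n ∈ S (k+1) ω → dist (U n ω) (q (idx k ω)) < r k := by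
    intro k ω n hn
    rw [hSsucc] at hn
    exact hn.2
  -- distance between consecutive centers
  have hcent : ∀ (k k' : ℕ) (ω : Ω), k ≤ k' →
      dist (q (idx k ω)) (q (idx k' ω)) ≤ r k + r k' := by
    intro k k' ω hkk'
    obtain ⟨n, hn⟩ := (hSinf (k'+1) ω).nonempty
    have h1 : dist (U n ω) (q (idx k' ω)) < r k' := hball k' ω n hn
    have h2 : dist (U n ω) (q (idx k ω)) < r k :=
      hball k ω n (hanti' (k+1) (k'+1) (by omega) ω hn)
    calc dist (q (idx k ω)) (q (idx k' ω))
        ≤ dist (q (idx k ω)) (U n ω) + dist (U n ω) (q (idx k' ω)) := dist_triangle _ _ _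
      _ ≤ r k + r k' := by rw [dist_comm (q (idx k ω))]; linarith
  have hrle : ∀ k k', k ≤ k' → r k' ≤ r k := by
    intro k k' h
    exact pow_le_pow_of_le_one (by norm_num) (by norm_num) (by omega)
  -- Cauchy
  have hcauchy : ∀ ω, CauchySeq (fun k => q (idx k ω)) := by
    intro ω
    apply cauchySeq_of_le_geometric (r := (2:ℝ)⁻¹) (C := 2)
    · norm_num
    · intro k
      calc dist (q (idx k ω)) (q (idx (k+1) ω)) ≤ r k + r (k+1) := hcent k (k+1) ω (by omega)
        _ ≤ r k + r k := by linarith [hrle k (k+1) (by omega)]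
        _ = 2 * ((2:ℝ)⁻¹ ^ k * (2:ℝ)⁻¹) := by rw [hr]; ring_nf
        _ = 2 * (2:ℝ)⁻¹ ^ k * (2:ℝ)⁻¹ := by ring
        _ ≤ 2 * (2:ℝ)⁻¹ ^ k := by
            nlinarith [pow_pos (show (0:ℝ) < 2⁻¹ by norm_num) k]
  have hLex : ∀ ω, ∃ x : E, Tendsto (fun k => q (idx k ω)) atTop (nhds x) :=
    fun ω => cauchySeq_tendsto_of_complete (hcauchy ω)
  choose L hL using hLex
  have hLmeas : Measurable[F] L := by
    apply measurable_of_tendsto_metrizable (f := fun k ω => q (idx k ω))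
    · intro k
      exact Measurable.comp (measurable_from_nat (f := q)) (hmeasS k).2
    · rw [tendsto_pi_nhds]; exact hL
  refine ⟨L, hLmeas, ?_⟩
  intro ω ε hε m
  -- dist from center k to L is at most r k + r anything → ≤ 2 r k in the limit
  have hcentL : ∀ k, dist (q (idx k ω)) (L ω) ≤ 2 * r k := by
    intro k
    have : Tendsto (fun k' => dist (q (idx k ω)) (q (idx k' ω))) atTop
        (nhds (dist (q (idx k ω)) (L ω))) :=
      (Continuous.dist continuous_const continuous_id).continuousAt.tendsto.comp (hL ω)
    refine le_of_tendsto this ?_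
    filter_upwards [eventually_ge_atTop k] with k' hk'
    calc dist (q (idx k ω)) (q (idx k' ω)) ≤ r k + r k' := hcent k k' ω hk'
      _ ≤ 2 * r k := by linarith [hrle k k' hk']
  obtain ⟨k, hk⟩ : ∃ k : ℕ, 3 * r k < ε := by
    obtain ⟨k, hk⟩ := exists_pow_lt_of_lt_one (show (0:ℝ) < ε/3 by linarith) (show (2:ℝ)⁻¹ < 1 by norm_num)
    refine ⟨k, ?_⟩
    have h1 : r k ≤ (2:ℝ)⁻¹ ^ k := by
      rw [hr]
      exact pow_le_pow_of_le_one (by norm_num) (by norm_num) (by omega)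
    linarith
  obtain ⟨n, hnm, hnS⟩ := nat_set_infinite_iff.1 (hSinf (k+1) ω) m
  refine ⟨n, hnm, ?_⟩
  calc dist (U n ω) (L ω) ≤ dist (U n ω) (q (idx k ω)) + dist (q (idx k ω)) (L ω) :=
        dist_triangle _ _ _
    _ < r k + 2 * r k := by linarith [hball k ω n hnS, hcentL k]
    _ = 3 * r k := by ring
    _ < ε := hk

end BW
section Glue

variable {Ω : Type*} {m0 : MeasurableSpace Ω} {N : ℕ}

local notation "E" => EuclideanSpace ℝ (Fin N)

/-- Countable gluing: a set closed under `L⁰`-convex combinations and a.s. limits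
is closed under countable measurable gluings. -/
lemma glue_mem (μ : Measure Ω) [IsProbabilityMeasure μ]
    (F : MeasurableSpace Ω) (hF : F ≤ m0)
    (C : Set (Ω → E))
    (hclosed : ∀ X : ℕ → Ω → E, (∀ n, X n ∈ C) →
      ∀ Y : Ω → E, Measurable[F] Y →
      (∀ᵐ ω ∂μ, Filter.Tendsto (fun n => X n ω) Filter.atTop (nhds (Y ω))) → Y ∈ C)
    (hconv : ∀ X ∈ C, ∀ Y ∈ C, ∀ lam : Ω → ℝ, Measurable[F] lam →
      (∀ ω, lam ω ∈ Set.Icc (0 : ℝ) 1) →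
      (fun ω => lam ω • X ω + (1 - lam ω) • Y ω) ∈ C)
    (W : ℕ → Ω → E) (hWC : ∀ n, W n ∈ C) (hWm : ∀ n, Measurable[F] (W n))
    (τ : Ω → ℕ) (hτ : Measurable[F] τ) :
    (fun ω => W (τ ω) ω) ∈ C := by
  classical
  have hP : ∀ m : ℕ, (fun ω => W (min (τ ω) m) ω) ∈ C := by
    intro m
    induction m with
    | zero =>
      have : (fun ω => W (min (τ ω) 0) ω) = W 0 := by
        funext ω; rw [Nat.min_zero]
      rw [this]; exact hWC 0
    | succ m ih =>
      set lam : Ω → ℝ := fun ω => if τ ω ≤ m then (1:ℝ) else 0 with hlam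
      have hlamm : Measurable[F] lam := by
        apply Measurable.ite ?_ measurable_const measurable_const
        exact hτ (show MeasurableSet {n : ℕ | n ≤ m} from (Set.to_countable _).measurableSet)
      have hlamicc : ∀ ω, lam ω ∈ Set.Icc (0:ℝ) 1 := by
        intro ω; rw [hlam]; dsimp only
        split <;> simp
      have hc := hconv _ ih _ (hWC (m+1)) lam hlamm hlamicc
      have heq : (fun ω => lam ω • W (min (τ ω) m) ω + (1 - lam ω) • W (m+1) ω)
          = fun ω => W (min (τ ω) (m+1)) ω := by
        funext ω
        rw [hlam]; dsimp only
        by_cases h : τ ω ≤ m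
        · have h1 : min (τ ω) (m+1) = min (τ ω) m := by omega
          simp [h, h1]
        · have h1 : min (τ ω) (m+1) = m+1 := by omega
          simp [h, h1]
      rwa [heq] at hc
  refine hclosed _ hP _ (measurable_nat_glue hWm hτ) (ae_of_all _ ?_)
  intro ω
  apply tendsto_atTop_of_eventually_const (i₀ := τ ω)
  intro m hm
  have : min (τ ω) m = τ ω := by omega
  rw [this]

end Glue

/-- (Characterization of `L⁰`-boundedness of closed `L⁰`-convex sets,
conditional analysis.)  Let `C` be a sequentially closed, `L⁰`-convex subset of
`(L⁰(ℱ))^N` containing `0` (identified here as a set of `ℱ`-measurable functions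
`Ω → ℝ^N`, closed under a.s. modification).  Then `C` is `L⁰`-bounded if and only if for
every `X ∈ C` with `P(X ≠ 0) > 0` there is `k ∈ ℕ` with `kX ∉ C`. -/
theorem l0_bounded_iff_no_ray
    {Ω : Type*} {m0 : MeasurableSpace Ω} (μ : Measure Ω) [IsProbabilityMeasure μ]
    (F : MeasurableSpace Ω) (hF : F ≤ m0) {N : ℕ}
    (C : Set (Ω → EuclideanSpace ℝ (Fin N)))
    (hmeas : ∀ X ∈ C, Measurable[F] X)
    (h0 : (0 : Ω → EuclideanSpace ℝ (Fin N)) ∈ C)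
    (hae : ∀ X ∈ C, ∀ Y : Ω → EuclideanSpace ℝ (Fin N),
      Measurable[F] Y → X =ᵐ[μ] Y → Y ∈ C)
    (hclosed : ∀ X : ℕ → Ω → EuclideanSpace ℝ (Fin N), (∀ n, X n ∈ C) →
      ∀ Y : Ω → EuclideanSpace ℝ (Fin N), Measurable[F] Y →
      (∀ᵐ ω ∂μ, Filter.Tendsto (fun n => X n ω) Filter.atTop (nhds (Y ω))) → Y ∈ C)
    (hconv : ∀ X ∈ C, ∀ Y ∈ C, ∀ lam : Ω → ℝ, Measurable[F] lam →
      (∀ ω, lam ω ∈ Set.Icc (0 : ℝ) 1) →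
      (fun ω => lam ω • X ω + (1 - lam ω) • Y ω) ∈ C) :
    (∃ Y : Ω → ℝ, Measurable[F] Y ∧ ∀ X ∈ C, ∀ᵐ ω ∂μ, ‖X ω‖ ≤ Y ω) ↔
      (∀ X ∈ C, ¬ X =ᵐ[μ] (0 : Ω → EuclideanSpace ℝ (Fin N)) →
        ∃ k : ℕ, (fun ω => (k : ℝ) • X ω) ∉ C) := by
  classical
  constructor
  · rintro ⟨Y, hYm, hY⟩ X hX hX0
    by_contra hk
    push_neg at hk
    have hall : ∀ᵐ ω ∂μ, ∀ k : ℕ, (k:ℝ) * ‖X ω‖ ≤ Y ω := by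
      rw [ae_all_iff]
      intro k
      filter_upwards [hY _ (hk k)] with ω hω
      calc (k:ℝ) * ‖X ω‖ = ‖(k:ℝ) • X ω‖ := by rw [norm_smul]; simp
        _ ≤ Y ω := hω
    apply hX0
    filter_upwards [hall] with ω hω
    show X ω = 0
    by_contra hne
    have hpos : 0 < ‖X ω‖ := norm_pos_iff.2 hne
    obtain ⟨k, hk'⟩ := exists_nat_gt (Y ω / ‖X ω‖)
    have h1 := hω k
    have h2 : (k:ℝ) ≤ Y ω / ‖X ω‖ := by
      rw [le_div_iff₀ hpos]
      exact h1
    linarith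
  · intro hR
    set φ : ℝ → ℝ := fun t => t / (1 + t) with hφ
    have hφnn : ∀ t : ℝ, 0 ≤ t → 0 ≤ φ t := fun t ht => div_nonneg ht (by linarith)
    have hφlt : ∀ t : ℝ, 0 ≤ t → φ t < 1 := by
      intro t ht
      rw [hφ]; dsimp only
      rw [div_lt_one (by linarith)]; linarith
    have hφmono : ∀ a b : ℝ, 0 ≤ a → a ≤ b → φ a ≤ φ b := by
      intro a b ha hab
      rw [hφ]; dsimp only
      rw [div_le_div_iff₀ (by linarith) (by linarith)]
      nlinarith
    have hφm : Measurable φ := measurable_id.div (measurable_const.add measurable_id)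
    -- integrability of the bounded compositions
    have hint : ∀ X : Ω → (EuclideanSpace ℝ (Fin N)), Measurable[F] X → Integrable (fun ω => φ ‖X ω‖) μ := by
      intro X hXm
      have hmF : Measurable[F] fun ω => φ ‖X ω‖ := hφm.comp hXm.norm
      have hm : Measurable[m0] fun ω => φ ‖X ω‖ := hmF.mono hF le_rfl
      refine (integrable_const (1:ℝ)).mono' hm.aestronglyMeasurable (ae_of_all _ ?_)
      intro ω
      rw [Real.norm_eq_abs, abs_of_nonneg (hφnn _ (norm_nonneg _))]
      exact (hφlt _ (norm_nonneg _)).le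
    -- the supremum of integrals
    set I : Set ℝ := (fun X : Ω → (EuclideanSpace ℝ (Fin N)) => ∫ ω, φ ‖X ω‖ ∂μ) '' C with hI
    have hIne : I.Nonempty := ⟨_, ⟨0, h0, rfl⟩⟩
    have hIbdd : BddAbove I := by
      refine ⟨1, ?_⟩
      rintro x ⟨X, hX, rfl⟩
      calc ∫ ω, φ ‖X ω‖ ∂μ ≤ ∫ _, (1:ℝ) ∂μ := by
            refine integral_mono (hint X (hmeas X hX)) (integrable_const 1) ?_
            intro ω; exact (hφlt _ (norm_nonneg _)).le
        _ = 1 := by simp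
    set s := sSup I with hs
    have hsle : ∀ X ∈ C, ∫ ω, φ ‖X ω‖ ∂μ ≤ s := fun X hX => le_csSup hIbdd ⟨X, hX, rfl⟩
    have hXn : ∀ n : ℕ, ∃ X, X ∈ C ∧ s - 1/(n+1) < ∫ ω, φ ‖X ω‖ ∂μ := by
      intro n
      have h1 : s - 1/(n+1) < s := by
        have : (0:ℝ) < 1/(n+1) := by positivity
        linarith
      obtain ⟨x, hxI, hx⟩ := exists_lt_of_lt_csSup hIne h1
      obtain ⟨X, hXC, rfl⟩ := hxI
      exact ⟨X, hXC, hx⟩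
    choose X0 hX0C hX0gt using hXn
    -- indicator combination realizing the pointwise max of norms
    have hcomb : ∀ X ∈ C, ∀ Y ∈ C, ∃ W ∈ C, ∀ ω, ‖W ω‖ = max ‖X ω‖ ‖Y ω‖ := by
      intro X hX Y hY
      set lam : Ω → ℝ := fun ω => if ‖Y ω‖ ≤ ‖X ω‖ then (1:ℝ) else 0 with hlam
      have hlamm : Measurable[F] lam := by
        refine Measurable.ite ?_ measurable_const measurable_const
        exact measurableSet_le (hmeas Y hY).norm (hmeas X hX).norm
      have hicc : ∀ ω, lam ω ∈ Set.Icc (0:ℝ) 1 := by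
        intro ω; rw [hlam]; dsimp only; split <;> simp
      refine ⟨_, hconv X hX Y hY lam hlamm hicc, ?_⟩
      intro ω
      rw [hlam]; dsimp only
      by_cases h : ‖Y ω‖ ≤ ‖X ω‖
      · rw [if_pos h]; simp [max_eq_left h]
      · rw [if_neg h]; push_neg at h; simp [max_eq_right h.le]
    choose comb hcombC hcombN using hcomb
    -- increasing sequence Z
    let Zs : ℕ → {X : Ω → (EuclideanSpace ℝ (Fin N)) // X ∈ C} := fun n => Nat.rec ⟨X0 0, hX0C 0⟩
      (fun n Zn => ⟨comb Zn.1 Zn.2 (X0 (n+1)) (hX0C (n+1)),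
        hcombC Zn.1 Zn.2 (X0 (n+1)) (hX0C (n+1))⟩) n
    set Z : ℕ → Ω → (EuclideanSpace ℝ (Fin N)) := fun n => (Zs n).1 with hZ
    have hZC : ∀ n, Z n ∈ C := fun n => (Zs n).2
    have hZsucc : ∀ n ω, ‖Z (n+1) ω‖ = max ‖Z n ω‖ ‖X0 (n+1) ω‖ :=
      fun n ω => hcombN (Zs n).1 (Zs n).2 (X0 (n+1)) (hX0C (n+1)) ω
    have hZmono' : ∀ ω, Monotone fun n => ‖Z n ω‖ := by
      intro ω
      apply monotone_nat_of_le_succ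
      intro n
      rw [hZsucc]
      exact le_max_left _ _
    have hZge : ∀ n ω, ‖X0 n ω‖ ≤ ‖Z n ω‖ := by
      intro n ω
      cases n with
      | zero => exact le_of_eq rfl
      | succ n => rw [hZsucc]; exact le_max_right _ _
    have hZint : ∀ n : ℕ, s - 1/(n+1) < ∫ ω, φ ‖Z n ω‖ ∂μ := by
      intro n
      refine lt_of_lt_of_le (hX0gt n)
        (integral_mono (hint _ (hmeas _ (hX0C n))) (hint _ (hmeas _ (hZC n))) ?_)
      intro ω
      exact hφmono _ _ (norm_nonneg _) (hZge n ω)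
    -- the essential supremum Ystar
    set Ystar : Ω → ℝ := fun ω => ⨆ n, φ ‖Z n ω‖ with hYstar
    have hbdd : ∀ ω, BddAbove (Set.range fun n => φ ‖Z n ω‖) := by
      intro ω; refine ⟨1, ?_⟩; rintro x ⟨n, rfl⟩; exact (hφlt _ (norm_nonneg _)).le
    have hmonoφ : ∀ ω, Monotone fun n => φ ‖Z n ω‖ :=
      fun ω n m hnm => hφmono _ _ (norm_nonneg _) (hZmono' ω hnm)
    have hYtend : ∀ ω, Tendsto (fun n => φ ‖Z n ω‖) atTop (nhds (Ystar ω)) :=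
      fun ω => tendsto_atTop_ciSup (hmonoφ ω) (hbdd ω)
    have hYle1 : ∀ ω, Ystar ω ≤ 1 := fun ω => ciSup_le fun n => (hφlt _ (norm_nonneg _)).le
    have hYge : ∀ (n : ℕ) ω, φ ‖Z n ω‖ ≤ Ystar ω := fun n ω => le_ciSup (hbdd ω) n
    have hYnn : ∀ ω, 0 ≤ Ystar ω := fun ω => le_trans (hφnn _ (norm_nonneg _)) (hYge 0 ω)
    have hYmF : Measurable[F] Ystar := by
      apply measurable_of_tendsto_metrizable (f := fun n ω => φ ‖Z n ω‖)
      · intro n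
        exact hφm.comp (hmeas _ (hZC n)).norm
      · rw [tendsto_pi_nhds]; exact hYtend
    have hYm0 : Measurable[m0] Ystar := hYmF.mono hF le_rfl
    -- essential supremum property
    have hess : ∀ X ∈ C, ∀ᵐ ω ∂μ, φ ‖X ω‖ ≤ Ystar ω := by
      intro X hX
      have mφXF : Measurable[F] fun ω => φ ‖X ω‖ := hφm.comp (hmeas X hX).norm
      have mφX : Measurable[m0] fun ω => φ ‖X ω‖ := mφXF.mono hF le_rfl
      rw [ae_iff]
      by_contra hμB
      set B := {ω | Ystar ω < φ ‖X ω‖} with hB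
      have hBmeas : MeasurableSet[m0] B := measurableSet_lt hYm0 mφX
      have hBeq : {ω | ¬ φ ‖X ω‖ ≤ Ystar ω} = B := by ext ω; simp [hB, not_le]
      rw [hBeq] at hμB
      set g : Ω → ℝ := B.indicator (fun ω => φ ‖X ω‖ - Ystar ω) with hg
      have hgnn : 0 ≤ g := by
        intro ω
        show (0:ℝ) ≤ g ω
        rw [hg]
        by_cases h : ω ∈ B
        · rw [Set.indicator_of_mem h]
          have h' : Ystar ω < φ ‖X ω‖ := h
          linarith
        · rw [Set.indicator_of_notMem h]
      have hgint : Integrable g μ := by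
        refine (integrable_const (2:ℝ)).mono' ?_ (ae_of_all _ ?_)
        · exact ((mφX.sub hYm0).indicator hBmeas).aestronglyMeasurable
        · intro ω
          rw [Real.norm_eq_abs, abs_of_nonneg (hgnn ω), hg]
          by_cases h : ω ∈ B
          · rw [Set.indicator_of_mem h]
            have h1 := hφlt ‖X ω‖ (norm_nonneg _)
            have h2 := hYnn ω
            linarith
          · rw [Set.indicator_of_notMem h]; norm_num
      have hδpos : 0 < ∫ ω, g ω ∂μ := by
        rcases (integral_nonneg hgnn).lt_or_eq with h | h
        · exact h
        · exfalso
          have hgz := (integral_eq_zero_iff_of_nonneg hgnn hgint).1 h.symm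
          have hsub : B ⊆ {ω | ¬ g ω = 0} := by
            intro ω hω
            have h' : Ystar ω < φ ‖X ω‖ := hω
            rw [Set.mem_setOf_eq, hg, Set.indicator_of_mem hω]
            intro hcon
            linarith [sub_eq_zero.1 hcon]
          exact hμB (measure_mono_null hsub (ae_iff.1 hgz))
      obtain ⟨n, hn⟩ := exists_nat_one_div_lt hδpos
      have hWN := hcombN (Z n) (hZC n) X hX
      have hWC' := hcombC (Z n) (hZC n) X hX
      have hptw : ∀ ω, φ ‖Z n ω‖ + g ω ≤ φ ‖comb (Z n) (hZC n) X hX ω‖ := by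
        intro ω
        rw [hWN ω]
        have hmax : φ (max ‖Z n ω‖ ‖X ω‖) = max (φ ‖Z n ω‖) (φ ‖X ω‖) := by
          rcases le_total ‖Z n ω‖ ‖X ω‖ with h | h
          · rw [max_eq_right h, max_eq_right (hφmono _ _ (norm_nonneg _) h)]
          · rw [max_eq_left h, max_eq_left (hφmono _ _ (norm_nonneg _) h)]
        rw [hmax, hg]
        by_cases h : ω ∈ B
        · rw [Set.indicator_of_mem h]
          have h1 := hYge n ω
          have h2 : φ ‖Z n ω‖ + (φ ‖X ω‖ - Ystar ω) ≤ φ ‖X ω‖ := by linarith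
          exact h2.trans (le_max_right _ _)
        · rw [Set.indicator_of_notMem h, add_zero]; exact le_max_left _ _
      have hint1 := hint _ (hmeas _ (hZC n))
      have hintW := hint _ (hmeas _ hWC')
      have hsum : ∫ ω, φ ‖Z n ω‖ ∂μ + ∫ ω, g ω ∂μ ≤ ∫ ω, φ ‖comb (Z n) (hZC n) X hX ω‖ ∂μ := by
        rw [← integral_add hint1 hgint]
        exact integral_mono (hint1.add hgint) hintW hptw
      have hles := hsle _ hWC'
      have hzi := hZint n
      linarith
    -- the set where Ystar hits 1
    set A := {ω | 1 ≤ Ystar ω} with hA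
    have hAmeasF : MeasurableSet[F] A := measurableSet_le measurable_const hYmF
    by_cases hμA : μ A = 0
    · -- bounded case
      refine ⟨fun ω => Ystar ω / (1 - Ystar ω), hYmF.div (measurable_const.sub hYmF), ?_⟩
      intro X hX
      have h1 : ∀ᵐ ω ∂μ, Ystar ω < 1 := by
        rw [ae_iff]
        have heq : {ω | ¬ Ystar ω < 1} = A := by ext ω; simp [hA, not_lt]
        rw [heq]; exact hμA
      filter_upwards [hess X hX, h1] with ω hω h1ω
      have hω' : ‖X ω‖ / (1 + ‖X ω‖) ≤ Ystar ω := hω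
      rw [le_div_iff₀ (by linarith)]
      have h2 : ‖X ω‖ ≤ Ystar ω * (1 + ‖X ω‖) := by
        have h3 := (div_le_iff₀ (show (0:ℝ) < 1 + ‖X ω‖ by positivity)).1 hω'
        linarith
      nlinarith [norm_nonneg (X ω)]
    · -- unbounded case: build the ray, contradiction
      exfalso
      have hgrow : ∀ ω ∈ A, ∀ M : ℝ, ∃ n0 : ℕ, ∀ n, n0 ≤ n → M ≤ ‖Z n ω‖ := by
        intro ω hω M
        have hω' : 1 ≤ Ystar ω := hω
        rcases le_or_gt M 0 with hM | hM
        · exact ⟨0, fun n _ => hM.trans (norm_nonneg _)⟩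
        · have h2 : φ M < Ystar ω := lt_of_lt_of_le (hφlt M hM.le) hω'
          obtain ⟨n0, hn0⟩ := exists_lt_of_lt_ciSup h2
          refine ⟨n0, fun n hn => ?_⟩
          by_contra hc
          push_neg at hc
          have h3 : φ ‖Z n ω‖ ≤ φ M := hφmono _ _ (norm_nonneg _) hc.le
          have h4 : φ ‖Z n0 ω‖ ≤ φ ‖Z n ω‖ := hmonoφ ω hn
          linarith
      set U : ℕ → Ω → (EuclideanSpace ℝ (Fin N)) := fun n ω => (max ‖Z n ω‖ 1)⁻¹ • Z n ω with hU
      have hUm : ∀ n, Measurable[F] (U n) := by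
        intro n
        exact (((hmeas _ (hZC n)).norm.max measurable_const).inv).smul (hmeas _ (hZC n))
      have hUb : ∀ n ω, ‖U n ω‖ ≤ 1 := by
        intro n ω
        rw [hU]; dsimp only
        have hmaxpos : (0:ℝ) < max ‖Z n ω‖ 1 := lt_of_lt_of_le one_pos (le_max_right _ _)
        rw [norm_smul, Real.norm_eq_abs, abs_inv, abs_of_nonneg hmaxpos.le, inv_mul_eq_div,
          div_le_one hmaxpos]
        exact le_max_left _ _
      obtain ⟨L, hLm, hLcl⟩ := exists_measurable_cluster_point hUm hUb
      set X₀ : Ω → (EuclideanSpace ℝ (Fin N)) := fun ω => if ω ∈ A then L ω else 0 with hX₀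
      have hX₀m : Measurable[F] X₀ := Measurable.ite hAmeasF hLm measurable_const
      have hRay : ∀ t : ℝ, 1 ≤ t → (fun ω => t • X₀ ω) ∈ C := by
        intro t ht
        have htpos : (0:ℝ) < t := lt_of_lt_of_le one_pos ht
        set W : ℕ → Ω → (EuclideanSpace ℝ (Fin N)) := fun n ω => (t / max ‖Z n ω‖ t) • Z n ω with hW
        have hWm : ∀ n, Measurable[F] (W n) := by
          intro n
          exact (measurable_const.div ((hmeas _ (hZC n)).norm.max measurable_const)).smul
            (hmeas _ (hZC n))
        have hWC : ∀ n, W n ∈ C := by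
          intro n
          have hmaxpos : ∀ ω, (0:ℝ) < max ‖Z n ω‖ t :=
            fun ω => lt_of_lt_of_le htpos (le_max_right _ _)
          have hicc : ∀ ω, t / max ‖Z n ω‖ t ∈ Set.Icc (0:ℝ) 1 := by
            intro ω
            constructor
            · positivity
            · rw [div_le_one (hmaxpos ω)]; exact le_max_right _ _
          have hc := hconv (Z n) (hZC n) 0 h0 (fun ω => t / max ‖Z n ω‖ t)
            (measurable_const.div ((hmeas _ (hZC n)).norm.max measurable_const)) hicc
          have heq : (fun ω => (t / max ‖Z n ω‖ t) • Z n ω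
              + (1 - t / max ‖Z n ω‖ t) • (0 : Ω → (EuclideanSpace ℝ (Fin N))) ω) = W n := by
            funext ω
            rw [hW]; dsimp only
            rw [Pi.zero_apply, smul_zero, add_zero]
          rwa [heq] at hc
        set p : ℕ → ℕ → Ω → Prop := fun k n ω =>
          k ≤ n ∧ max t 1 ≤ ‖Z n ω‖ ∧ dist (U n ω) (L ω) < 1/(k+1) with hp
        have hpmeas : ∀ k n, MeasurableSet[F] {ω | p k n ω} := by
          intro k n
          by_cases hkn : k ≤ n
          · have : {ω | p k n ω}
                = {ω | max t 1 ≤ ‖Z n ω‖} ∩ {ω | dist (U n ω) (L ω) < 1/(k+1)} := by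
              ext ω; simp [hp, hkn]
            rw [this]
            exact (measurableSet_le measurable_const (hmeas _ (hZC n)).norm).inter
              (measurableSet_lt ((hUm n).dist hLm) measurable_const)
          · have : {ω | p k n ω} = ∅ := by ext ω; simp [hp, hkn]
            rw [this]; exact MeasurableSet.empty
        set τ : ℕ → Ω → ℕ := fun k ω => sInf {n | p k n ω} with hτ
        have hτm : ∀ k, Measurable[F] (τ k) := fun k => measurable_nat_sInf (hpmeas k)
        have hτne : ∀ ω ∈ A, ∀ k : ℕ, {n | p k n ω}.Nonempty := by
          intro ω hω k
          obtain ⟨n0, hn0⟩ := hgrow ω hω (max t 1)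
          obtain ⟨n, hn1, hn2⟩ := hLcl ω (1/(k+1)) (by positivity) (max k n0)
          exact ⟨n, le_trans (le_max_left _ _) hn1,
            hn0 n (le_trans (le_max_right _ _) hn1), hn2⟩
        have hglue : ∀ k, (fun ω => W (τ k ω) ω) ∈ C :=
          fun k => glue_mem μ F hF C hclosed hconv W hWC hWm (τ k) (hτm k)
        set lamA : Ω → ℝ := fun ω => if ω ∈ A then (1:ℝ) else 0 with hlamA
        have hlamAm : Measurable[F] lamA :=
          Measurable.ite hAmeasF measurable_const measurable_const
        have hlamAicc : ∀ ω, lamA ω ∈ Set.Icc (0:ℝ) 1 := by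
          intro ω; rw [hlamA]; dsimp only; split <;> simp
        have hGC : ∀ k, (fun ω => lamA ω • W (τ k ω) ω
            + (1 - lamA ω) • (0 : Ω → (EuclideanSpace ℝ (Fin N))) ω) ∈ C :=
          fun k => hconv _ (hglue k) 0 h0 lamA hlamAm hlamAicc
        refine hclosed _ hGC _ (hX₀m.const_smul t) (ae_of_all _ ?_)
        intro ω
        by_cases hω : ω ∈ A
        · have hXω : X₀ ω = L ω := by rw [hX₀]; dsimp only; rw [if_pos hω]
          have hval : ∀ k, lamA ω • W (τ k ω) ω + (1 - lamA ω) • (0 : Ω → (EuclideanSpace ℝ (Fin N))) ω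
              = t • U (τ k ω) ω := by
            intro k
            have hmem := Nat.sInf_mem (hτne ω hω k)
            obtain ⟨h1, h2, h3⟩ := hmem
            have hZt : max ‖Z (τ k ω) ω‖ t = ‖Z (τ k ω) ω‖ :=
              max_eq_left (le_trans (le_max_left _ _) h2)
            have hZ1 : max ‖Z (τ k ω) ω‖ 1 = ‖Z (τ k ω) ω‖ :=
              max_eq_left (le_trans (le_max_right _ _) h2)
            rw [hlamA]; dsimp only; rw [if_pos hω]
            rw [one_smul, sub_self, zero_smul, add_zero]
            rw [hW]; dsimp only
            rw [hU]; dsimp only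
            rw [hZt, hZ1, smul_smul, div_eq_mul_inv]
          have heqf : (fun k => lamA ω • W (τ k ω) ω + (1 - lamA ω) • (0 : Ω → (EuclideanSpace ℝ (Fin N))) ω)
              = fun k => t • U (τ k ω) ω := funext hval
          rw [heqf, hXω]
          rw [Metric.tendsto_atTop]
          intro ε hε
          obtain ⟨K, hK⟩ := exists_nat_one_div_lt (show (0:ℝ) < ε/t by positivity)
          refine ⟨K, fun k hk => ?_⟩
          obtain ⟨h1, h2, h3⟩ := Nat.sInf_mem (hτne ω hω k)
          have hKk : 1/((k:ℝ)+1) ≤ 1/((K:ℝ)+1) := by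
            apply one_div_le_one_div_of_le (by positivity)
            have : (K:ℝ) ≤ (k:ℝ) := by exact_mod_cast hk
            linarith
          calc dist (t • U (τ k ω) ω) (t • L ω)
              = ‖t‖ * dist (U (τ k ω) ω) (L ω) := dist_smul₀ t _ _
            _ = t * dist (U (τ k ω) ω) (L ω) := by
                rw [Real.norm_eq_abs, abs_of_pos htpos]
            _ < t * (1/(k+1)) := by
                exact mul_lt_mul_of_pos_left h3 htpos
            _ ≤ t * (1/(K+1)) := mul_le_mul_of_nonneg_left hKk htpos.le
            _ < ε := by
                have h4 : t * (1/((K:ℝ)+1)) < t * (ε/t) := mul_lt_mul_of_pos_left hK htpos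
                have h5 : t * (ε/t) = ε := by field_simp
                linarith
        · have hvals : ∀ k, lamA ω • W (τ k ω) ω + (1 - lamA ω) • (0 : Ω → (EuclideanSpace ℝ (Fin N))) ω
              = (0 : (EuclideanSpace ℝ (Fin N))) := by
            intro k
            rw [hlamA]; dsimp only; rw [if_neg hω]
            rw [zero_smul, zero_add, sub_zero, one_smul, Pi.zero_apply]
          have heqf : (fun k => lamA ω • W (τ k ω) ω + (1 - lamA ω) • (0 : Ω → (EuclideanSpace ℝ (Fin N))) ω)
              = fun _ : ℕ => (0 : (EuclideanSpace ℝ (Fin N))) := funext hvals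
          have hX0ω : t • X₀ ω = 0 := by
            rw [hX₀]; dsimp only; rw [if_neg hω, smul_zero]
          rw [heqf, hX0ω]
          exact tendsto_const_nhds
      have hX₀C : X₀ ∈ C := by
        have h1 := hRay 1 le_rfl
        have heq : (fun ω => (1:ℝ) • X₀ ω) = X₀ := by funext ω; rw [one_smul]
        rwa [heq] at h1
      have hX₀ne : ¬ X₀ =ᵐ[μ] (0 : Ω → (EuclideanSpace ℝ (Fin N))) := by
        intro hc
        have hnorm : ∀ ω ∈ A, ‖L ω‖ = 1 := by
          intro ω hω
          obtain ⟨n0, hn0⟩ := hgrow ω hω 1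
          have habs : ∀ ε : ℝ, 0 < ε → |‖L ω‖ - 1| < ε := by
            intro ε hε
            obtain ⟨n, hn1, hn2⟩ := hLcl ω ε hε n0
            have hUn : ‖U n ω‖ = 1 := by
              rw [hU]; dsimp only
              have h1 : max ‖Z n ω‖ 1 = ‖Z n ω‖ := max_eq_left (hn0 n hn1)
              have h2 : ‖Z n ω‖ ≠ 0 := (lt_of_lt_of_le one_pos (hn0 n hn1)).ne'
              rw [norm_smul, h1, Real.norm_eq_abs, abs_inv,
                abs_of_nonneg (norm_nonneg _), inv_mul_cancel₀ h2]
            calc |‖L ω‖ - 1| = |‖L ω‖ - ‖U n ω‖| := by rw [hUn]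
              _ ≤ ‖L ω - U n ω‖ := abs_norm_sub_norm_le _ _
              _ = dist (U n ω) (L ω) := by rw [← dist_eq_norm, dist_comm]
              _ < ε := hn2
          have hz : |‖L ω‖ - 1| = 0 := by
            by_contra h
            have h2 : 0 < |‖L ω‖ - 1| := lt_of_le_of_ne (abs_nonneg _) (Ne.symm h)
            exact absurd (habs _ h2) (lt_irrefl _)
          have := abs_eq_zero.1 hz
          linarith [sub_eq_zero.1 this]
        have hsub : A ⊆ {ω | ¬ X₀ ω = (0 : Ω → (EuclideanSpace ℝ (Fin N))) ω} := by
          intro ω hω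
          rw [Set.mem_setOf_eq, hX₀]; dsimp only; rw [if_pos hω]
          intro h
          have h1 := hnorm ω hω
          rw [Pi.zero_apply] at h
          rw [h, norm_zero] at h1
          norm_num at h1
        exact hμA (measure_mono_null hsub (ae_iff.1 hc))
      obtain ⟨k, hk⟩ := hR X₀ hX₀C hX₀ne
      apply hk
      rcases Nat.eq_zero_or_pos k with h | h
      · subst h
        have heq : (fun ω => ((0:ℕ):ℝ) • X₀ ω) = (0 : Ω → (EuclideanSpace ℝ (Fin N))) := by
          funext ω; rw [Nat.cast_zero, zero_smul, Pi.zero_apply]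
        rw [heq]; exact h0
      · exact hRay k (by exact_mod_cast h)
end

section
/- Let C be a nonempty σ-stable subset of (L^0(ℱ))^N that is not L^0-bounded. Then there exists a measurable set Ω̃ with P(Ω̃) > 0 and a sequence (X_n) ⊆ C such that for every n ∈ ℕ, ‖X_n‖ ≥ n a.s. on Ω̃. -/
open MeasureTheory Filter

private lemma select_meas' {Ω E : Type*} [MeasurableSpace Ω] [MeasurableSpace E]
    (W : ℕ → Ω → E) (hW : ∀ n, Measurable (W n)) (τ : Ω → ℕ) (hτ : Measurable τ) :
    Measurable fun ω => W (τ ω) ω := by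
  intro s hs
  have h : (fun ω => W (τ ω) ω) ⁻¹' s = ⋃ k, (τ ⁻¹' {k}) ∩ (W k ⁻¹' s) := by
    ext ω
    simp only [Set.mem_preimage, Set.mem_iUnion, Set.mem_inter_iff, Set.mem_singleton_iff]
    exact ⟨fun h => ⟨τ ω, rfl, h⟩, fun ⟨k, hk, h⟩ => by rw [hk]; exact h⟩
  rw [h]
  exact MeasurableSet.iUnion fun k => (hτ (measurableSet_singleton k)).inter (hW k hs)

/-- Let `C` be a nonempty σ-stable subset of `(L⁰(ℱ))^N` that is not
`L⁰`-bounded.  Then there is a measurable set `Ω̃` of positive probability and a sequence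
`(X_n) ⊆ C` such that `‖X_n‖ ≥ n` a.s. on `Ω̃` for every `n`. -/
theorem sigma_stable_unbounded_exists_divergent_sequence
    {Ω : Type*} {m0 : MeasurableSpace Ω} (μ : Measure Ω) [IsProbabilityMeasure μ]
    (F : MeasurableSpace Ω) (hF : F ≤ m0) {N : ℕ}
    (C : Set (Ω → EuclideanSpace ℝ (Fin N))) (hne : C.Nonempty)
    (hmeas : ∀ X ∈ C, Measurable[F] X)
    (hstable : ∀ X : ℕ → Ω → EuclideanSpace ℝ (Fin N), (∀ n, X n ∈ C) →
      ∀ A : ℕ → Set Ω, (∀ n, MeasurableSet[F] (A n)) →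
      Pairwise (Function.onFun Disjoint A) → (⋃ n, A n) = Set.univ →
      ∀ Y : Ω → EuclideanSpace ℝ (Fin N), Measurable[F] Y →
      (∀ n, ∀ ω ∈ A n, Y ω = X n ω) → Y ∈ C)
    (hunbdd : ¬ ∃ Y : Ω → ℝ, Measurable[F] Y ∧ ∀ X ∈ C, ∀ᵐ ω ∂μ, ‖X ω‖ ≤ Y ω) :
    ∃ S : Set Ω, MeasurableSet S ∧ 0 < μ S ∧
      ∃ X : ℕ → Ω → EuclideanSpace ℝ (Fin N), (∀ n, X n ∈ C) ∧
        ∀ n : ℕ, ∀ᵐ ω ∂μ, ω ∈ S → (n : ℝ) ≤ ‖X n ω‖ := by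
  classical
  -- closure under countable measurable selection
  have key : ∀ (X : ℕ → Ω → EuclideanSpace ℝ (Fin N)), (∀ n, X n ∈ C) →
      ∀ τ : Ω → ℕ, Measurable[F] τ → (fun ω => X (τ ω) ω) ∈ C := by
    intro X hX τ hτ
    refine hstable X hX (fun k => τ ⁻¹' {k}) (fun k => hτ (measurableSet_singleton k)) ?_ ?_ _
      (select_meas' X (fun n => hmeas _ (hX n)) τ hτ) ?_
    · intro i j hij
      simp only [Function.onFun]
      rw [Set.disjoint_left]
      intro ω h1 h2
      simp only [Set.mem_preimage, Set.mem_singleton_iff] at h1 h2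
      exact hij (h1 ▸ h2 ▸ rfl)
    · ext ω
      simp only [Set.mem_iUnion, Set.mem_preimage, Set.mem_singleton_iff, Set.mem_univ, iff_true]
      exact ⟨τ ω, rfl⟩
    · intro k ω hk
      simp only [Set.mem_preimage, Set.mem_singleton_iff] at hk
      show X (τ ω) ω = X k ω
      rw [hk]
  -- pairwise max
  have comb : ∀ U ∈ C, ∀ V ∈ C, ∃ R ∈ C, ∀ ω : Ω, ‖R ω‖ = max ‖U ω‖ ‖V ω‖ := by
    intro U hU V hV
    have hτ : Measurable[F] fun ω => if ‖V ω‖ ≤ ‖U ω‖ then (0 : ℕ) else 1 :=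
      Measurable.ite (measurableSet_le ((hmeas V hV).norm) ((hmeas U hU).norm))
        measurable_const measurable_const
    have hmem := key (fun n => if n = 0 then U else V)
      (fun n => by by_cases h : n = 0 <;> simp [h, hU, hV])
      (fun ω => if ‖V ω‖ ≤ ‖U ω‖ then (0:ℕ) else 1) hτ
    refine ⟨_, hmem, ?_⟩
    intro ω
    by_cases h : ‖V ω‖ ≤ ‖U ω‖
    · simp only [h, if_true, if_pos rfl]
      exact (max_eq_left h).symm
    · simp only [h, if_false, one_ne_zero]
      exact (max_eq_right (le_of_not_ge h)).symm
  -- basic arctan facts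
  have hbd : ∀ x : ℝ, |Real.arctan x| ≤ Real.pi / 2 := fun x =>
    abs_le.2 ⟨(Real.neg_pi_div_two_lt_arctan x).le, (Real.arctan_lt_pi_div_two x).le⟩
  have hintg : ∀ f : Ω → ℝ, Measurable[F] f → (∀ ω, |f ω| ≤ Real.pi / 2) → Integrable f μ := by
    intro f hf hb
    exact (integrable_const (Real.pi / 2)).mono'
      ((hf.mono hF le_rfl).aestronglyMeasurable) (ae_of_all _ fun ω => by simpa using hb ω)
  have hφmeas : ∀ X ∈ C, Measurable[F] fun ω => Real.arctan ‖X ω‖ := fun X hX =>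
    Real.continuous_arctan.measurable.comp (hmeas X hX).norm
  have hφint : ∀ X ∈ C, Integrable (fun ω => Real.arctan ‖X ω‖) μ := fun X hX =>
    hintg _ (hφmeas X hX) fun ω => hbd _
  set Sv : Set ℝ := (fun X : Ω → EuclideanSpace ℝ (Fin N) => ∫ ω, Real.arctan ‖X ω‖ ∂μ) '' C
    with hSv
  have hSvne : Sv.Nonempty := hne.image _
  have hSvbdd : BddAbove Sv := by
    refine ⟨Real.pi / 2, ?_⟩
    rintro r ⟨X, hX, rfl⟩
    have := integral_mono (hφint X hX) (integrable_const (Real.pi / 2))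
      (fun ω => (Real.arctan_lt_pi_div_two _).le)
    simpa using this
  set s : ℝ := sSup Sv with hs
  have hub : ∀ X ∈ C, ∫ ω, Real.arctan ‖X ω‖ ∂μ ≤ s := fun X hX =>
    le_csSup hSvbdd ⟨X, hX, rfl⟩
  -- near-maximizing sequence
  have hZex : ∀ k : ℕ, ∃ X ∈ C, s - 1 / (k + 1) < ∫ ω, Real.arctan ‖X ω‖ ∂μ := by
    intro k
    have hlt : s - 1 / ((k : ℝ) + 1) < s := by
      have : (0:ℝ) < 1 / ((k : ℝ) + 1) := by positivity
      linarith
    obtain ⟨r, hr, hlt'⟩ := exists_lt_of_lt_csSup hSvne hlt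
    obtain ⟨X, hX, rfl⟩ := hr
    exact ⟨X, hX, hlt'⟩
  choose Z hZC hZlt using hZex
  -- monotone envelope sequence via recursion
  have comb' : ∀ UV : {f : Ω → EuclideanSpace ℝ (Fin N) // f ∈ C} ×
      {f : Ω → EuclideanSpace ℝ (Fin N) // f ∈ C},
      ∃ R : {f : Ω → EuclideanSpace ℝ (Fin N) // f ∈ C},
        ∀ ω, ‖R.1 ω‖ = max ‖UV.1.1 ω‖ ‖UV.2.1 ω‖ := by
    rintro ⟨⟨U, hU⟩, ⟨V, hV⟩⟩
    obtain ⟨R, hR, h⟩ := comb U hU V hV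
    exact ⟨⟨R, hR⟩, h⟩
  choose cb hcb using comb'
  set T : ℕ → {f : Ω → EuclideanSpace ℝ (Fin N) // f ∈ C} := fun k =>
    Nat.rec ⟨Z 0, hZC 0⟩ (fun m Tm => cb (Tm, ⟨Z (m + 1), hZC (m + 1)⟩)) k with hT
  set W : ℕ → Ω → EuclideanSpace ℝ (Fin N) := fun k => (T k).1 with hWdef
  have hWC : ∀ k, W k ∈ C := fun k => (T k).2
  have hTsucc : ∀ k ω, ‖W (k + 1) ω‖ = max ‖W k ω‖ ‖Z (k + 1) ω‖ := fun k ω =>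
    hcb (T k, ⟨Z (k + 1), hZC (k + 1)⟩) ω
  have hWmono : ∀ k ω, ‖W k ω‖ ≤ ‖W (k + 1) ω‖ := by
    intro k ω; rw [hTsucc k ω]; exact le_max_left _ _
  have hWZ : ∀ k ω, ‖Z k ω‖ ≤ ‖W k ω‖ := by
    intro k ω
    cases k with
    | zero => exact le_rfl
    | succ k => rw [hTsucc k ω]; exact le_max_right _ _
  have hφWmono : ∀ ω, Monotone fun k => Real.arctan ‖W k ω‖ := fun ω =>
    monotone_nat_of_le_succ fun k => Real.arctan_strictMono.monotone (hWmono k ω)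
  set g : Ω → ℝ := fun ω => ⨆ k, Real.arctan ‖W k ω‖ with hgdef
  have hgbdd : ∀ ω, BddAbove (Set.range fun k => Real.arctan ‖W k ω‖) := fun ω =>
    ⟨Real.pi / 2, by rintro _ ⟨k, rfl⟩; exact (Real.arctan_lt_pi_div_two _).le⟩
  have hgt : ∀ ω, Tendsto (fun k => Real.arctan ‖W k ω‖) atTop (nhds (g ω)) := fun ω =>
    tendsto_atTop_ciSup (hφWmono ω) (hgbdd ω)
  have hgle : ∀ ω k, Real.arctan ‖W k ω‖ ≤ g ω := fun ω k => le_ciSup (hgbdd ω) k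
  have hgub : ∀ ω, g ω ≤ Real.pi / 2 := fun ω =>
    ciSup_le fun k => (Real.arctan_lt_pi_div_two _).le
  have hgabs : ∀ ω, |g ω| ≤ Real.pi / 2 := by
    intro ω
    refine abs_le.2 ⟨?_, hgub ω⟩
    have h0 : (0:ℝ) ≤ Real.arctan ‖W 0 ω‖ := by
      rw [← Real.arctan_zero]
      exact Real.arctan_strictMono.monotone (norm_nonneg _)
    nlinarith [Real.pi_pos, hgle ω 0]
  have hgmeas : Measurable[F] g :=
    measurable_of_tendsto_metrizable (fun k => hφmeas (W k) (hWC k))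
      (tendsto_pi_nhds.2 hgt)
  have hgint : Integrable g μ := hintg g hgmeas hgabs
  -- ∫ g ≥ s
  have hWtoInt : Tendsto (fun k => ∫ ω, Real.arctan ‖W k ω‖ ∂μ) atTop (nhds (∫ ω, g ω ∂μ)) :=
    tendsto_integral_of_dominated_convergence (fun _ => Real.pi / 2)
      (fun k => (hφint (W k) (hWC k)).aestronglyMeasurable)
      (integrable_const _)
      (fun k => ae_of_all _ fun ω => by simpa using hbd ‖W k ω‖)
      (ae_of_all _ hgt)
  have hgs : s ≤ ∫ ω, g ω ∂μ := by
    have h2 : Tendsto (fun k : ℕ => s - 1 / ((k : ℝ) + 1)) atTop (nhds (s - 0)) :=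
      tendsto_const_nhds.sub tendsto_one_div_add_atTop_nhds_zero_nat
    rw [sub_zero] at h2
    refine le_of_tendsto_of_tendsto' h2 hWtoInt fun k => ?_
    refine (hZlt k).le.trans ?_
    exact integral_mono (hφint _ (hZC k)) (hφint _ (hWC k))
      (fun ω => Real.arctan_strictMono.monotone (hWZ k ω))
  -- g dominates C a.e.
  have hdom : ∀ X ∈ C, ∀ᵐ ω ∂μ, Real.arctan ‖X ω‖ ≤ g ω := by
    intro X hX
    choose V hVC hVnorm using fun k => comb X hX (W k) (hWC k)
    have hVφ : ∀ k ω, Real.arctan ‖V k ω‖ = max (Real.arctan ‖X ω‖) (Real.arctan ‖W k ω‖) := by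
      intro k ω
      rw [hVnorm k ω]
      exact Real.arctan_strictMono.monotone.map_max
    have hmaxb : ∀ ω, |max (Real.arctan ‖X ω‖) (g ω)| ≤ Real.pi / 2 := by
      intro ω
      rw [abs_le]
      constructor
      · exact le_max_of_le_right (abs_le.1 (hgabs ω)).1
      · exact max_le (abs_le.1 (hbd ‖X ω‖)).2 (hgub ω)
    have hmaxint : Integrable (fun ω => max (Real.arctan ‖X ω‖) (g ω)) μ :=
      hintg _ ((hφmeas X hX).max hgmeas) hmaxb
    have hVto : Tendsto (fun k => ∫ ω, Real.arctan ‖V k ω‖ ∂μ) atTop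
        (nhds (∫ ω, max (Real.arctan ‖X ω‖) (g ω) ∂μ)) := by
      refine tendsto_integral_of_dominated_convergence (fun _ => Real.pi / 2)
        (fun k => (hφint _ (hVC k)).aestronglyMeasurable) (integrable_const _)
        (fun k => ae_of_all _ fun ω => by simpa using hbd ‖V k ω‖)
        (ae_of_all _ fun ω => ?_)
      simp_rw [hVφ]
      exact tendsto_const_nhds.max (hgt ω)
    have hmax_le : ∫ ω, max (Real.arctan ‖X ω‖) (g ω) ∂μ ≤ s :=
      le_of_tendsto hVto (Eventually.of_forall fun k => hub _ (hVC k))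
    have hzero : ∫ ω, (max (Real.arctan ‖X ω‖) (g ω) - g ω) ∂μ = 0 := by
      rw [integral_sub hmaxint hgint]
      have h1 : 0 ≤ ∫ ω, (max (Real.arctan ‖X ω‖) (g ω) - g ω) ∂μ :=
        integral_nonneg fun ω => sub_nonneg.2 (le_max_right _ _)
      rw [integral_sub hmaxint hgint] at h1
      linarith
    have heq := (integral_eq_zero_iff_of_nonneg
      (fun ω => sub_nonneg.2 (le_max_right _ _)) (hmaxint.sub hgint)).1 hzero
    filter_upwards [heq] with ω hω
    have : max (Real.arctan ‖X ω‖) (g ω) = g ω := by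
      have h0 : max (Real.arctan ‖X ω‖) (g ω) - g ω = 0 := hω
      linarith
    exact max_eq_right_iff.1 this
  -- the bad set
  set Sb : Set Ω := {ω | Real.pi / 2 ≤ g ω} with hSbdef
  have hSbF : MeasurableSet[F] Sb := measurableSet_le measurable_const hgmeas
  have hSbm : MeasurableSet[m0] Sb := hF _ hSbF
  have hμSb : μ Sb ≠ 0 := by
    intro h0
    apply hunbdd
    refine ⟨fun ω => Real.sin (g ω) / Real.cos (g ω),
      (Real.measurable_sin.comp hgmeas).div (Real.measurable_cos.comp hgmeas), ?_⟩
    intro X hX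
    have hS0 : ∀ᵐ ω ∂μ, g ω < Real.pi / 2 := by
      have h1 : ∀ᵐ ω ∂μ, ω ∉ Sb := measure_eq_zero_iff_ae_notMem.1 h0
      filter_upwards [h1] with ω hω
      exact lt_of_not_ge hω
    filter_upwards [hdom X hX, hS0] with ω h1 h2
    have harc := Real.arctan_mem_Ioo ‖X ω‖
    have hgmem : g ω ∈ Set.Ioo (-(Real.pi / 2)) (Real.pi / 2) :=
      ⟨harc.1.trans_le h1, h2⟩
    calc ‖X ω‖ = Real.tan (Real.arctan ‖X ω‖) := (Real.tan_arctan _).symm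
      _ ≤ Real.tan (g ω) := Real.strictMonoOn_tan.monotoneOn harc hgmem h1
      _ = Real.sin (g ω) / Real.cos (g ω) := Real.tan_eq_sin_div_cos _
  -- on Sb, the norms of W blow up
  have hSW : ∀ ω ∈ Sb, ∀ n : ℕ, ∃ k, (n : ℝ) ≤ ‖W k ω‖ := by
    intro ω hω n
    by_contra hcon
    push_neg at hcon
    have hle : g ω ≤ Real.arctan n :=
      ciSup_le fun k => Real.arctan_strictMono.monotone (hcon k).le
    have hω' : Real.pi / 2 ≤ g ω := hω
    exact absurd (hω'.trans hle) (not_le.2 (Real.arctan_lt_pi_div_two _))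
  -- build the divergent sequence
  have hfinal : ∀ n : ℕ, ∃ Xn ∈ C, ∀ ω ∈ Sb, (n : ℝ) ≤ ‖Xn ω‖ := by
    intro n
    set τ : Ω → ℕ := fun ω => if h : ∃ k, (n : ℝ) ≤ ‖W k ω‖ then Nat.find h else 0 with hτdef
    set B : ℕ → Set Ω := fun j => {ω | (n : ℝ) ≤ ‖W j ω‖} with hBdef
    have hB : ∀ j, MeasurableSet[F] (B j) :=
      fun j => measurableSet_le measurable_const (hmeas _ (hWC j)).norm
    have hτpre : ∀ k, τ ⁻¹' {k} =
        (B k ∩ ⋂ j, ⋂ _ : j < k, (B j)ᶜ) ∪ (if k = 0 then ⋂ j, (B j)ᶜ else ∅) := by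
      intro k
      ext ω
      constructor
      · intro hk
        have hk' : τ ω = k := hk
        by_cases hex : ∃ j, (n : ℝ) ≤ ‖W j ω‖
        · left
          have hfind : Nat.find hex = k := by
            have : τ ω = Nat.find hex := dif_pos hex
            rw [this] at hk'
            exact hk'
          obtain ⟨h1, h2⟩ := (Nat.find_eq_iff hex).1 hfind
          exact ⟨h1, Set.mem_iInter.2 fun j => Set.mem_iInter.2 fun hj => h2 j hj⟩
        · right
          have hk0 : k = 0 := by
            have : τ ω = 0 := dif_neg hex
            rw [this] at hk'
            exact hk'.symm
          rw [if_pos hk0]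
          push_neg at hex
          exact Set.mem_iInter.2 fun j => not_le.2 (hex j)
      · intro hmem
        show τ ω = k
        rcases hmem with ⟨h1, h2⟩ | hcase
        · have hex : ∃ j, (n : ℝ) ≤ ‖W j ω‖ := ⟨k, h1⟩
          have hfind : Nat.find hex = k := (Nat.find_eq_iff hex).2
            ⟨h1, fun j hj => Set.mem_iInter.1 (Set.mem_iInter.1 h2 j) hj⟩
          have : τ ω = Nat.find hex := dif_pos hex
          rw [this, hfind]
        · by_cases hk : k = 0
          · subst hk
            rw [if_pos rfl] at hcase
            have hex : ¬ ∃ j, (n : ℝ) ≤ ‖W j ω‖ := by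
              rintro ⟨j, hj⟩
              exact Set.mem_iInter.1 hcase j hj
            exact dif_neg hex
          · rw [if_neg hk] at hcase
            exact hcase.elim
    have hτmeas : Measurable[F] τ := by
      refine measurable_to_countable' fun k => ?_
      rw [hτpre k]
      refine MeasurableSet.union ((hB k).inter ?_) ?_
      · exact MeasurableSet.iInter fun j => MeasurableSet.iInter fun _ => (hB j).compl
      · split_ifs
        · exact MeasurableSet.iInter fun j => (hB j).compl
        · exact MeasurableSet.empty
    refine ⟨fun ω => W (τ ω) ω, key W hWC τ hτmeas, ?_⟩
    intro ω hω
    have hex := hSW ω hω n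
    have hτω : τ ω = Nat.find hex := dif_pos hex
    show (n : ℝ) ≤ ‖W (τ ω) ω‖
    rw [hτω]
    exact Nat.find_spec hex
  choose XX hXXC hXXb using hfinal
  exact ⟨Sb, hSbF, pos_iff_ne_zero.2 hμSb, XX, hXXC,
    fun n => ae_of_all _ fun ω hω => hXXb n ω hω⟩
end

section
/- Let C be a set of [0,∞)-valued random variables on a probability space (Ω,𝒢,P) and ℱ ⊆ 𝒢 a sub-σ-algebra. Assume that for every ℱ-measurable ε with ε > 0 a.s. there exists a ∈ L^0(ℱ) such that P(h ≥ a | ℱ) ≤ ε a.s. for every h ∈ C. Then C is bounded in probability: sup_{h ∈ C} P(h ≥ n) → 0 as n → ∞. -/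
open MeasureTheory Filter
open scoped ENNReal

/-- Let `C` be a set of `[0,∞)`-valued random variables and `ℱ ⊆ 𝒢` a
sub-σ-algebra.  If for every `ℱ`-measurable `ε > 0` a.s. there is `a ∈ L⁰(ℱ)` such that
`P(h ≥ a | ℱ) ≤ ε` a.s. for every `h ∈ C`, then `C` is bounded in probability:
`sup_{h ∈ C} P(h ≥ n) → 0` as `n → ∞`. -/
theorem conditionally_bounded_implies_bounded_in_probability
    {Ω : Type*} (F : MeasurableSpace Ω) {m0 : MeasurableSpace Ω} (μ : Measure Ω) [IsProbabilityMeasure μ]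
    (hF : F ≤ m0)
    (C : Set (Ω → ℝ)) (hmeas : ∀ h ∈ C, Measurable h) (hpos : ∀ h ∈ C, ∀ ω, 0 ≤ h ω)
    (hcb : ∀ ε : Ω → ℝ, Measurable[F] ε → (∀ᵐ ω ∂μ, 0 < ε ω) →
      ∃ a : Ω → ℝ, Measurable[F] a ∧ ∀ h ∈ C,
        ∀ᵐ ω ∂μ, (μ[Set.indicator {ω' | a ω' ≤ h ω'} (fun _ => (1 : ℝ)) | F]) ω ≤ ε ω) :
    Filter.Tendsto (fun n : ℕ => ⨆ h ∈ C, μ {ω | (n : ℝ) ≤ h ω}) Filter.atTop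
      (nhds (0 : ℝ≥0∞)) := by
  letI : MeasurableSpace Ω := m0
  rw [ENNReal.tendsto_atTop_zero]
  intro δ hδ
  set d : ℝ := (min δ 1).toReal / 2 with hd
  have hmin_ne : min δ 1 ≠ ∞ := ne_top_of_le_ne_top ENNReal.one_ne_top (min_le_right _ _)
  have hd_pos : 0 < d := by
    apply div_pos _ two_pos
    rw [ENNReal.toReal_pos_iff]
    exact ⟨lt_min hδ one_pos, lt_top_iff_ne_top.mpr hmin_ne⟩
  obtain ⟨a, ha, hbound⟩ := hcb (fun _ => d) measurable_const (Filter.Eventually.of_forall fun _ => hd_pos)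
  have ha0 : Measurable[m0] a := fun s hs => hF _ (ha hs)
  have key : ∀ h ∈ C, μ {ω | a ω ≤ h ω} ≤ ENNReal.ofReal d := by
    intro h hh
    set S := {ω | a ω ≤ h ω} with hSdef
    have hS0 : MeasurableSet[m0] S := measurableSet_le ha0 (hmeas h hh)
    have hint : Integrable (S.indicator fun _ => (1 : ℝ)) μ :=
      (integrable_const (1 : ℝ)).indicator hS0
    have h1 : ∫ ω, (μ[S.indicator (fun _ => (1 : ℝ))|F]) ω ∂μ = (μ S).toReal := by
      rw [integral_condExp hF, integral_indicator_const _ hS0]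
      simp [Measure.real]
    have h2 : ∫ ω, (μ[S.indicator (fun _ => (1 : ℝ))|F]) ω ∂μ ≤ ∫ _ω, d ∂μ :=
      integral_mono_ae integrable_condExp (integrable_const d) (hbound h hh)
    rw [h1, integral_const] at h2
    simp at h2
    calc μ S = ENNReal.ofReal (μ S).toReal := (ENNReal.ofReal_toReal (measure_ne_top μ S)).symm
      _ ≤ ENNReal.ofReal d := ENNReal.ofReal_le_ofReal h2
  have hiInter : (⋂ n : ℕ, {ω | (n : ℝ) < a ω}) = ∅ := by
    ext ω
    simp only [Set.mem_iInter, Set.mem_setOf_eq, Set.mem_empty_iff_false, iff_false, not_forall,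
      not_lt]
    exact ⟨⌈a ω⌉₊, Nat.le_ceil _⟩
  have htail : Tendsto (fun n : ℕ => μ {ω | (n : ℝ) < a ω}) atTop (nhds 0) := by
    have := tendsto_measure_iInter_atTop (μ := μ) (s := fun n : ℕ => {ω | (n : ℝ) < a ω})
      (fun n => (hF _ (measurableSet_lt measurable_const ha : MeasurableSet[F] _)).nullMeasurableSet)
      (fun i j hij => Set.setOf_subset_setOf.mpr fun ω hω =>
        lt_of_le_of_lt (by exact_mod_cast Nat.cast_le.mpr hij) hω)
      ⟨0, measure_ne_top μ _⟩
    rwa [hiInter, measure_empty] at this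
  obtain ⟨N, hN⟩ := ENNReal.tendsto_atTop_zero.mp htail (ENNReal.ofReal d)
    (ENNReal.ofReal_pos.mpr hd_pos)
  refine ⟨N, fun n hn => ?_⟩
  refine iSup₂_le fun h hh => ?_
  have hsub : {ω | (n : ℝ) ≤ h ω} ⊆ {ω | a ω ≤ h ω} ∪ {ω | (n : ℝ) < a ω} := by
    intro ω hω
    by_cases hc : a ω ≤ h ω
    · exact Or.inl hc
    · exact Or.inr (lt_of_le_of_lt hω (not_le.mp hc))
  calc μ {ω | (n : ℝ) ≤ h ω} ≤ μ ({ω | a ω ≤ h ω} ∪ {ω | (n : ℝ) < a ω}) := measure_mono hsub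
    _ ≤ μ {ω | a ω ≤ h ω} + μ {ω | (n : ℝ) < a ω} := measure_union_le _ _
    _ ≤ ENNReal.ofReal d + ENNReal.ofReal d := add_le_add (key h hh) (hN n hn)
    _ = ENNReal.ofReal (d + d) := (ENNReal.ofReal_add hd_pos.le hd_pos.le).symm
    _ = min δ 1 := by rw [hd]; ring_nf; rw [ENNReal.ofReal_toReal hmin_ne]
    _ ≤ δ := min_le_left _ _
end

section
/- Let ℱ ⊆ 𝒢 be sub-σ-algebras, p ∈ [1,∞), N ∈ ℕ, and let U : L^p_ℱ(𝒢) → L^0(ℱ) ∪ {−∞} be L^0–L^p upper semicontinuous. Let Δ ∈ (L^p_ℱ(𝒢))^N, let (A_n) ⊆ (L^0(ℱ))^N converge a.s. to A ∈ (L^0(ℱ))^N, and let (Γ_n) be a sequence bounded in L^p_ℱ(𝒢) with Γ_n → Γ a.s. Then limsup_n U(A_n·Δ + Γ_n) ≤ U(A·Δ + Γ) a.s. In particular (taking Γ_n = 0) the map A ∈ (L^0(ℱ))^N ↦ U(A·Δ) is L^0-upper semicontinuous. -/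
/-! `U` only controls sequences that are bounded in `L^p_ℱ(𝒢)`, so everything reduces to showing
that `A_n·Δ + Γ_n` is such a sequence. Convexity of `x ↦ |x|^p` gives
`|A_n·Δ + Γ_n|^p ≤ (N+1)^(p-1) (∑ᵢ |A_n^i|^p |Δ_i|^p + |Γ_n|^p)`. The `ℱ`-measurable factors
`|A_n^i|^p` come out of the conditional expectation, and since `A_n` converges they are dominated
by the a.s. finite `ℱ`-measurable `(supₙ |A_n^i|)^p`.

The truncated conditional moment `condExpAbsPow` agrees a.s. with the conditional Lebesgue
expectation `μ⁻[‖X‖ₑ ^ p | ℱ]` (monotone convergence), which supplies monotonicity, additivity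
and the pull-out property. -/

open MeasureTheory Filter
open scoped ENNReal

variable {Ω : Type*} {m0 : MeasurableSpace Ω}

/-- The conditional expectation `E[|X|^p | F]`, with values in `[0,∞]`, defined through
monotone truncation. -/
noncomputable def condExpAbsPow (μ : Measure Ω) (F : MeasurableSpace Ω) (p : ℝ)
    (X : Ω → ℝ) : Ω → ℝ≥0∞ :=
  fun ω => ⨆ n : ℕ, ENNReal.ofReal ((μ[fun ω' => min (|X ω'| ^ p) (n : ℝ) | F]) ω)

/-- `X ∈ L^p_F(G)`: the conditional `p`-th moment is a.s. finite. -/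
def MemCondLp (μ : Measure Ω) (F : MeasurableSpace Ω) (p : ℝ) (X : Ω → ℝ) : Prop :=
  ∀ᵐ ω ∂μ, condExpAbsPow μ F p X ω < ⊤

/-- A sequence is bounded in `L^p_F(G)`: the conditional `p`-th moments are uniformly
dominated by a finite `F`-measurable random variable. -/
def BddCondLp (μ : Measure Ω) (F : MeasurableSpace Ω) (p : ℝ) (Xs : ℕ → Ω → ℝ) : Prop :=
  ∃ Y : Ω → ℝ, Measurable[F] Y ∧
    ∀ n, ∀ᵐ ω ∂μ, condExpAbsPow μ F p (Xs n) ω ≤ ENNReal.ofReal (Y ω)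

section CondLExp

variable {m mΩ : MeasurableSpace Ω} {μ : Measure Ω}

theorem condLExp_iSup_of_monotone (hm : m ≤ mΩ) [SigmaFinite (μ.trim hm)]
    {X : ℕ → Ω → ℝ≥0∞} (hX : ∀ n, Measurable (X n)) (hmono : Monotone X) :
    μ⁻[⨆ n, X n | m] =ᵐ[μ] ⨆ n, μ⁻[X n | m] := by
  have hmeas : Measurable[m] (⨆ n, μ⁻[X n | m]) := by
    simpa only [← iSup_apply] using Measurable.iSup fun n => measurable_condLExp m μ (X n)
  refine (ae_eq_condLExp hm μ _ hmeas fun s hs => ?_).symm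
  have hmono' : ∀ᵐ ω ∂μ.restrict s, Monotone fun n => μ⁻[X n | m] ω := by
    filter_upwards [ae_restrict_of_ae <| ae_all_iff.2 fun n =>
      condLExp_mono (ae_of_all _ (hmono (Nat.le_succ n)))] with ω hω
    exact monotone_nat_of_le_succ hω
  simp only [iSup_apply]
  rw [lintegral_iSup' (fun n => (measurable_condLExp' m μ _).aemeasurable) hmono',
    lintegral_iSup hX hmono]
  exact iSup_congr fun n => setLIntegral_condLExp hm μ _ hs

theorem condLExp_mul_of_measurable_left (hm : m ≤ mΩ) [SigmaFinite (μ.trim hm)]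
    {c X : Ω → ℝ≥0∞} (hc : Measurable[m] c) (hX : Measurable X) :
    μ⁻[c * X | m] =ᵐ[μ] c * μ⁻[X | m] := by
  refine (ae_eq_condLExp hm μ _ (hc.mul (measurable_condLExp m μ X)) fun s hs => ?_).symm
  have hwithDensity : ∀ Y : Ω → ℝ≥0∞, Measurable Y →
      ∫⁻ ω in s, (c * Y) ω ∂μ = ∫⁻ ω in s, c ω ∂(μ.withDensity Y).trim hm := fun Y hY => by
    rw [setLIntegral_trim hm hc hs, setLIntegral_withDensity_eq_setLIntegral_mul μ hY
      (hc.mono hm le_rfl) (hm s hs), mul_comm]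
  have htrim : (μ.withDensity μ⁻[X | m]).trim hm = (μ.withDensity X).trim hm := by
    refine @Measure.ext _ m _ _ fun t ht => ?_
    rw [trim_measurableSet_eq hm ht, trim_measurableSet_eq hm ht, withDensity_apply _ (hm t ht),
      withDensity_apply _ (hm t ht), setLIntegral_condLExp hm μ _ ht]
  rw [hwithDensity _ (measurable_condLExp' m μ X), hwithDensity X hX, htrim]

end CondLExp

theorem iSup_ofReal_min_natCast (a : ℝ) : ⨆ k : ℕ, ENNReal.ofReal (min a k) = ENNReal.ofReal a :=
  le_antisymm (iSup_le fun k => ENNReal.ofReal_le_ofReal (min_le_left _ _))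
    (le_iSup_of_le ⌈a⌉₊ (by rw [min_eq_left (Nat.le_ceil a)]))

theorem enorm_sum_mul_add_rpow_le {ι : Type*} [Fintype ι] {p : ℝ} (hp : 1 ≤ p)
    (a d : ι → ℝ) (g : ℝ) :
    ‖∑ i, a i * d i + g‖ₑ ^ p ≤
      ((Fintype.card ι : ℝ≥0∞) + 1) ^ (p - 1) * (∑ i, ‖a i‖ₑ ^ p * ‖d i‖ₑ ^ p + ‖g‖ₑ ^ p) := by
  set t : Option ι → ℝ≥0∞ := fun j => j.elim ‖g‖ₑ fun i => ‖a i‖ₑ * ‖d i‖ₑ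
  have htriangle : ‖∑ i, a i * d i + g‖ₑ ≤ ∑ j, t j := by
    rw [Fintype.sum_option, add_comm (t none)]
    refine (enorm_add_le _ _).trans (add_le_add ?_ le_rfl)
    simpa only [t, Option.elim, enorm_mul] using enorm_sum_le Finset.univ fun i => a i * d i
  calc ‖∑ i, a i * d i + g‖ₑ ^ p ≤ (∑ j, t j) ^ p :=
        ENNReal.rpow_le_rpow htriangle (by linarith)
    _ ≤ ((Finset.univ : Finset (Option ι)).card : ℝ≥0∞) ^ (p - 1) * ∑ j, t j ^ p :=
        ENNReal.rpow_sum_le_const_mul_sum_rpow _ _ hp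
    _ = _ := by
        simp [t, Fintype.sum_option, ENNReal.mul_rpow_of_nonneg _ _ (by linarith : 0 ≤ p), add_comm]

section CondLp

variable {F mΩ : MeasurableSpace Ω} {μ : Measure Ω} {p : ℝ}

theorem condExpAbsPow_ae_eq_condLExp [IsFiniteMeasure μ] (hF : F ≤ mΩ) (hp : 0 ≤ p) {X : Ω → ℝ}
    (hX : Measurable X) :
    condExpAbsPow μ F p X =ᵐ[μ] μ⁻[fun ω => ‖X ω‖ₑ ^ p | F] := by
  set g : ℕ → Ω → ℝ := fun k ω => min (|X ω| ^ p) k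
  have hg_meas : ∀ k, Measurable (g k) := fun k =>
    ((hX.abs).pow_const p).min measurable_const
  have hg_nonneg : ∀ k ω, 0 ≤ g k ω := fun k ω => le_min (by positivity) k.cast_nonneg
  have hg_int : ∀ k, Integrable (g k) μ := fun k =>
    Integrable.of_bound (hg_meas k).aestronglyMeasurable k
      (ae_of_all _ fun ω => by
        rw [Real.norm_of_nonneg (hg_nonneg k ω)]; exact min_le_right _ _)
  have hg_mono : Monotone fun k ω => ENNReal.ofReal (g k ω) := fun k l hkl ω =>
    ENNReal.ofReal_le_ofReal (min_le_min_left _ (Nat.cast_le.2 hkl))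
  have hsup : (⨆ k, fun ω => ENNReal.ofReal (g k ω)) = fun ω => ‖X ω‖ₑ ^ p := by
    ext ω
    rw [iSup_apply, iSup_ofReal_min_natCast, Real.enorm_eq_ofReal_abs,
      ENNReal.ofReal_rpow_of_nonneg (abs_nonneg _) hp]
  filter_upwards [ae_all_iff.2 fun k => condLExp_ofReal F (hg_int k) (ae_of_all _ (hg_nonneg k)),
    condLExp_iSup_of_monotone hF (fun k => (hg_meas k).ennreal_ofReal) hg_mono] with ω hk hmct
  rw [← hsup, hmct, iSup_apply]
  exact iSup_congr fun k => (hk k).symm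

theorem measurable_condExpAbsPow (X : Ω → ℝ) : Measurable[F] (condExpAbsPow μ F p X) :=
  Measurable.iSup fun _ => stronglyMeasurable_condExp.measurable.ennreal_ofReal

theorem condExpAbsPow_sum_mul_add_le [IsFiniteMeasure μ] (hF : F ≤ mΩ) (hp : 1 ≤ p)
    {ι : Type*} [Fintype ι] {a : Ω → ι → ℝ} (ha : Measurable[F] a) {Δ : ι → Ω → ℝ}
    (hΔ : ∀ i, Measurable (Δ i)) {γ : Ω → ℝ} (hγ : Measurable γ) :
    ∀ᵐ ω ∂μ, condExpAbsPow μ F p (fun ω => ∑ i, a ω i * Δ i ω + γ ω) ω ≤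
      ((Fintype.card ι : ℝ≥0∞) + 1) ^ (p - 1) *
        (∑ i, ‖a ω i‖ₑ ^ p * condExpAbsPow μ F p (Δ i) ω + condExpAbsPow μ F p γ ω) := by
  have hp0 : 0 ≤ p := zero_le_one.trans hp
  set C : ℝ≥0∞ := ((Fintype.card ι : ℝ≥0∞) + 1) ^ (p - 1)
  set α : ι → Ω → ℝ≥0∞ := fun i ω => ‖a ω i‖ₑ ^ p
  set δ : ι → Ω → ℝ≥0∞ := fun i ω => ‖Δ i ω‖ₑ ^ p
  have hα : ∀ i, Measurable[F] (α i) := fun i =>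
    (measurable_enorm.pow_const p).comp ((measurable_pi_apply i).comp ha)
  have hδ : ∀ i, Measurable (δ i) := fun i => (hΔ i).enorm.pow_const p
  have hαδ : ∀ i, Measurable (α i * δ i) := fun i => ((hα i).mono hF le_rfl).mul (hδ i)
  have hX : Measurable fun ω => ∑ i, a ω i * Δ i ω + γ ω :=
    (Finset.measurable_sum _ fun i _ =>
      (((measurable_pi_apply i).comp ha).mono hF le_rfl).mul (hΔ i)).add hγ
  have hpointwise : (fun ω => ‖∑ i, a ω i * Δ i ω + γ ω‖ₑ ^ p) ≤
      C • (∑ i, α i * δ i + fun ω => ‖γ ω‖ₑ ^ p) := fun ω => by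
    simpa [α, δ] using enorm_sum_mul_add_rpow_le hp (a ω) (fun i => Δ i ω) (γ ω)
  have hC : C ≠ ∞ := ENNReal.rpow_ne_top_of_nonneg (by linarith) (by simp)
  filter_upwards [condExpAbsPow_ae_eq_condLExp hF hp0 hX,
    condLExp_mono (mΩ := F) (ae_of_all μ hpointwise),
    condLExp_smul' (mΩ := F) (P := μ) (∑ i, α i * δ i + fun ω => ‖γ ω‖ₑ ^ p) hC,
    condLExp_add_left (mΩ := F) (P := μ) (fun ω => ‖γ ω‖ₑ ^ p)
      (Finset.aemeasurable_sum _ fun i _ => (hαδ i).aemeasurable),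
    condLExp_finsetSum F (P := μ) Finset.univ fun i => (hαδ i).aemeasurable,
    ae_all_iff.2 fun i => condLExp_mul_of_measurable_left (μ := μ) hF (hα i) (hδ i),
    ae_all_iff.2 fun i => condExpAbsPow_ae_eq_condLExp (μ := μ) hF hp0 (hΔ i),
    condExpAbsPow_ae_eq_condLExp (μ := μ) hF hp0 hγ] with ω hX hmono hsmul hadd hsum hpull hΔω hγω
  rw [hX]
  refine hmono.trans (le_of_eq ?_)
  rw [hsmul, Pi.smul_apply, hadd, Pi.add_apply, hsum, Finset.sum_apply, smul_eq_mul, hγω]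
  simp only [hpull, Pi.mul_apply, hΔω, α, δ]

theorem bddCondLp_of_ae_le {Xs : ℕ → Ω → ℝ} {Z : Ω → ℝ≥0∞} (hZ : Measurable[F] Z)
    (hZ_ne_top : ∀ᵐ ω ∂μ, Z ω ≠ ∞) (hle : ∀ n, ∀ᵐ ω ∂μ, condExpAbsPow μ F p (Xs n) ω ≤ Z ω) :
    BddCondLp μ F p Xs :=
  ⟨fun ω => (Z ω).toReal, hZ.ennreal_toReal, fun n => by
    filter_upwards [hle n, hZ_ne_top] with ω hω hω_ne_top
    rwa [ENNReal.ofReal_toReal hω_ne_top]⟩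

theorem bddCondLp_zero (hp : p ≠ 0) : BddCondLp μ F p fun _ _ => 0 :=
  ⟨0, measurable_const, fun _ => ae_of_all _ fun ω => by
    simp [condExpAbsPow, Real.zero_rpow hp]⟩

theorem bddCondLp_sum_mul_add [IsFiniteMeasure μ] (hF : F ≤ mΩ) (hp : 1 ≤ p)
    {ι : Type*} [Fintype ι] {Δ : ι → Ω → ℝ} (hΔ : ∀ i, Measurable (Δ i))
    (hΔLp : ∀ i, MemCondLp μ F p (Δ i)) {A : ℕ → Ω → ι → ℝ} (hA : ∀ n, Measurable[F] (A n))
    (hA_bdd : ∀ᵐ ω ∂μ, ∀ i, BddAbove (Set.range fun n => |A n ω i|))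
    {Γ : ℕ → Ω → ℝ} (hΓ : ∀ n, Measurable (Γ n)) (hΓ_bdd : BddCondLp μ F p Γ) :
    BddCondLp μ F p fun n ω => ∑ i, A n ω i * Δ i ω + Γ n ω := by
  obtain ⟨Y, hY, hΓY⟩ := hΓ_bdd
  set C : ℝ≥0∞ := ((Fintype.card ι : ℝ≥0∞) + 1) ^ (p - 1)
  set S : ι → Ω → ℝ≥0∞ := fun i ω => ⨆ n, ‖A n ω i‖ₑ
  have hS : ∀ i, Measurable[F] (S i) := fun i =>
    Measurable.iSup fun n => measurable_enorm.comp ((measurable_pi_apply i).comp (hA n))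
  have hS_ne_top : ∀ᵐ ω ∂μ, ∀ i, S i ω ≠ ∞ := by
    filter_upwards [hA_bdd] with ω hω i
    obtain ⟨M, hM⟩ := hω i
    refine ne_top_of_le_ne_top (ENNReal.ofReal_ne_top (r := M)) (iSup_le fun n => ?_)
    rw [Real.enorm_eq_ofReal_abs]
    exact ENNReal.ofReal_le_ofReal (hM ⟨n, rfl⟩)
  refine bddCondLp_of_ae_le (Z := fun ω =>
      C * (∑ i, S i ω ^ p * condExpAbsPow μ F p (Δ i) ω + ENNReal.ofReal (Y ω))) ?_ ?_ fun n => ?_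
  · exact ((Finset.measurable_sum _ fun i _ =>
      ((hS i).pow_const p).mul (measurable_condExpAbsPow _)).add hY.ennreal_ofReal).const_mul C
  · filter_upwards [hS_ne_top, ae_all_iff.2 hΔLp] with ω hSω hΔω
    have hC : C ≠ ∞ := ENNReal.rpow_ne_top_of_nonneg (by linarith) (by simp)
    exact ENNReal.mul_ne_top hC (ENNReal.add_ne_top.2 ⟨ENNReal.sum_ne_top.2 fun i _ =>
      ENNReal.mul_ne_top (ENNReal.rpow_ne_top_of_nonneg (by linarith) (hSω i)) (hΔω i).ne,
      ENNReal.ofReal_ne_top⟩)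
  · filter_upwards [condExpAbsPow_sum_mul_add_le hF hp (hA n) hΔ (hΓ n), hΓY n] with ω hω hYω
    refine hω.trans ?_
    gcongr with i
    exact le_iSup (fun n => ‖A n ω i‖ₑ) n

end CondLp

def L0LpUpperSemicontinuous (μ : Measure Ω) (F G : MeasurableSpace Ω) (p : ℝ)
    (U : (Ω → ℝ) → Ω → EReal) : Prop :=
  ∀ Xs : ℕ → Ω → ℝ, (∀ n, Measurable[G] (Xs n)) → BddCondLp μ F p Xs →
    ∀ X : Ω → ℝ, Measurable[G] X →
    (∀ᵐ ω ∂μ, Tendsto (fun n => Xs n ω) atTop (nhds (X ω))) →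
    ∀ᵐ ω ∂μ, limsup (fun n => U (Xs n) ω) atTop ≤ U X ω

theorem L0LpUpperSemicontinuous.ae_limsup_sum_mul_add_le {F G mΩ : MeasurableSpace Ω}
    {μ : Measure Ω} [IsFiniteMeasure μ] {p : ℝ} {U : (Ω → ℝ) → Ω → EReal}
    (hU : L0LpUpperSemicontinuous μ F G p U) (hFG : F ≤ G) (hG : G ≤ mΩ) (hp : 1 ≤ p)
    {ι : Type*} [Fintype ι] {Δ : ι → Ω → ℝ} (hΔ : ∀ i, Measurable[G] (Δ i))
    (hΔLp : ∀ i, MemCondLp μ F p (Δ i))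
    {A : ℕ → Ω → ι → ℝ} (hA : ∀ n, Measurable[F] (A n))
    {A_lim : Ω → ι → ℝ} (hA_lim : Measurable[F] A_lim)
    (hA_tendsto : ∀ᵐ ω ∂μ, ∀ i, Tendsto (fun n => A n ω i) atTop (nhds (A_lim ω i)))
    {Γ : ℕ → Ω → ℝ} (hΓ : ∀ n, Measurable[G] (Γ n)) (hΓ_bdd : BddCondLp μ F p Γ)
    {Γ_lim : Ω → ℝ} (hΓ_lim : Measurable[G] Γ_lim)
    (hΓ_tendsto : ∀ᵐ ω ∂μ, Tendsto (fun n => Γ n ω) atTop (nhds (Γ_lim ω))) :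
    ∀ᵐ ω ∂μ, limsup (fun n => U (fun ω' => ∑ i, A n ω' i * Δ i ω' + Γ n ω') ω) atTop ≤
      U (fun ω' => ∑ i, A_lim ω' i * Δ i ω' + Γ_lim ω') ω := by
  have hmeas : ∀ a : Ω → ι → ℝ, Measurable[F] a → ∀ γ : Ω → ℝ, Measurable[G] γ →
      Measurable[G] fun ω => ∑ i, a ω i * Δ i ω + γ ω := fun a ha γ hγ =>
    (Finset.measurable_sum _ fun i _ =>
      (((measurable_pi_apply i).comp ha).mono hFG le_rfl).mul (hΔ i)).add hγ
  have hA_bdd : ∀ᵐ ω ∂μ, ∀ i, BddAbove (Set.range fun n => |A n ω i|) := by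
    filter_upwards [hA_tendsto] with ω hω i
    exact (hω i).abs.bddAbove_range
  refine hU _ (fun n => hmeas _ (hA n) _ (hΓ n)) ?_ _ (hmeas _ hA_lim _ hΓ_lim) ?_
  · exact bddCondLp_sum_mul_add (hFG.trans hG) hp (fun i => (hΔ i).mono hG le_rfl) hΔLp hA hA_bdd
      (fun n => (hΓ n).mono hG le_rfl) hΓ_bdd
  · filter_upwards [hA_tendsto, hΓ_tendsto] with ω hAω hΓω
    exact (tendsto_finsetSum _ fun i _ => (hAω i).mul tendsto_const_nhds).add hΓω

/-- Let `ℱ ⊆ 𝒢`, `p ∈ [1,∞)` and `U : L^p_ℱ(𝒢) → L⁰(ℱ) ∪ {−∞}` be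
`L⁰–L^p` upper semicontinuous.  If `Δ ∈ (L^p_ℱ(𝒢))^N`, `(A_n) ⊆ (L⁰(ℱ))^N` converges a.s.
to `A`, and `(Γ_n)` is bounded in `L^p_ℱ(𝒢)` with `Γ_n → Γ` a.s., then
`limsup_n U(A_n·Δ + Γ_n) ≤ U(A·Δ + Γ)` a.s.  In particular the map `A ↦ U(A·Δ)` is
`L⁰`-upper semicontinuous. -/
theorem usc_of_l0_lp_usc
    (μ : Measure Ω) [IsProbabilityMeasure μ]
    (F G : MeasurableSpace Ω) (hFG : F ≤ G) (hG : G ≤ m0)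
    (p : ℝ) (hp : 1 ≤ p) {N : ℕ}
    (U : (Ω → ℝ) → Ω → EReal)
    (husc : ∀ Xs : ℕ → Ω → ℝ, (∀ n, Measurable[G] (Xs n)) → BddCondLp μ F p Xs →
      ∀ X : Ω → ℝ, Measurable[G] X →
      (∀ᵐ ω ∂μ, Filter.Tendsto (fun n => Xs n ω) Filter.atTop (nhds (X ω))) →
      ∀ᵐ ω ∂μ, Filter.limsup (fun n => U (Xs n) ω) Filter.atTop ≤ U X ω)
    (Δ : Fin N → Ω → ℝ) (hΔmeas : ∀ i, Measurable[G] (Δ i))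
    (hΔLp : ∀ i, MemCondLp μ F p (Δ i))
    (A : ℕ → Ω → Fin N → ℝ) (hAmeas : ∀ n, Measurable[F] (A n))
    (Ainf : Ω → Fin N → ℝ) (hAinfmeas : Measurable[F] Ainf)
    (hAtend : ∀ᵐ ω ∂μ, ∀ i, Filter.Tendsto (fun n => A n ω i) Filter.atTop (nhds (Ainf ω i)))
    (Γ : ℕ → Ω → ℝ) (hΓmeas : ∀ n, Measurable[G] (Γ n)) (hΓbdd : BddCondLp μ F p Γ)
    (Ginf : Ω → ℝ) (hGinfmeas : Measurable[G] Ginf)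
    (hΓtend : ∀ᵐ ω ∂μ, Filter.Tendsto (fun n => Γ n ω) Filter.atTop (nhds (Ginf ω))) :
    (∀ᵐ ω ∂μ,
      Filter.limsup (fun n => U (fun ω' => (∑ i, A n ω' i * Δ i ω') + Γ n ω') ω)
          Filter.atTop ≤
        U (fun ω' => (∑ i, Ainf ω' i * Δ i ω') + Ginf ω') ω) ∧
    -- in particular (Γ ≡ 0): the map `A ↦ U(A·Δ)` is `L⁰`-upper semicontinuous
    (∀ B : ℕ → Ω → Fin N → ℝ, (∀ n, Measurable[F] (B n)) →
      ∀ Binf : Ω → Fin N → ℝ, Measurable[F] Binf →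
      (∀ᵐ ω ∂μ, ∀ i, Filter.Tendsto (fun n => B n ω i) Filter.atTop (nhds (Binf ω i))) →
      ∀ᵐ ω ∂μ,
        Filter.limsup (fun n => U (fun ω' => ∑ i, B n ω' i * Δ i ω') ω) Filter.atTop ≤
          U (fun ω' => ∑ i, Binf ω' i * Δ i ω') ω) := by
  have hU : L0LpUpperSemicontinuous μ F G p U := husc
  refine ⟨hU.ae_limsup_sum_mul_add_le hFG hG hp hΔmeas hΔLp hAmeas hAinfmeas hAtend hΓmeas hΓbdd
    hGinfmeas hΓtend, fun B hB Binf hBinf hB_tendsto => ?_⟩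
  simpa using hU.ae_limsup_sum_mul_add_le hFG hG hp hΔmeas hΔLp hB hBinf hB_tendsto
    (fun _ => measurable_const) (bddCondLp_zero (by linarith)) measurable_const
    (ae_of_all _ fun _ => tendsto_const_nhds)
end

section
/- (Conditional Borel–Cantelli.) Let (Ω,𝒢,P) be a probability space, ℱ ⊆ 𝒢 a sub-σ-algebra, and (B_n) a sequence of 𝒢-measurable events such that Σ_{n} P(B_n | ℱ) < ∞ a.s. Then P(limsup_n B_n) = 0, i.e. almost surely only finitely many of the events B_n occur. In particular, if (Y_n) are nonnegative random variables such that for every l ∈ ℕ one has Σ_n P(Y_n ≥ 1/l | ℱ) < ∞ a.s., then Y_n → 0 a.s. -/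
open MeasureTheory Filter

lemma bc_aux
    {Ω : Type*} {m0 : MeasurableSpace Ω} (μ : Measure Ω) [IsProbabilityMeasure μ]
    (F : MeasurableSpace Ω) (hF : F ≤ m0)
    (B : ℕ → Set Ω) (hB : ∀ n, MeasurableSet[m0] (B n))
    (hsum : ∀ᵐ ω ∂μ,
      Summable (fun n => (μ[(B n).indicator (fun _ => (1 : ℝ)) | F]) ω)) :
    μ (⋂ m, ⋃ n, ⋃ _ : m ≤ n, B n) = 0 := by
  letI : MeasurableSpace Ω := m0
  have hB0 : ∀ n, MeasurableSet[m0] (B n) := fun n => hB n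
  set f : ℕ → Ω → ℝ := fun n => μ[(B n).indicator (fun _ => (1 : ℝ)) | F] with hf_def
  have hf_sm : ∀ n, StronglyMeasurable[F] (f n) := fun n => stronglyMeasurable_condExp
  have hf_nonneg : ∀ n, 0 ≤ᵐ[μ] f n := fun n =>
    condExp_nonneg (Filter.Eventually.of_forall fun ω =>
      Set.indicator_nonneg (fun _ _ => zero_le_one) ω)
  have hf_int : ∀ n, Integrable (f n) μ := fun n => integrable_condExp
  set g : ℕ → Ω → ENNReal := fun n ω => ENNReal.ofReal (f n ω) with hg_def
  have hg_measF : ∀ n, Measurable[F] (g n) := fun n =>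
    ENNReal.measurable_ofReal.comp (hf_sm n).measurable
  have hg_meas : ∀ n, Measurable[m0] (g n) := fun n => (hg_measF n).mono hF le_rfl
  set A : ℕ → Set Ω := fun K => {ω | (∑' n, g n ω) ≤ K} with hA_def
  have hA_measF : ∀ K, MeasurableSet[F] (A K) := fun K =>
    (Measurable.ennreal_tsum fun n => hg_measF n) (measurableSet_Iic)
  have hA_meas : ∀ K, MeasurableSet[m0] (A K) := fun K => hF _ (hA_measF K)
  have key : ∀ K n, μ (B n ∩ A K) = ∫⁻ ω in A K, g n ω ∂μ := by
    intro K n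
    have h1 : ∫ ω in A K, f n ω ∂μ = ∫ ω in A K, (B n).indicator (fun _ => (1 : ℝ)) ω ∂μ :=
      setIntegral_condExp hF ((integrable_const (1:ℝ)).indicator (hB0 n)) (hA_measF K)
    have h2 : ∫ ω in A K, (B n).indicator (fun _ => (1 : ℝ)) ω ∂μ
        = (μ (B n ∩ A K)).toReal := by
      rw [show ((fun _ => (1:ℝ)) : Ω → ℝ) = (1 : Ω → ℝ) from rfl,
        integral_indicator_one (hB0 n), measureReal_def, Measure.restrict_apply (hB0 n)]
    have h3 : ∫⁻ ω in A K, g n ω ∂μ = ENNReal.ofReal (∫ ω in A K, f n ω ∂μ) :=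
      (ofReal_integral_eq_lintegral_ofReal ((hf_int n).restrict)
        (ae_restrict_of_ae (hf_nonneg n))).symm
    rw [h3, h1, h2, ENNReal.ofReal_toReal (measure_ne_top μ _)]
  have hker : ∀ K : ℕ, μ ((⋂ m, ⋃ n, ⋃ _ : m ≤ n, B n) ∩ A K) = 0 := by
    intro K
    have hsum' : (∑' n, (μ.restrict (A K)) (B n)) ≠ ⊤ := by
      have he : ∑' n, (μ.restrict (A K)) (B n) = ∑' n, ∫⁻ ω in A K, g n ω ∂μ := by
        refine tsum_congr fun n => ?_
        rw [Measure.restrict_apply (hB0 n), key]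
      rw [he, ← lintegral_tsum (fun n => (hg_meas n).aemeasurable)]
      have hb : ∫⁻ ω in A K, (∑' n, g n ω) ∂μ ≤ ∫⁻ _ in A K, (K : ENNReal) ∂μ :=
        setLIntegral_mono' (hA_meas K) (fun ω hω => hω)
      refine ne_of_lt (lt_of_le_of_lt hb ?_)
      rw [setLIntegral_const]
      exact ENNReal.mul_lt_top (ENNReal.natCast_lt_top K) (measure_lt_top _ _)
    have h0 : (μ.restrict (A K)) (limsup B atTop) = 0 :=
      measure_limsup_atTop_eq_zero hsum'
    have hls : limsup B atTop = ⋂ m, ⋃ n, ⋃ _ : m ≤ n, B n := by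
      rw [limsup_eq_iInf_iSup_of_nat]
      simp only [Set.iInf_eq_iInter, Set.iSup_eq_iUnion]
    rw [hls, Measure.restrict_apply] at h0
    · exact h0
    · exact MeasurableSet.iInter fun m => MeasurableSet.iUnion fun n =>
        MeasurableSet.iUnion fun _ => hB0 n
  have hae : ∀ᵐ ω ∂μ, ω ∈ ⋃ K, A K := by
    filter_upwards [hsum, ae_all_iff.2 hf_nonneg] with ω hS hpos
    have h1 : (∑' n, g n ω) = ENNReal.ofReal (∑' n, f n ω) :=
      (ENNReal.ofReal_tsum_of_nonneg hpos hS).symm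
    refine Set.mem_iUnion.2 ⟨⌈∑' n, f n ω⌉₊, ?_⟩
    show (∑' n, g n ω) ≤ _
    rw [h1, ← ENNReal.ofReal_natCast]
    exact ENNReal.ofReal_le_ofReal (Nat.le_ceil _)
  have hcover : μ ((⋃ K, A K)ᶜ) = 0 := by
    have h := ae_iff.mp hae
    simpa [Set.compl_def] using h
  have hle : μ (⋂ m, ⋃ n, ⋃ _ : m ≤ n, B n) ≤
      μ ((⋂ m, ⋃ n, ⋃ _ : m ≤ n, B n) ∩ ⋃ K, A K) + μ ((⋃ K, A K)ᶜ) := by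
    refine le_trans (measure_mono ?_) (measure_union_le _ _)
    intro ω hω
    by_cases h : ω ∈ ⋃ K, A K
    · exact Or.inl ⟨hω, h⟩
    · exact Or.inr h
  rw [hcover, add_zero] at hle
  refine le_antisymm (le_trans hle ?_) (zero_le)
  rw [Set.inter_iUnion]
  refine le_trans (measure_iUnion_le _) ?_
  simp [hker]

/-- (Conditional Borel–Cantelli.)  If `(B_n)` are events with
`Σ_n P(B_n | ℱ) < ∞` a.s., then `P(limsup_n B_n) = 0`, i.e. a.s. only finitely many of the
`B_n` occur.  In particular, if `(Y_n)` are nonnegative random variables such that for every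
`l ∈ ℕ`, `l > 0`, one has `Σ_n P(Y_n ≥ 1/l | ℱ) < ∞` a.s., then `Y_n → 0` a.s. -/
theorem conditional_borel_cantelli
    {Ω : Type*} (F : MeasurableSpace Ω) {m0 : MeasurableSpace Ω} (μ : Measure Ω) [IsProbabilityMeasure μ]
    (hF : F ≤ m0)
    (B : ℕ → Set Ω) (hB : ∀ n, MeasurableSet (B n))
    (hsum : ∀ᵐ ω ∂μ,
      Summable (fun n => (μ[(B n).indicator (fun _ => (1 : ℝ)) | F]) ω)) :
    μ (⋂ m, ⋃ n, ⋃ _ : m ≤ n, B n) = 0 ∧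
      (∀ Y : ℕ → Ω → ℝ, (∀ n, Measurable (Y n)) → (∀ n ω, 0 ≤ Y n ω) →
        (∀ l : ℕ, 0 < l → ∀ᵐ ω ∂μ,
          Summable (fun n =>
            (μ[Set.indicator {ω' | 1 / (l : ℝ) ≤ Y n ω'} (fun _ => (1 : ℝ)) | F]) ω)) →
        ∀ᵐ ω ∂μ, Filter.Tendsto (fun n => Y n ω) Filter.atTop (nhds (0 : ℝ))) := by
  refine ⟨bc_aux μ F hF B hB hsum, ?_⟩
  intro Y hY hYpos hYsum
  have h_l : ∀ l : ℕ, 0 < l → ∀ᵐ ω ∂μ, ∃ m, ∀ n, m ≤ n → Y n ω < 1 / l := by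
    intro l hl
    have hC : ∀ n, MeasurableSet[m0] {ω' | 1 / (l : ℝ) ≤ Y n ω'} := fun n =>
      measurableSet_le (@measurable_const ℝ Ω _ m0 _) (hY n)
    have h0 := bc_aux μ F hF (fun n => {ω' | 1 / (l : ℝ) ≤ Y n ω'}) hC (hYsum l hl)
    have h1 : ∀ᵐ ω ∂μ, ω ∉ ⋂ m, ⋃ n, ⋃ _ : m ≤ n, {ω' | 1 / (l : ℝ) ≤ Y n ω'} :=
      measure_eq_zero_iff_ae_notMem.mp h0
    filter_upwards [h1] with ω hω
    simp only [Set.mem_iInter, Set.mem_iUnion, Set.mem_setOf_eq, not_forall, not_exists,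
      not_le] at hω
    obtain ⟨m, hm⟩ := hω
    exact ⟨m, hm⟩
  have hall : ∀ᵐ ω ∂μ, ∀ l : ℕ, ∃ m, ∀ n, m ≤ n → Y n ω < 1 / (l + 1 : ℕ) :=
    ae_all_iff.2 fun l => h_l (l + 1) (Nat.succ_pos l)
  filter_upwards [hall] with ω hω
  refine Metric.tendsto_atTop.2 fun ε hε => ?_
  obtain ⟨l, hl⟩ := exists_nat_one_div_lt hε
  obtain ⟨m, hm⟩ := hω l
  refine ⟨m, fun n hn => ?_⟩
  rw [Real.dist_eq, sub_zero, abs_of_nonneg (hYpos n ω)]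
  calc Y n ω < 1 / (l + 1 : ℕ) := hm n hn
    _ < ε := by exact_mod_cast hl
end

section
/- Let ℱ ⊆ 𝒢 be sub-σ-algebras of a probability space. Let H : ℝ → ℝ ∪ {+∞} be a proper convex, lower semicontinuous, nondecreasing function with H*(1) := sup_s (s − H(s)) = 0, that is bounded from below (equivalently 0 ∈ dom H*) and satisfies 1 + ε ∈ dom H* for some ε > 0, where H*(x) := sup_s (sx − H(s)). Define U(Y) := esssup_{s ∈ L^0(ℱ)} { s − E[H(s − Y) | ℱ] }. Then for every real-valued (a.s. finite) random variable X ∈ L^0(𝒢), the nondecreasing sequence (U(X ∧ k))_{k ∈ ℕ} satisfies sup_k U(X ∧ k) < ∞ a.s.; hence the monotone extension of the optimized certainty equivalent U to L^0(𝒢) never attains the value +∞. -/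
open MeasureTheory Filter
open scoped ENNReal

variable {Ω : Type*} {m0 : MeasurableSpace Ω}

/-- Conditional expectation of an extended-real-valued integrand, via monotone two-sided
truncation.  It coincides with `E[g | F]` whenever the negative part of `g` is conditionally
integrable (in particular when `g` is bounded below). -/
noncomputable def condExpEReal (μ : Measure Ω) (F : MeasurableSpace Ω) (g : Ω → EReal) :
    Ω → EReal :=
  fun ω => ⨆ k : ℕ, ⨅ j : ℕ,
    (((μ[fun ω' => (max (min (g ω') ((k : ℝ) : EReal)) (-((j : ℝ) : EReal))).toReal | F]) ω :
      ℝ) : EReal)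

/-- The Legendre transform `H*(x) = sup_s (s x − H(s))`. -/
noncomputable def legendre (H : ℝ → EReal) (x : ℝ) : EReal :=
  ⨆ s : ℝ, ((s * x : ℝ) : EReal) - H s

/-! Since `H*(1 + ε) = c < ∞`, `H` dominates `φ(l) = max(m, (1 + ε) l - c)`, where `m` is a
lower bound of `H`. Let `N` be the least `n` with `P(X ≤ n | ℱ) ≥ (1 + ε)⁻¹`: an `ℱ`-measurable,
a.s. finite conditional quantile of `X`. On `{X ≤ N}` we have `H(s - X ∧ k) ≥ φ(s - N)` and
elsewhere `H ≥ m`, so `E[H(s - X ∧ k) | ℱ] ≥ m + (φ(s - N) - m) (1 + ε)⁻¹`, which bounds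
`s - E[H(s - X ∧ k) | ℱ]` by `N + (c + m) / (1 + ε) - m` uniformly in `k` and `s`. -/

theorem coe_mul_sub_le_of_legendre_le {H : ℝ → EReal} {x c : ℝ} (h : legendre H x ≤ c)
    (l : ℝ) : ((l * x - c : ℝ) : EReal) ≤ H l := by
  have hl : ((l * x : ℝ) : EReal) - H l ≤ c :=
    (le_iSup (fun s : ℝ => ((s * x : ℝ) : EReal) - H s) l).trans h
  rw [EReal.sub_le_iff_le_add (.inr (EReal.coe_ne_top c)) (.inr (EReal.coe_ne_bot c))] at hl
  exact EReal.coe_sub _ _ ▸ EReal.sub_le_of_le_add' hl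

theorem coe_max_mul_sub_le_of_legendre_ne_top {H : ℝ → EReal} {m x : ℝ}
    (hm : ∀ l, (m : EReal) ≤ H l) (hx : legendre H x ≠ ⊤) (l : ℝ) :
    ((max m (x * l - (legendre H x).toReal) : ℝ) : EReal) ≤ H l := by
  rw [EReal.coe_strictMono.monotone.map_max, mul_comm]
  exact max_le (hm l) (coe_mul_sub_le_of_legendre_le (EReal.le_coe_toReal hx) l)

theorem sub_const_add_max_mul_le {r c m s x p : ℝ} (hr : 0 < r) (hp : r⁻¹ ≤ p) :
    s - (m + (max m (r * (s - x) - c) - m) * p) ≤ x + (c + m) / r - m := by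
  rcases le_total (r * (s - x) - c) m with h | h
  · rw [max_eq_left h, sub_self, zero_mul, add_zero]
    have : s - x ≤ (c + m) / r := by rw [le_div_iff₀ hr]; linarith
    linarith
  · rw [max_eq_right h]
    have key : (r * (s - x) - c - m) * r⁻¹ ≤ (r * (s - x) - c - m) * p :=
      mul_le_mul_of_nonneg_left hp (by linarith)
    have hexp : (r * (s - x) - c - m) * r⁻¹ = s - x - (c + m) / r := by
      field_simp
      ring
    linarith

section

variable {α : Type*} {F mα : MeasurableSpace α} {μ : Measure α}

theorem exists_measurable_nat_mem {S : ℕ → Set α} (hS : ∀ n, MeasurableSet (S n)) :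
    ∃ N : α → ℕ, Measurable N ∧ ∀ ω, (∃ n, ω ∈ S n) → ω ∈ S (N ω) := by
  classical
  -- enlarging every `S n` by the complement of `⋃ n, S n` makes `Nat.find` total
  set S' : ℕ → Set α := fun n => S n ∪ (⋃ i, S i)ᶜ
  have hS' : ∀ ω, ∃ n, ω ∈ S' n := fun ω => by
    by_cases h : ∃ n, ω ∈ S n
    · exact h.imp fun n hn => Or.inl hn
    · exact ⟨0, Or.inr (by simpa using h)⟩
  refine ⟨fun ω => Nat.find (hS' ω),
    measurable_find hS' fun n => (hS n).union (MeasurableSet.iUnion hS).compl, fun ω hω => ?_⟩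
  exact (Nat.find_spec (hS' ω)).resolve_right (not_not.2 (Set.mem_iUnion.2 hω))

theorem ae_exists_le_of_tendsto_integral [IsProbabilityMeasure μ]
    {f : ℕ → α → ℝ} (hf : ∀ n, Integrable (f n) μ) (hf_meas : ∀ n, Measurable (f n))
    (hf_le : ∀ n, f n ≤ᵐ[μ] 1) (hlim : Tendsto (fun n => ∫ ω, f n ω ∂μ) atTop (nhds 1))
    {θ : ℝ} (hθ : θ < 1) : ∀ᵐ ω ∂μ, ∃ n, θ ≤ f n ω := by
  set bad : Set α := ⋂ n, {ω | f n ω < θ}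
  have hbad : MeasurableSet bad :=
    MeasurableSet.iInter fun n => measurableSet_lt (hf_meas n) measurable_const
  have hbound : ∀ n, ∫ ω, f n ω ∂μ ≤ 1 - (1 - θ) * μ.real bad := by
    intro n
    have hle : f n ≤ᵐ[μ] fun ω => 1 - (1 - θ) * bad.indicator 1 ω := by
      filter_upwards [hf_le n] with ω hω
      by_cases h : ω ∈ bad
      · simp only [Set.indicator_of_mem h, Pi.one_apply]
        have hn : f n ω < θ := Set.mem_iInter.1 h n
        linarith
      · simp only [Set.indicator_of_notMem h]
        simpa using hω
    calc ∫ ω, f n ω ∂μ ≤ ∫ ω, 1 - (1 - θ) * bad.indicator 1 ω ∂μ :=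
          integral_mono_ae (hf n)
            ((integrable_const 1).sub (((integrable_const 1).indicator hbad).const_mul _)) hle
      _ = 1 - (1 - θ) * μ.real bad := by
          rw [integral_sub (integrable_const 1) (((integrable_const 1).indicator hbad).const_mul _),
            integral_const_mul, integral_indicator_one hbad]
          simp
  have hnull : μ.real bad = 0 := by
    have := le_of_tendsto' hlim hbound
    nlinarith [measureReal_nonneg (μ := μ) (s := bad)]
  rw [measureReal_eq_zero_iff] at hnull
  filter_upwards [measure_eq_zero_iff_ae_notMem.1 hnull] with ω hω
  simpa [bad] using hω

theorem ae_exists_le_condExp_indicator [IsProbabilityMeasure μ] (hF : F ≤ mα) {A : ℕ → Set α}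
    (hA : ∀ n, MeasurableSet (A n)) (hA_mono : Monotone A) (hA_cover : ⋃ n, A n = Set.univ)
    {θ : ℝ} (hθ : θ < 1) : ∀ᵐ ω ∂μ, ∃ n, θ ≤ μ[(A n).indicator 1 | F] ω := by
  refine ae_exists_le_of_tendsto_integral (fun n => integrable_condExp)
    (fun n => (stronglyMeasurable_condExp.mono hF).measurable) (fun n => ?_) ?_ hθ
  · have h := condExp_mono (m := F) ((integrable_const (1 : ℝ)).indicator (hA n))
      (integrable_const 1) (ae_of_all μ (Set.indicator_le_self' fun _ _ => zero_le_one))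
    rwa [condExp_const hF] at h
  · simp_rw [integral_condExp hF, integral_indicator_one (hA _)]
    have h := tendsto_measure_iUnion_atTop (μ := μ) hA_mono
    rw [hA_cover, measure_univ] at h
    exact (ENNReal.tendsto_toReal ENNReal.one_ne_top).comp h

theorem coe_condExp_le_condExpEReal [IsFiniteMeasure μ] {g : α → EReal} (hg : Measurable g)
    {f : α → ℝ} (hf : Integrable f μ) {K : ℕ} (hfK : ∀ ω, f ω ≤ K)
    (hfg : ∀ ω, (f ω : EReal) ≤ g ω) :
    ∀ᵐ ω ∂μ, (μ[f | F] ω : EReal) ≤ condExpEReal μ F g ω := by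
  set trunc : ℕ → α → EReal := fun j ω => max (min (g ω) ((K : ℝ) : EReal)) (-((j : ℝ) : EReal))
  have htrunc_ge : ∀ (j : ℕ) ω, ((-(j : ℝ) : ℝ) : EReal) ≤ trunc j ω := fun j ω => by
    rw [EReal.coe_neg]; exact le_max_right _ _
  have htrunc_le : ∀ j ω, trunc j ω ≤ ((K : ℝ) : EReal) := fun j ω =>
    max_le (min_le_right _ _) (by
      rw [← EReal.coe_neg, EReal.coe_le_coe_iff]
      exact (neg_nonpos.2 j.cast_nonneg).trans K.cast_nonneg)
  have htrunc : ∀ j ω, (((trunc j ω).toReal : ℝ) : EReal) = trunc j ω := fun j ω =>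
    EReal.coe_toReal ((htrunc_le j ω).trans_lt (EReal.coe_lt_top _)).ne
      ((EReal.bot_lt_coe _).trans_le (htrunc_ge j ω)).ne'
  have hle : ∀ j, μ[f | F] ≤ᵐ[μ] μ[fun ω => (trunc j ω).toReal | F] := by
    intro j
    refine condExp_mono hf ?_ (ae_of_all μ fun ω => ?_)
    · refine Integrable.of_bound
        (hg.min measurable_const |>.max measurable_const).ereal_toReal.aestronglyMeasurable
        (K + j) (ae_of_all μ fun ω => ?_)
      have h1 := htrunc_ge j ω
      have h2 := htrunc_le j ω
      rw [← htrunc, EReal.coe_le_coe_iff] at h1 h2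
      rw [Real.norm_eq_abs, abs_le]
      have hK : (0 : ℝ) ≤ K := K.cast_nonneg
      have hj : (0 : ℝ) ≤ j := j.cast_nonneg
      constructor <;> linarith
    · rw [← EReal.coe_le_coe_iff, htrunc]
      exact le_max_of_le_left (le_min (hfg ω) (EReal.coe_le_coe_iff.2 (hfK ω)))
  filter_upwards [ae_all_iff.2 hle] with ω hω
  exact le_iSup_of_le K (le_iInf fun j => EReal.coe_le_coe_iff.2 (hω j))

theorem condExp_const_add_mul_ae_eq [IsFiniteMeasure μ] (hF : F ≤ mα) (c : ℝ) {b f : α → ℝ}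
    (hb : StronglyMeasurable[F] b) {C : ℝ} (hbC : ∀ ω, ‖b ω‖ ≤ C) (hf : Integrable f μ) :
    μ[fun ω => c + b ω * f ω | F] =ᵐ[μ] fun ω => c + b ω * μ[f | F] ω := by
  have hadd := condExp_add (integrable_const c)
    (hf.bdd_mul (hb.mono hF).aestronglyMeasurable (ae_of_all μ hbC)) F
  have hmul := condExp_stronglyMeasurable_mul_of_bound hF hb hf C (ae_of_all μ hbC)
  filter_upwards [hadd, hmul] with ω h_add h_mul
  simp only [Pi.add_apply, Pi.mul_apply, condExp_const hF] at h_add h_mul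
  exact h_add.trans (congrArg (c + ·) h_mul)

theorem ae_le_condExpEReal_comp_sub [IsFiniteMeasure μ] (hF : F ≤ mα) {H : ℝ → EReal}
    (hH : Measurable H) {φ : ℝ → ℝ} (hφ : Monotone φ) (hφH : ∀ l, (φ l : EReal) ≤ H l)
    {m : ℝ} (hm : m ≤ 0) (hmφ : ∀ l, m ≤ φ l) {X Y s : α → ℝ} (hX : Measurable X)
    (hY : Measurable Y) (hYX : Y ≤ X) (hs : Measurable[F] s) :
    ∀ᵐ ω ∂μ, ∀ n : ℕ,
      ((m + (φ (s ω - n) - m) * μ[{ω | X ω ≤ n}.indicator 1 | F] ω : ℝ) : EReal) ≤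
        condExpEReal μ F (fun ω => H (s ω - Y ω)) ω := by
  -- `condExpEReal` cuts `H` at levels `K : ℕ`, so the minorant is cut at `K` as well;
  -- `m ≤ 0` keeps it below every such level.
  have hcut : ∀ n K : ℕ, ∀ᵐ ω ∂μ,
      ((m + (min (φ (s ω - n)) K - m) * μ[{ω | X ω ≤ n}.indicator 1 | F] ω : ℝ) : EReal) ≤
        condExpEReal μ F (fun ω => H (s ω - Y ω)) ω := by
    intro n K
    set A : Set α := {ω | X ω ≤ n}
    set b : α → ℝ := fun ω => min (φ (s ω - n)) K - m
    have hb : Measurable[F] b :=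
      ((hφ.measurable.comp (hs.sub_const _)).min measurable_const).sub_const _
    have hb_bound : ∀ ω, ‖b ω‖ ≤ K - m := fun ω => by
      have := hmφ (s ω - n)
      rw [Real.norm_eq_abs, abs_le]
      constructor <;> simp only [b] <;>
        linarith [min_le_right (φ (s ω - n)) K, le_min this (hm.trans (Nat.cast_nonneg K))]
    have hA : MeasurableSet A := measurableSet_le hX measurable_const
    have hind : Integrable (A.indicator 1) μ := (integrable_const (1 : ℝ)).indicator hA
    have hlow : ∀ ω, m + b ω * A.indicator 1 ω ≤ min (φ (s ω - Y ω)) K := fun ω => by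
      by_cases hω : ω ∈ A
      · simpa [Set.indicator_of_mem hω, b] using
          min_le_min_right _ (hφ (sub_le_sub_left ((hYX ω).trans hω) _))
      · simpa [Set.indicator_of_notMem hω] using
          le_min (hmφ _) (hm.trans (Nat.cast_nonneg K))
    filter_upwards [condExp_const_add_mul_ae_eq hF m hb.stronglyMeasurable hb_bound hind,
      coe_condExp_le_condExpEReal (F := F) (f := fun ω => m + b ω * A.indicator 1 ω)
        (g := fun ω => H (s ω - Y ω))
        (hH.comp ((hs.mono hF le_rfl).sub hY))
        ((integrable_const m).add (hind.bdd_mul (hb.mono hF le_rfl).aestronglyMeasurable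
          (ae_of_all μ hb_bound)))
        (fun ω => (hlow ω).trans (min_le_right _ _))
        (fun ω => (EReal.coe_le_coe_iff.2 ((hlow ω).trans (min_le_left _ _))).trans (hφH _))]
      with ω h_eq h_le
    rwa [h_eq] at h_le
  rw [ae_all_iff]
  intro n
  filter_upwards [ae_all_iff.2 (hcut n)] with ω hω
  simpa [min_eq_left (Nat.le_ceil _)] using hω ⌈φ (s ω - n)⌉₊

end

theorem oce_extension_never_plus_infinity_general
    (μ : Measure Ω) [IsProbabilityMeasure μ]
    (F G : MeasurableSpace Ω) (hFG : F ≤ G) (hG : G ≤ m0)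
    (H : ℝ → EReal)
    (hlsc : LowerSemicontinuous H)
    (hlow : ∃ mlow : ℝ, ∀ l, ((mlow : ℝ) : EReal) ≤ H l)
    (hint : ∃ ε : ℝ, 0 < ε ∧ legendre H (1 + ε) ≠ ⊤)
    (X : Ω → ℝ) (hX : Measurable[G] X) :
    ∃ B : Ω → ℝ, Measurable[F] B ∧
      ∀ k : ℕ, ∀ s : Ω → ℝ, Measurable[F] s →
        ∀ᵐ ω ∂μ,
          (s ω : EReal) -
              condExpEReal μ F (fun ω' => H (s ω' - min (X ω') (k : ℝ))) ω ≤
            (B ω : EReal) := by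
  obtain ⟨mlow, hmlow⟩ := hlow
  obtain ⟨ε, hε, hfin⟩ := hint
  have hF : F ≤ m0 := hFG.trans hG
  have hXm : Measurable[m0] X := hX.mono hG le_rfl
  set m := min mlow 0
  set c := (legendre H (1 + ε)).toReal
  set φ : ℝ → ℝ := fun l => max m ((1 + ε) * l - c)
  have hφ : Monotone φ := fun a b hab =>
    max_le_max le_rfl (sub_le_sub_right (mul_le_mul_of_nonneg_left hab (by linarith)) c)
  have hφH : ∀ l, (φ l : EReal) ≤ H l := coe_max_mul_sub_le_of_legendre_ne_top
    (fun l => (EReal.coe_le_coe_iff.2 (min_le_left _ _)).trans (hmlow l)) hfin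
  set p : ℕ → Ω → ℝ := fun n => μ[{ω | X ω ≤ n}.indicator 1 | F]
  have hp : ∀ᵐ ω ∂μ, ∃ n, (1 + ε)⁻¹ ≤ p n ω :=
    ae_exists_le_condExp_indicator hF (fun n => measurableSet_le hXm measurable_const)
      (fun a b hab ω (hω : X ω ≤ a) => hω.trans (Nat.cast_le.2 hab))
      (Set.eq_univ_of_forall fun ω => Set.mem_iUnion.2 ⟨⌈X ω⌉₊, Nat.le_ceil (X ω)⟩)
      (inv_lt_one_of_one_lt₀ (by linarith))
  obtain ⟨N, hN, hNp⟩ := exists_measurable_nat_mem (mα := F)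
    (S := fun n => {ω | (1 + ε)⁻¹ ≤ p n ω})
    (fun n => measurableSet_le measurable_const stronglyMeasurable_condExp.measurable)
  refine ⟨fun ω => N ω + (c + m) / (1 + ε) - m,
    ((measurable_from_top.comp hN).add_const _).sub_const _, fun k s hs => ?_⟩
  have hlower := ae_le_condExpEReal_comp_sub (μ := μ) hF hlsc.measurable hφ hφH
    (min_le_right _ _) (fun _ => le_max_left _ _) hXm
    (Y := fun ω => min (X ω) k) (hXm.min measurable_const) (fun ω => min_le_left _ _) hs
  filter_upwards [hp, hlower] with ω hω hle
  calc (s ω : EReal) - condExpEReal μ F (fun ω' => H (s ω' - min (X ω') (k : ℝ))) ω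
      ≤ (s ω : EReal) - ((m + (φ (s ω - N ω) - m) * p (N ω) ω : ℝ) : EReal) :=
        EReal.sub_le_sub le_rfl (hle (N ω))
    _ ≤ _ := by
        rw [← EReal.coe_sub, EReal.coe_le_coe_iff]
        exact sub_const_add_max_mul_le (by linarith) (hNp ω hω)

/-- Let `H : ℝ → ℝ ∪ {+∞}` be proper convex, lower semicontinuous,
nondecreasing, with `H*(1) = 0`, bounded from below (`0 ∈ dom H*`), and `1 + ε ∈ dom H*`
for some `ε > 0`.  Then for every a.s. finite random variable `X`, the nondecreasing
sequence `(U(X ∧ k))_k` of optimized certainty equivalents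
`U(Y) = esssup_{s ∈ L⁰(ℱ)} { s − E[H(s − Y) | ℱ] }` satisfies `sup_k U(X ∧ k) < ∞` a.s.:
there is a finite `ℱ`-measurable `B` dominating `s − E[H(s − X ∧ k) | ℱ]` a.s. for every
`k ∈ ℕ` and every `s ∈ L⁰(ℱ)`.  Hence the monotone extension of `U` to `L⁰(𝒢)` never
attains the value `+∞`.  (This covers Tail-Value-at-Risk, where `H(l) = λ⁻¹ l₊`.) -/
theorem oce_extension_never_plus_infinity
    (μ : Measure Ω) [IsProbabilityMeasure μ]
    (F G : MeasurableSpace Ω) (hFG : F ≤ G) (hG : G ≤ m0)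
    (H : ℝ → EReal)
    (hproper : ∃ l, H l ≠ ⊤)
    (hlsc : LowerSemicontinuous H) (hmono : Monotone H)
    (hconv : ∀ a b t : ℝ, t ∈ Set.Icc (0 : ℝ) 1 →
      H (t * a + (1 - t) * b) ≤ ((t : ℝ) : EReal) * H a + (((1 - t) : ℝ) : EReal) * H b)
    (hH1 : legendre H 1 = 0)
    (hlow : ∃ mlow : ℝ, ∀ l, ((mlow : ℝ) : EReal) ≤ H l)
    (hint : ∃ ε : ℝ, 0 < ε ∧ legendre H (1 + ε) ≠ ⊤)
    (X : Ω → ℝ) (hX : Measurable[G] X) :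
    ∃ B : Ω → ℝ, Measurable[F] B ∧
      ∀ k : ℕ, ∀ s : Ω → ℝ, Measurable[F] s →
        ∀ᵐ ω ∂μ,
          (s ω : EReal) -
              condExpEReal μ F (fun ω' => H (s ω' - min (X ω') (k : ℝ))) ω ≤
            (B ω : EReal) :=
  oce_extension_never_plus_infinity_general μ F G hFG hG H hlsc hlow hint X hX
end
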